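/- arXiv:2208.00947 — 10 statements merged into one kernel-verified Lean document; each statement's English description precedes it below -/
import Mathlib

section
/- For real parameters α < 3/2 and exponent 1/2, the integral ∫₀^δ ∫₀^δ min(√ω₁, √ω₃) · ω₁^{-α} · ω₃^{-α} · |ω₁ - ω₃| dω₃ dω₁ is finite for every δ > 0. -/
open MeasureTheory Set

/-! Since `min √a √b * |a - b| ≤ √a * b + a * √b`, the integrand is dominated by
`a^(1/2-α) b^(1-α) + a^(1-α) b^(1/2-α)`, a sum of products of one-variable powers. Each power
has exponent `> -1` exactly when `α < 3/2`, so it is integrable near `0`, and so is the sum on the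
product square. -/

theorem min_sqrt_mul_abs_sub_le {a b : ℝ} (ha : 0 ≤ a) (hb : 0 ≤ b) :
    min √a √b * |a - b| ≤ √a * b + a * √b := by
  rcases le_total a b with hab | hab
  · calc min √a √b * |a - b| = √a * (b - a) := by
          rw [min_eq_left (Real.sqrt_le_sqrt hab), abs_sub_comm, abs_of_nonneg (sub_nonneg.2 hab)]
      _ ≤ √a * b + a * √b := by nlinarith [Real.sqrt_nonneg a, Real.sqrt_nonneg b]
  · calc min √a √b * |a - b| = √b * (a - b) := by
          rw [min_eq_right (Real.sqrt_le_sqrt hab), abs_of_nonneg (sub_nonneg.2 hab)]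
      _ ≤ √a * b + a * √b := by nlinarith [Real.sqrt_nonneg a, Real.sqrt_nonneg b]

theorem min_sqrt_mul_rpow_mul_rpow_mul_abs_sub_le (α : ℝ) {a b : ℝ} (ha : 0 < a) (hb : 0 < b) :
    min √a √b * a ^ (-α) * b ^ (-α) * |a - b|
      ≤ a ^ (1/2 - α) * b ^ (1 - α) + a ^ (1 - α) * b ^ (1/2 - α) := by
  have hsplit : ∀ {x : ℝ}, 0 < x →
      x ^ (1/2 - α) = √x * x ^ (-α) ∧ x ^ (1 - α) = x * x ^ (-α) := fun hx => by
    rw [sub_eq_add_neg, sub_eq_add_neg, Real.rpow_add hx, Real.rpow_add hx, Real.rpow_one,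
      Real.sqrt_eq_rpow]
    exact ⟨rfl, rfl⟩
  rw [(hsplit ha).1, (hsplit ha).2, (hsplit hb).1, (hsplit hb).2]
  calc min √a √b * a ^ (-α) * b ^ (-α) * |a - b|
      = a ^ (-α) * b ^ (-α) * (min √a √b * |a - b|) := by ring
    _ ≤ a ^ (-α) * b ^ (-α) * (√a * b + a * √b) :=
        mul_le_mul_of_nonneg_left (min_sqrt_mul_abs_sub_le ha.le hb.le) (by positivity)
    _ = _ := by ring

theorem integrableOn_rpow_mul_rpow_Ioo_prod {s t δ ε : ℝ} (hs : -1 < s) (ht : -1 < t)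
    (hδ : 0 < δ) (hε : 0 < ε) :
    IntegrableOn (fun p : ℝ × ℝ => p.1 ^ s * p.2 ^ t) (Ioo 0 δ ×ˢ Ioo 0 ε) := by
  have h := ((intervalIntegral.integrableOn_Ioo_rpow_iff hδ).2 hs).mul_prod
    ((intervalIntegral.integrableOn_Ioo_rpow_iff hε).2 ht)
  rwa [Measure.prod_restrict, ← Measure.volume_eq_prod] at h

/-- For α < 3/2, the integral ∫₀^δ ∫₀^δ min(√ω₁,√ω₃) ω₁^{-α} ω₃^{-α} |ω₁-ω₃| dω₃ dω₁
is finite for every δ > 0. -/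
theorem stmt_0 (α δ : ℝ) (hα : α < 3/2) (hδ : 0 < δ) :
    IntegrableOn
      (fun p : ℝ × ℝ =>
        min (Real.sqrt p.1) (Real.sqrt p.2) * p.1 ^ (-α) * p.2 ^ (-α) * |p.1 - p.2|)
      (Ioo (0:ℝ) δ ×ˢ Ioo (0:ℝ) δ) := by
  have hhalf : -1 < 1/2 - α := by linarith
  have hone : -1 < 1 - α := by linarith
  have hdom := (integrableOn_rpow_mul_rpow_Ioo_prod hhalf hone hδ hδ).add
    (integrableOn_rpow_mul_rpow_Ioo_prod hone hhalf hδ hδ)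
  refine hdom.mono' (by fun_prop : Measurable _).aestronglyMeasurable ?_
  filter_upwards [ae_restrict_mem (measurableSet_Ioo.prod measurableSet_Ioo)]
    with p ⟨⟨hp₁, _⟩, hp₂, _⟩
  rw [Real.norm_of_nonneg (by positivity)]
  exact min_sqrt_mul_rpow_mul_rpow_mul_abs_sub_le α hp₁ hp₂
end

section
/- Let α be a real number and consider on the region Δ₂ = {(ω₃,ω₄) : ω₃ ≥ ω₁, 0 ≤ ω₄ ≤ ω₁} the change of variables (ω₃', ω₄') = (ω₁/ω₃)·(ω₁, ω₃+ω₄−ω₁). Then the Jacobian determinant of (ω₃,ω₄) ↦ (ω₃',ω₄') equals −ω₃'³/ω₁³, the image region is Δ₁ = {(ω₃,ω₄) : ω₃+ω₄ ≥ ω₁, 0 ≤ ω₃ ≤ ω₁, 0 ≤ ω₄ ≤ ω₁}, and the new variables satisfy ω₁ + ω₂' = ω₃' + ω₄' where ω₂' = (ω₁/ω₃)·ω₄. -/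
/-!
The map is its own inverse wherever `p.1 ≠ 0`, so its image of Δ₂ is computed by checking that it
sends Δ₂ into Δ₁ ∩ {ω₃ > 0} and back. With `c = ω₁ / ω₃` both inclusions are linear inequalities
in `c` (`0 < c ≤ 1` on Δ₂, `c ≥ 1` on Δ₁). The Jacobian matrix is triangular with diagonal
`-c²` and `c`, whence the determinant `-c³ = -ω₃'³ / ω₁³`.
-/

open Set

theorem ContinuousLinearMap.det_prod_eq {R : Type*} [CommRing R] [TopologicalSpace R]
    (L : R × R →L[R] R × R) :
    L.det = (L (1, 0)).1 * (L (0, 1)).2 - (L (0, 1)).1 * (L (1, 0)).2 := by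
  rw [ContinuousLinearMap.det, ← LinearMap.det_toMatrix (Module.Basis.finTwoProd R),
    Matrix.det_fin_two]
  simp [LinearMap.toMatrix_apply, Module.Basis.finTwoProd]

noncomputable def zakharov (w : ℝ) (p : ℝ × ℝ) : ℝ × ℝ :=
  (w / p.1 * w, w / p.1 * (p.1 + p.2 - w))

theorem zakharov_zakharov {w : ℝ} (hw : w ≠ 0) {p : ℝ × ℝ} (hp : p.1 ≠ 0) :
    zakharov w (zakharov w p) = p := by
  ext <;> simp only [zakharov] <;> field_simp; ring

theorem zakharov_fst_add_snd (w : ℝ) {p : ℝ × ℝ} (hp : p.1 ≠ 0) :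
    (zakharov w p).1 + (zakharov w p).2 = w + w / p.1 * p.2 := by
  simp only [zakharov]; field_simp; ring

theorem det_fderiv_zakharov {w : ℝ} (hw : w ≠ 0) {p : ℝ × ℝ} (hp : p.1 ≠ 0) :
    (fderiv ℝ (zakharov w) p).det = -(zakharov w p).1 ^ 3 / w ^ 3 := by
  have hinv : HasFDerivAt (fun q : ℝ × ℝ => w / q.1)
      ((w * -(p.1 ^ 2)⁻¹) • ContinuousLinearMap.fst ℝ ℝ ℝ) p := by
    simpa only [Function.comp_def, ← div_eq_mul_inv] using
      ((hasDerivAt_inv hp).const_mul w).comp_hasFDerivAt p (hasFDerivAt_fst (𝕜 := ℝ) (p := p))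
  have hsum : HasFDerivAt (fun q : ℝ × ℝ => q.1 + q.2 - w)
      (ContinuousLinearMap.fst ℝ ℝ ℝ + ContinuousLinearMap.snd ℝ ℝ ℝ) p :=
    (hasFDerivAt_fst.add hasFDerivAt_snd).sub_const w
  have hT : HasFDerivAt (zakharov w) _ p := (hinv.mul_const w).prodMk (hinv.mul hsum)
  rw [hT.fderiv, ContinuousLinearMap.det_prod_eq]
  simp only [mul_neg, smul_add, ContinuousLinearMap.prod_apply, smul_apply,
    ContinuousLinearMap.coe_fst', smul_eq_mul, mul_one, add_apply, ContinuousLinearMap.coe_snd',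
    mul_zero, add_zero, zero_add, neg_mul, zero_mul, sub_zero, zakharov]
  field_simp

def collisionRegion₁ (w : ℝ) : Set (ℝ × ℝ) :=
  {p | w ≤ p.1 + p.2 ∧ 0 ≤ p.1 ∧ p.1 ≤ w ∧ 0 ≤ p.2 ∧ p.2 ≤ w}

def collisionRegion₂ (w : ℝ) : Set (ℝ × ℝ) :=
  {p | w ≤ p.1 ∧ 0 ≤ p.2 ∧ p.2 ≤ w}

theorem mapsTo_zakharov_collisionRegion₂ {w : ℝ} (hw : 0 < w) :
    MapsTo (zakharov w) (collisionRegion₂ w) (collisionRegion₁ w ∩ {p | 0 < p.1}) := by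
  rintro ⟨x, y⟩ ⟨hx, hy₀, hy⟩
  have hx₀ : 0 < x := hw.trans_le hx
  have hc : w / x * x = w := div_mul_cancel₀ w hx₀.ne'
  have hc₀ : 0 < w / x := div_pos hw hx₀
  have hc₁ : w / x ≤ 1 := div_le_one_of_le₀ hx hx₀.le
  simp only [zakharov, collisionRegion₁, mem_inter_iff, mem_ofPred_eq]
  refine ⟨⟨?_, ?_, ?_, ?_, ?_⟩, ?_⟩ <;> nlinarith

theorem mapsTo_zakharov_collisionRegion₁ {w : ℝ} (hw : 0 < w) :
    MapsTo (zakharov w) (collisionRegion₁ w ∩ {p | 0 < p.1}) (collisionRegion₂ w) := by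
  rintro ⟨a, b⟩ ⟨⟨hab, -, ha, hb₀, hb⟩, ha₀ : 0 < a⟩
  have hc : w / a * a = w := div_mul_cancel₀ w ha₀.ne'
  have hc₁ : 1 ≤ w / a := (one_le_div₀ ha₀).2 ha
  simp only [zakharov, collisionRegion₂, mem_ofPred_eq]
  refine ⟨?_, ?_, ?_⟩ <;> nlinarith

theorem image_zakharov_collisionRegion₂ {w : ℝ} (hw : 0 < w) :
    zakharov w '' collisionRegion₂ w = collisionRegion₁ w ∩ {p | 0 < p.1} := by
  have hinv : InvOn (zakharov w) (zakharov w)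
      (collisionRegion₂ w) (collisionRegion₁ w ∩ {p | 0 < p.1}) :=
    ⟨fun p hp => zakharov_zakharov hw.ne' (hw.trans_le hp.1).ne',
      fun p hp => zakharov_zakharov hw.ne' hp.2.ne'⟩
  exact (hinv.bijOn (mapsTo_zakharov_collisionRegion₂ hw)
    (mapsTo_zakharov_collisionRegion₁ hw)).image_eq

/-- The Zakharov conformal change of variables mapping Δ₂ onto Δ₁:
Jacobian determinant, image region, and conservation of momentum. -/
theorem stmt_3 (ω₁ : ℝ) (hω₁ : 0 < ω₁)
    (T : ℝ × ℝ → ℝ × ℝ)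
    (hT : T = fun p => ((ω₁ / p.1) * ω₁, (ω₁ / p.1) * (p.1 + p.2 - ω₁)))
    (Δ₂ : Set (ℝ × ℝ)) (hΔ₂ : Δ₂ = {p | ω₁ ≤ p.1 ∧ 0 ≤ p.2 ∧ p.2 ≤ ω₁})
    (Δ₁ : Set (ℝ × ℝ))
    (hΔ₁ : Δ₁ = {p | ω₁ ≤ p.1 + p.2 ∧ 0 ≤ p.1 ∧ p.1 ≤ ω₁ ∧ 0 ≤ p.2 ∧ p.2 ≤ ω₁}) :
    (∀ p ∈ Δ₂, ContinuousLinearMap.det (fderiv ℝ T p) = -((T p).1) ^ 3 / ω₁ ^ 3) ∧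
    T '' Δ₂ = Δ₁ ∩ {p | 0 < p.1} ∧
    (∀ p ∈ Δ₂, ω₁ + (ω₁ / p.1) * p.2 = (T p).1 + (T p).2) := by
  obtain rfl : T = zakharov ω₁ := hT
  obtain rfl : Δ₂ = collisionRegion₂ ω₁ := hΔ₂
  obtain rfl : Δ₁ = collisionRegion₁ ω₁ := hΔ₁
  have hp₁ : ∀ p ∈ collisionRegion₂ ω₁, p.1 ≠ 0 := fun p hp => (hω₁.trans_le hp.1).ne'
  exact ⟨fun p hp => det_fderiv_zakharov hω₁.ne' (hp₁ p hp),
    image_zakharov_collisionRegion₂ hω₁,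
    fun p hp => (zakharov_fst_add_snd ω₁ (hp₁ p hp)).symm⟩
end

section
/- Let α ∈ ℝ and suppose the combined Zakharov factor 1 + (ω₁/ω₂)^{3α+7/2} − (ω₁/ω₃)^{3α+7/2} − (ω₁/ω₄)^{3α+7/2} multiplies the collision integrand on Δ₁. Then for α = −7/6 (exponent 3α+7/2 = 0) and for α = −3/2 (exponent 3α+7/2 = −1, using ω₁+ω₂ = ω₃+ω₄), the product of this factor with (ω₁^{-α} + ω₂^{-α} − ω₃^{-α} − ω₄^{-α}) vanishes identically on the constraint set ω₁+ω₂ = ω₃+ω₄, ω_i > 0. -/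
/-!
The Zakharov factor alone vanishes at both exponents. At exponent `0` every ratio power is `1`,
so the factor is `1 + 1 - 1 - 1`. At exponent `-1` the ratio powers invert to `ωᵢ / ω₁`, and the
factor becomes `(ω₁ + ω₂ - ω₃ - ω₄) / ω₁`, which is zero by conservation of frequency.
-/

noncomputable def zakharovFactor (s ω₁ ω₂ ω₃ ω₄ : ℝ) : ℝ :=
  1 + (ω₁ / ω₂) ^ s - (ω₁ / ω₃) ^ s - (ω₁ / ω₄) ^ s

theorem zakharovFactor_zero (ω₁ ω₂ ω₃ ω₄ : ℝ) : zakharovFactor 0 ω₁ ω₂ ω₃ ω₄ = 0 := by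
  simp [zakharovFactor]

theorem zakharovFactor_neg_one {ω₁ : ℝ} (h₁ : ω₁ ≠ 0) (ω₂ ω₃ ω₄ : ℝ) :
    zakharovFactor (-1) ω₁ ω₂ ω₃ ω₄ = (ω₁ + ω₂ - ω₃ - ω₄) / ω₁ := by
  simp only [zakharovFactor, Real.rpow_neg_one, inv_div]
  field_simp

theorem zakharovFactor_neg_one_eq_zero {ω₁ ω₂ ω₃ ω₄ : ℝ} (h₁ : ω₁ ≠ 0)
    (hsum : ω₁ + ω₂ = ω₃ + ω₄) : zakharovFactor (-1) ω₁ ω₂ ω₃ ω₄ = 0 := by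
  rw [zakharovFactor_neg_one h₁, show ω₁ + ω₂ - ω₃ - ω₄ = 0 by linarith, zero_div]

/-- For α = −7/6 (exponent 3α+7/2 = 0) and α = −3/2 (exponent 3α+7/2 = −1), the product of
the combined Zakharov factor with (ω₁^{-α}+ω₂^{-α}−ω₃^{-α}−ω₄^{-α}) vanishes identically on
the constraint set ω₁+ω₂ = ω₃+ω₄, ωᵢ > 0. -/
theorem stmt_5 (α : ℝ) (hα : α = -7/6 ∨ α = -3/2) :
    ∀ ω₁ ω₂ ω₃ ω₄ : ℝ, 0 < ω₁ → 0 < ω₂ → 0 < ω₃ → 0 < ω₄ → ω₁ + ω₂ = ω₃ + ω₄ →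
      (1 + (ω₁ / ω₂) ^ (3 * α + 7/2) - (ω₁ / ω₃) ^ (3 * α + 7/2)
          - (ω₁ / ω₄) ^ (3 * α + 7/2)) *
        (ω₁ ^ (-α) + ω₂ ^ (-α) - ω₃ ^ (-α) - ω₄ ^ (-α)) = 0 := by
  intro ω₁ ω₂ ω₃ ω₄ h₁ _ _ _ hsum
  suffices zakharovFactor (3 * α + 7/2) ω₁ ω₂ ω₃ ω₄ = 0 by
    rw [← zakharovFactor, this, zero_mul]
  rcases hα with rfl | rfl
  · rw [show 3 * (-7/6 : ℝ) + 7/2 = 0 by norm_num]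
    exact zakharovFactor_zero ω₁ ω₂ ω₃ ω₄
  · rw [show 3 * (-3/2 : ℝ) + 7/2 = -1 by norm_num]
    exact zakharovFactor_neg_one_eq_zero h₁.ne' hsum
end

section
/- For a smooth compactly supported f : (0,∞) → ℝ, symmetrization of the collision integral yields ∫ √ω₁ 𝒞(f)(ω₁) φ(ω₁) dω₁ = (1/2) ∭ √ω₁ W f₁ f₂ (f₃+f₄)(φ₃+φ₄−φ₁−φ₂) dω₁ dω₃ dω₄, for any smooth compactly supported test function φ, where ω₂ = ω₃+ω₄−ω₁ and the integral is over {ω₁,ω₂,ω₃,ω₄ > 0}. -/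
open MeasureTheory Set

noncomputable def m4 (a b c d : ℝ) : ℝ :=
  min (min (Real.sqrt a) (Real.sqrt b)) (min (Real.sqrt c) (Real.sqrt d))

lemma m4_nonneg (a b c d : ℝ) : 0 ≤ m4 a b c d := by
  simp only [m4, le_min_iff]
  exact ⟨⟨Real.sqrt_nonneg a, Real.sqrt_nonneg b⟩, Real.sqrt_nonneg c, Real.sqrt_nonneg d⟩

lemma m4_pos_of_ne (a b c d : ℝ) (h : m4 a b c d ≠ 0) : 0 < a ∧ 0 < b ∧ 0 < c ∧ 0 < d := by
  have hpos : 0 < m4 a b c d := lt_of_le_of_ne (m4_nonneg a b c d) (Ne.symm h)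
  have h1 : m4 a b c d ≤ Real.sqrt a := (min_le_left _ _).trans (min_le_left _ _)
  have h2 : m4 a b c d ≤ Real.sqrt b := (min_le_left _ _).trans (min_le_right _ _)
  have h3 : m4 a b c d ≤ Real.sqrt c := (min_le_right _ _).trans (min_le_left _ _)
  have h4 : m4 a b c d ≤ Real.sqrt d := (min_le_right _ _).trans (min_le_right _ _)
  exact ⟨Real.sqrt_pos.mp (hpos.trans_le h1), Real.sqrt_pos.mp (hpos.trans_le h2),
    Real.sqrt_pos.mp (hpos.trans_le h3), Real.sqrt_pos.mp (hpos.trans_le h4)⟩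

lemma m4_zero_of_nonpos₁ (a b c d : ℝ) (ha : a ≤ 0) : m4 a b c d = 0 := by
  by_contra h; exact absurd ((m4_pos_of_ne a b c d h).1) (not_lt.mpr ha)

lemma m4_comm₁₂ (a b c d : ℝ) : m4 b a c d = m4 a b c d := by rw [m4, m4, min_comm (Real.sqrt b)]

lemma m4_comm₃₄ (a b c d : ℝ) : m4 a b d c = m4 a b c d := by
  rw [m4, m4, min_comm (Real.sqrt d)]

lemma m4_swap (a b c d : ℝ) : m4 c d a b = m4 a b c d := by rw [m4, m4, min_comm]

lemma continuous_m4 : Continuous (fun q : ℝ × ℝ × ℝ => m4 q.1 (q.2.1 + q.2.2 - q.1) q.2.1 q.2.2) := by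
  unfold m4; fun_prop

/-- 1D reflection invariance. -/
lemma integral_comp_sub (h : ℝ → ℝ) (s : ℝ) : ∫ x : ℝ, h (s - x) = ∫ x : ℝ, h x := by
  have : (fun x : ℝ => h (s - x)) = fun x : ℝ => (fun y : ℝ => h (s + y)) (-x) := by
    funext x; simp [sub_eq_add_neg]
  rw [this]
  rw [integral_neg_eq_self (fun y : ℝ => h (s + y)) volume]
  exact integral_add_left_eq_self _ s

/-- 1D translation invariance. -/
lemma integral_comp_shift (h : ℝ → ℝ) (s : ℝ) : ∫ x : ℝ, h (s + x) = ∫ x : ℝ, h x :=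
  integral_add_left_eq_self h s

/-- swap the last two coordinates -/
def T2e : (ℝ × ℝ × ℝ) ≃ᵐ (ℝ × ℝ × ℝ) :=
  (MeasurableEquiv.refl ℝ).prodCongr (MeasurableEquiv.prodComm : (ℝ × ℝ) ≃ᵐ (ℝ × ℝ))

lemma T2e_apply (q : ℝ × ℝ × ℝ) : T2e q = (q.1, q.2.2, q.2.1) := by obtain ⟨a, c, d⟩ := q; rfl

lemma T2e_mp : MeasurePreserving T2e (volume : Measure (ℝ × ℝ × ℝ)) volume := by
  have : MeasurePreserving (Prod.map (id : ℝ → ℝ) (Prod.swap : ℝ × ℝ → ℝ × ℝ))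
      ((volume : Measure ℝ).prod ((volume : Measure ℝ).prod volume))
      ((volume : Measure ℝ).prod ((volume : Measure ℝ).prod volume)) :=
    (MeasurePreserving.id volume).prod Measure.measurePreserving_swap
  exact this

lemma integral_T2 (F : ℝ × ℝ × ℝ → ℝ) : ∫ q : ℝ × ℝ × ℝ, F (q.1, q.2.2, q.2.1) = ∫ q, F q := by
  have := T2e_mp.integral_comp T2e.measurableEmbedding F
  simp only [T2e_apply] at this
  exact this

/-- cyclic-ish permutation (a,c,d) ↦ (c,a,d) -/
def Pe : (ℝ × ℝ × ℝ) ≃ᵐ (ℝ × ℝ × ℝ) :=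
  (MeasurableEquiv.prodAssoc.symm.trans
    (((MeasurableEquiv.prodComm : (ℝ × ℝ) ≃ᵐ (ℝ × ℝ)).prodCongr (MeasurableEquiv.refl ℝ)).trans
      MeasurableEquiv.prodAssoc))

lemma Pe_apply (q : ℝ × ℝ × ℝ) : Pe q = (q.2.1, q.1, q.2.2) := by obtain ⟨a, c, d⟩ := q; rfl

lemma Pe_mp : MeasurePreserving Pe (volume : Measure (ℝ × ℝ × ℝ)) volume := by
  have h1 : MeasurePreserving (MeasurableEquiv.prodAssoc.symm :
      (ℝ × ℝ × ℝ) ≃ᵐ ((ℝ × ℝ) × ℝ))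
      (((volume : Measure ℝ).prod ((volume : Measure ℝ).prod volume)))
      ((((volume : Measure ℝ).prod volume)).prod volume) :=
    (measurePreserving_prodAssoc volume volume volume).symm _
  have h2 : MeasurePreserving (Prod.map (Prod.swap : ℝ × ℝ → ℝ × ℝ) (id : ℝ → ℝ))
      ((((volume : Measure ℝ).prod volume)).prod volume)
      ((((volume : Measure ℝ).prod volume)).prod volume) :=
    Measure.measurePreserving_swap.prod (MeasurePreserving.id volume)
  have h3 : MeasurePreserving (MeasurableEquiv.prodAssoc :
      ((ℝ × ℝ) × ℝ) ≃ᵐ (ℝ × ℝ × ℝ))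
      ((((volume : Measure ℝ).prod volume)).prod volume)
      (((volume : Measure ℝ).prod ((volume : Measure ℝ).prod volume))) :=
    measurePreserving_prodAssoc volume volume volume
  have hfun : (⇑Pe : ℝ × ℝ × ℝ → ℝ × ℝ × ℝ) =
      (⇑(MeasurableEquiv.prodAssoc : ((ℝ × ℝ) × ℝ) ≃ᵐ (ℝ × ℝ × ℝ)) ∘ Prod.map Prod.swap id) ∘
        ⇑(MeasurableEquiv.prodAssoc.symm : (ℝ × ℝ × ℝ) ≃ᵐ ((ℝ × ℝ) × ℝ)) := by
    funext q; obtain ⟨a, c, d⟩ := q; rfl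
  rw [show (volume : Measure (ℝ × ℝ × ℝ)) = ((volume : Measure ℝ).prod ((volume : Measure ℝ).prod volume)) from rfl, hfun]
  exact (h3.comp h2).comp h1

lemma integral_Pe (F : ℝ × ℝ × ℝ → ℝ) : ∫ q : ℝ × ℝ × ℝ, F (q.2.1, q.1, q.2.2) = ∫ q, F q := by
  have := Pe_mp.integral_comp Pe.measurableEmbedding F
  simp only [Pe_apply] at this
  exact this

lemma integrable_Pe (F : ℝ × ℝ × ℝ → ℝ) (hF : Integrable F) :
    Integrable (fun q : ℝ × ℝ × ℝ => F (q.2.1, q.1, q.2.2)) := by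
  have := (Pe_mp.integrable_comp_emb Pe.measurableEmbedding).mpr hF
  have heq : (F ∘ ⇑Pe) = fun q : ℝ × ℝ × ℝ => F (q.2.1, q.1, q.2.2) := by
    funext q; simp [Function.comp, Pe_apply]
  rwa [heq] at this

lemma integral_T3 (F : ℝ × ℝ × ℝ → ℝ) (hF : Integrable F)
    (hG : Integrable (fun q : ℝ × ℝ × ℝ => F (q.2.1 + q.2.2 - q.1, q.2.1, q.2.2))) :
    ∫ q : ℝ × ℝ × ℝ, F (q.2.1 + q.2.2 - q.1, q.2.1, q.2.2) = ∫ q, F q := by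
  have h1 := integral_prod_symm (fun q : ℝ × ℝ × ℝ => F (q.2.1 + q.2.2 - q.1, q.2.1, q.2.2)) hG
  have h2 := integral_prod_symm F hF
  rw [show ((volume : Measure ℝ).prod (volume : Measure (ℝ × ℝ))) = (volume : Measure (ℝ × ℝ × ℝ)) from rfl] at h1 h2
  rw [h1, h2]
  refine integral_congr_ae (Filter.Eventually.of_forall fun p => ?_)
  exact integral_comp_sub (fun y : ℝ => F (y, p.1, p.2)) (p.1 + p.2)

lemma integral_T1 (F : ℝ × ℝ × ℝ → ℝ) (hF : Integrable F)
    (hG : Integrable (fun q : ℝ × ℝ × ℝ => F (q.2.1, q.1, q.2.1 + q.2.2 - q.1))) :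
    ∫ q : ℝ × ℝ × ℝ, F (q.2.1, q.1, q.2.1 + q.2.2 - q.1) = ∫ q, F q := by
  set G : ℝ × ℝ × ℝ → ℝ := fun q => F (q.2.1, q.1, q.2.1 + q.2.2 - q.1) with hGdef
  set FP : ℝ × ℝ × ℝ → ℝ := fun q => F (q.2.1, q.1, q.2.2) with hFPdef
  have hFP : Integrable FP := integrable_Pe F hF
  have e1 : ∫ q : ℝ × ℝ × ℝ, G q = ∫ x : ℝ, ∫ p : ℝ × ℝ, G (x, p) := integral_prod G hG
  have e4 : ∫ q : ℝ × ℝ × ℝ, FP q = ∫ x : ℝ, ∫ p : ℝ × ℝ, FP (x, p) := integral_prod FP hFP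
  have e2 : ∫ x : ℝ, ∫ p : ℝ × ℝ, G (x, p) = ∫ x : ℝ, ∫ p : ℝ × ℝ, FP (x, p) := by
    refine integral_congr_ae ?_
    filter_upwards [hG.prod_right_ae, hFP.prod_right_ae] with x h1 h2
    have i1 : ∫ p : ℝ × ℝ, G (x, p) = ∫ c : ℝ, ∫ d : ℝ, G (x, c, d) := integral_prod _ h1
    have i2 : ∫ p : ℝ × ℝ, FP (x, p) = ∫ c : ℝ, ∫ d : ℝ, FP (x, c, d) := integral_prod _ h2
    rw [i1, i2]
    refine integral_congr_ae (Filter.Eventually.of_forall fun c => ?_)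
    have h3 : (fun d : ℝ => G (x, c, d)) = fun d : ℝ => F (c, x, (c - x) + d) := by
      funext d
      have : c + d - x = (c - x) + d := by ring
      simp only [hGdef, this]
    show (∫ d : ℝ, G (x, c, d)) = ∫ d : ℝ, FP (x, c, d)
    rw [show (∫ d : ℝ, G (x, c, d)) = ∫ d : ℝ, F (c, x, (c - x) + d) from by rw [h3]]
    exact integral_comp_shift (fun z : ℝ => F (c, x, z)) (c - x)
  rw [e1, e2, ← e4, hFPdef]
  exact integral_Pe F

lemma sqrt_cancel (s x B C : ℝ) (hs : s ≠ 0) : s * (x / s * B) * C = x * B * C := by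
  field_simp

lemma integrable_of_bound (u : ℝ × ℝ × ℝ → ℝ) (hu : Continuous u) (R : ℝ)
    (h : ∀ q : ℝ × ℝ × ℝ, u q ≠ 0 →
      q.1 ∈ Icc (-R) R ∧ q.2.1 ∈ Icc (-R) R ∧ q.2.2 ∈ Icc (-R) R) : Integrable u := by
  apply hu.integrable_of_hasCompactSupport
  refine HasCompactSupport.intro (K := Icc (-R) R ×ˢ (Icc (-R) R ×ˢ Icc (-R) R))
    (isCompact_Icc.prod (isCompact_Icc.prod isCompact_Icc)) ?_
  intro q hq
  by_contra h'
  exact hq ⟨(h q h').1, (h q h').2.1, (h q h').2.2⟩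

/-- The interaction weight W = min(√ω₁,√ω₂,√ω₃,√ω₄)/√ω₁. -/
noncomputable def W (a b c d : ℝ) : ℝ :=
  min (min (Real.sqrt a) (Real.sqrt b)) (min (Real.sqrt c) (Real.sqrt d)) / Real.sqrt a

/-- The integrand of the isotropic 4-wave collision operator, in the variables
(ω₃,ω₄) = p, with ω₂ = ω₃ + ω₄ - ω₁. -/
noncomputable def collisionIntegrand (f : ℝ → ℝ) (ω₁ : ℝ) (p : ℝ × ℝ) : ℝ :=
  W ω₁ (p.1 + p.2 - ω₁) p.1 p.2 *
    ((f ω₁ + f (p.1 + p.2 - ω₁)) * f p.1 * f p.2 -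
      (f p.1 + f p.2) * f ω₁ * f (p.1 + p.2 - ω₁))

/-- The integration domain {ω₂, ω₃, ω₄ ≥ 0}. -/
def collisionDomain (ω₁ : ℝ) : Set (ℝ × ℝ) :=
  {p | 0 ≤ p.1 ∧ 0 ≤ p.2 ∧ 0 ≤ p.1 + p.2 - ω₁}

/-- The isotropic 4-wave collision operator. -/
noncomputable def collisionOp (f : ℝ → ℝ) (ω₁ : ℝ) : ℝ :=
  ∫ p in collisionDomain ω₁, collisionIntegrand f ω₁ p

/-- Weak formulation: symmetrization of the collision integral, for smooth compactly
supported f and test function φ (supported in (0,∞)); the triple integral is over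
{ω₁,ω₂,ω₃,ω₄ > 0} with ω₂ = ω₃+ω₄−ω₁ and q = (ω₁,ω₃,ω₄). -/
theorem stmt_6 (f φ : ℝ → ℝ)
    (hf : ContDiff ℝ (⊤ : ℕ∞) f) (hfc : HasCompactSupport f)
    (hfs : Function.support f ⊆ Ioi 0)
    (hφ : ContDiff ℝ (⊤ : ℕ∞) φ) (hφc : HasCompactSupport φ)
    (hφs : Function.support φ ⊆ Ioi 0) :
    (∫ ω₁ in Ioi (0:ℝ), Real.sqrt ω₁ * collisionOp f ω₁ * φ ω₁)
      = (1/2) *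
        ∫ q in {q : ℝ × ℝ × ℝ |
            0 < q.1 ∧ 0 < q.2.1 ∧ 0 < q.2.2 ∧ 0 < q.2.1 + q.2.2 - q.1},
          Real.sqrt q.1 * W q.1 (q.2.1 + q.2.2 - q.1) q.2.1 q.2.2 *
            f q.1 * f (q.2.1 + q.2.2 - q.1) * (f q.2.1 + f q.2.2) *
            (φ q.2.1 + φ q.2.2 - φ q.1 - φ (q.2.1 + q.2.2 - q.1)) := by
  have hfC : Continuous f := hf.continuous
  have hφC : Continuous φ := hφ.continuous
  -- bound on the supports
  obtain ⟨R, hR0, hRf, hRφ⟩ : ∃ R : ℝ, 0 ≤ R ∧ (∀ x, f x ≠ 0 → x ≤ R) ∧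
      (∀ x, φ x ≠ 0 → x ≤ R) := by
    obtain ⟨r1, h1⟩ := hfc.isBounded.subset_closedBall 0
    obtain ⟨r2, h2⟩ := hφc.isBounded.subset_closedBall 0
    refine ⟨max 0 (max r1 r2), le_max_left _ _, fun x hx => ?_, fun x hx => ?_⟩
    · have := h1 (subset_tsupport f hx)
      rw [Metric.mem_closedBall, Real.dist_eq, sub_zero] at this
      exact (le_abs_self x).trans (this.trans ((le_max_left r1 r2).trans (le_max_right _ _)))
    · have := h2 (subset_tsupport φ hx)
      rw [Metric.mem_closedBall, Real.dist_eq, sub_zero] at this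
      exact (le_abs_self x).trans (this.trans ((le_max_right r1 r2).trans (le_max_right _ _)))
  have hfneg : ∀ x : ℝ, x ≤ 0 → f x = 0 := by
    intro x hx; by_contra h; exact absurd (hfs h) (by simpa using hx)
  have hφneg : ∀ x : ℝ, x ≤ 0 → φ x = 0 := by
    intro x hx; by_contra h; exact absurd (hφs h) (by simpa using hx)
  -- the symmetric kernel and the symmetrized integrands
  set M : ℝ × ℝ × ℝ → ℝ := fun q => m4 q.1 (q.2.1 + q.2.2 - q.1) q.2.1 q.2.2 with hM
  set Q : ℝ × ℝ × ℝ → ℝ := fun q =>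
    (f q.1 + f (q.2.1 + q.2.2 - q.1)) * f q.2.1 * f q.2.2 -
      (f q.2.1 + f q.2.2) * f q.1 * f (q.2.1 + q.2.2 - q.1) with hQ
  set h₁ : ℝ × ℝ × ℝ → ℝ := fun q => M q * Q q * φ q.1 with hh₁
  set h₂ : ℝ × ℝ × ℝ → ℝ := fun q => M q * Q q * φ (q.2.1 + q.2.2 - q.1) with hh₂
  set h₃ : ℝ × ℝ × ℝ → ℝ := fun q => M q * Q q * φ q.2.1 with hh₃
  set h₄ : ℝ × ℝ × ℝ → ℝ := fun q => M q * Q q * φ q.2.2 with hh₄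
  set rr : ℝ × ℝ × ℝ → ℝ := fun q =>
    M q * f q.1 * f (q.2.1 + q.2.2 - q.1) * (f q.2.1 + f q.2.2) *
      (φ q.2.1 + φ q.2.2 - φ q.1 - φ (q.2.1 + q.2.2 - q.1)) with hrr
  set rr' : ℝ × ℝ × ℝ → ℝ := fun q =>
    M q * f q.2.1 * f q.2.2 * (f q.1 + f (q.2.1 + q.2.2 - q.1)) *
      (φ q.2.1 + φ q.2.2 - φ q.1 - φ (q.2.1 + q.2.2 - q.1)) with hrr'
  -- vanishing of the kernel off the positivity region
  have m4zero : ∀ a c d : ℝ, (a ≤ 0 ∨ c ≤ 0 ∨ d ≤ 0 ∨ c + d - a ≤ 0) →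
      m4 a (c + d - a) c d = 0 := by
    intro a c d h; by_contra hm
    obtain ⟨ha, hb, hc, hd⟩ := m4_pos_of_ne _ _ _ _ hm
    rcases h with h | h | h | h <;> linarith
  -- support bound
  have key : ∀ q : ℝ × ℝ × ℝ, M q ≠ 0 →
      (f q.2.1 * f q.2.2 ≠ 0 ∨ f q.1 * f (q.2.1 + q.2.2 - q.1) ≠ 0) →
      q.1 ∈ Icc (-(2*R)) (2*R) ∧ q.2.1 ∈ Icc (-(2*R)) (2*R) ∧ q.2.2 ∈ Icc (-(2*R)) (2*R) := by
    rintro ⟨a, c, d⟩ hm hne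
    obtain ⟨ha, hb, hc, hd⟩ := m4_pos_of_ne _ _ _ _ hm
    simp only at ha hb hc hd ⊢
    rcases hne with h | h
    · have h1 : f c ≠ 0 := fun h' => h (by simp [h'])
      have h2 : f d ≠ 0 := fun h' => h (by simp [h'])
      have := hRf c h1; have := hRf d h2
      refine ⟨⟨by linarith, by linarith⟩, ⟨by linarith, by linarith⟩, by linarith, by linarith⟩
    · have h1 : f a ≠ 0 := fun h' => h (by simp [h'])
      have h2 : f (c + d - a) ≠ 0 := fun h' => h (by simp [h'])
      have := hRf a h1; have := hRf _ h2
      refine ⟨⟨by linarith, by linarith⟩, ⟨by linarith, by linarith⟩, by linarith, by linarith⟩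
  have Qsplit : ∀ q : ℝ × ℝ × ℝ, Q q ≠ 0 →
      (f q.2.1 * f q.2.2 ≠ 0 ∨ f q.1 * f (q.2.1 + q.2.2 - q.1) ≠ 0) := by
    rintro ⟨a, c, d⟩ hq
    by_contra hcon
    push_neg at hcon
    obtain ⟨h1, h2⟩ := hcon
    apply hq
    simp only [hQ]
    have t1 : (f a + f (c + d - a)) * f c * f d = 0 := by
      rcases mul_eq_zero.mp h1 with h | h <;> rw [h] <;> ring
    have t2 : (f c + f d) * f a * f (c + d - a) = 0 := by
      rcases mul_eq_zero.mp h2 with h | h <;> rw [h] <;> ring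
    rw [t1, t2, sub_zero]
  have Mcont : Continuous M := continuous_m4
  have Qcont : Continuous Q := by rw [hQ]; fun_prop
  -- integrability of all six integrands
  have hint1 : Integrable h₁ := by
    refine integrable_of_bound _ (by rw [hh₁]; fun_prop) (2*R) (fun q hq => ?_)
    have h' := mul_ne_zero_iff.mp (mul_ne_zero_iff.mp hq).1
    exact key q h'.1 (Qsplit q h'.2)
  have hint2 : Integrable h₂ := by
    refine integrable_of_bound _ (by rw [hh₂]; fun_prop) (2*R) (fun q hq => ?_)
    have h' := mul_ne_zero_iff.mp (mul_ne_zero_iff.mp hq).1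
    exact key q h'.1 (Qsplit q h'.2)
  have hint3 : Integrable h₃ := by
    refine integrable_of_bound _ (by rw [hh₃]; fun_prop) (2*R) (fun q hq => ?_)
    have h' := mul_ne_zero_iff.mp (mul_ne_zero_iff.mp hq).1
    exact key q h'.1 (Qsplit q h'.2)
  have hint4 : Integrable h₄ := by
    refine integrable_of_bound _ (by rw [hh₄]; fun_prop) (2*R) (fun q hq => ?_)
    have h' := mul_ne_zero_iff.mp (mul_ne_zero_iff.mp hq).1
    exact key q h'.1 (Qsplit q h'.2)
  have hintr : Integrable rr := by
    refine integrable_of_bound _ (by rw [hrr]; fun_prop) (2*R) (fun q hq => ?_)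
    have h1 := mul_ne_zero_iff.mp (mul_ne_zero_iff.mp (mul_ne_zero_iff.mp (mul_ne_zero_iff.mp hq).1).1).1
    exact key q h1.1 (Or.inr (mul_ne_zero h1.2
      (mul_ne_zero_iff.mp (mul_ne_zero_iff.mp (mul_ne_zero_iff.mp hq).1).1).2))
  have hintr' : Integrable rr' := by
    refine integrable_of_bound _ (by rw [hrr']; fun_prop) (2*R) (fun q hq => ?_)
    have h1 := mul_ne_zero_iff.mp (mul_ne_zero_iff.mp (mul_ne_zero_iff.mp (mul_ne_zero_iff.mp hq).1).1).1
    exact key q h1.1 (Or.inl (mul_ne_zero h1.2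
      (mul_ne_zero_iff.mp (mul_ne_zero_iff.mp (mul_ne_zero_iff.mp hq).1).1).2))
  -- pointwise symmetry identities
  have pt2 : (fun q : ℝ × ℝ × ℝ => h₁ (q.2.1 + q.2.2 - q.1, q.2.1, q.2.2)) = h₂ := by
    funext q; obtain ⟨a, c, d⟩ := q
    simp only [hh₁, hh₂, hM, hQ]
    have e : c + d - (c + d - a) = a := by ring
    rw [e, m4_comm₁₂]
    ring
  have pt3 : (fun q : ℝ × ℝ × ℝ => h₁ (q.2.1, q.1, q.2.1 + q.2.2 - q.1)) = fun q => -(h₃ q) := by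
    funext q; obtain ⟨a, c, d⟩ := q
    simp only [hh₁, hh₃, hM, hQ]
    have e : a + (c + d - a) - c = d := by ring
    rw [e, m4_swap]
    ring
  have I2 : ∫ q : ℝ × ℝ × ℝ, h₂ q = ∫ q, h₁ q := by
    rw [← pt2]
    exact integral_T3 h₁ hint1 (by rw [pt2]; exact hint2)
  have IT1 : ∫ q : ℝ × ℝ × ℝ, h₁ (q.2.1, q.1, q.2.1 + q.2.2 - q.1) = ∫ q, h₁ q :=
    integral_T1 h₁ hint1 (by rw [pt3]; exact hint3.neg)
  have I3 : ∫ q : ℝ × ℝ × ℝ, h₃ q = -∫ q, h₁ q := by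
    have := IT1
    rw [show (fun q : ℝ × ℝ × ℝ => h₁ (q.2.1, q.1, q.2.1 + q.2.2 - q.1)) = fun q => -(h₃ q) from pt3] at this
    rw [integral_neg] at this
    linarith
  have I4 : ∫ q : ℝ × ℝ × ℝ, h₄ q = -∫ q, h₁ q := by
    have hT2' := integral_T2 (fun q : ℝ × ℝ × ℝ => h₁ (q.2.1, q.1, q.2.1 + q.2.2 - q.1))
    rw [IT1] at hT2'
    -- hT2' : ∫ q, h₁ (q.2.2, q.1, q.2.2 + q.2.1 - q.1) = ∫ q, h₁ q
    have pt4 : (fun q : ℝ × ℝ × ℝ =>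
        (fun q' : ℝ × ℝ × ℝ => h₁ (q'.2.1, q'.1, q'.2.1 + q'.2.2 - q'.1)) (q.1, q.2.2, q.2.1))
        = fun q => -(h₄ q) := by
      funext q; obtain ⟨a, c, d⟩ := q
      simp only [hh₁, hh₄, hM, hQ]
      have e1 : d + c - a = c + d - a := by ring
      have e2 : a + (c + d - a) - d = c := by ring
      rw [e1, e2, m4_swap, m4_comm₃₄]
      ring
    rw [pt4] at hT2'
    rw [integral_neg] at hT2'
    linarith
  have ptr : (fun q : ℝ × ℝ × ℝ => rr (q.2.1, q.1, q.2.1 + q.2.2 - q.1)) = fun q => -(rr' q) := by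
    funext q; obtain ⟨a, c, d⟩ := q
    simp only [hrr, hrr', hM]
    have e : a + (c + d - a) - c = d := by ring
    rw [e, m4_swap]
    ring
  have Ir' : ∫ q : ℝ × ℝ × ℝ, rr' q = -∫ q, rr q := by
    have := integral_T1 rr hintr (by rw [ptr]; exact hintr'.neg)
    rw [ptr, integral_neg] at this
    linarith
  -- splitting
  have sumid : rr = fun q => rr' q + h₁ q + h₂ q - h₃ q - h₄ q := by
    funext q; obtain ⟨a, c, d⟩ := q
    simp only [hrr, hrr', hh₁, hh₂, hh₃, hh₄, hQ]
    ring
  have Isplit : ∫ q : ℝ × ℝ × ℝ, rr q =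
      (∫ q : ℝ × ℝ × ℝ, rr' q) + (∫ q : ℝ × ℝ × ℝ, h₁ q) + (∫ q : ℝ × ℝ × ℝ, h₂ q)
        - (∫ q : ℝ × ℝ × ℝ, h₃ q) - (∫ q : ℝ × ℝ × ℝ, h₄ q) := by
    have e : ∫ q : ℝ × ℝ × ℝ, rr q = ∫ q : ℝ × ℝ × ℝ, (rr' q + h₁ q + h₂ q - h₃ q - h₄ q) :=
      integral_congr_ae (Filter.Eventually.of_forall fun q => by rw [sumid])
    rw [e]
    have s1 : (∫ q : ℝ × ℝ × ℝ, (rr' q + h₁ q + h₂ q - h₃ q - h₄ q)) =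
        (∫ q : ℝ × ℝ × ℝ, (rr' q + h₁ q + h₂ q - h₃ q)) - ∫ q : ℝ × ℝ × ℝ, h₄ q :=
      integral_sub (((hintr'.add hint1).add hint2).sub hint3) hint4
    have s2 : (∫ q : ℝ × ℝ × ℝ, (rr' q + h₁ q + h₂ q - h₃ q)) =
        (∫ q : ℝ × ℝ × ℝ, (rr' q + h₁ q + h₂ q)) - ∫ q : ℝ × ℝ × ℝ, h₃ q :=
      integral_sub ((hintr'.add hint1).add hint2) hint3
    have s3 : (∫ q : ℝ × ℝ × ℝ, (rr' q + h₁ q + h₂ q)) =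
        (∫ q : ℝ × ℝ × ℝ, (rr' q + h₁ q)) + ∫ q : ℝ × ℝ × ℝ, h₂ q :=
      integral_add (hintr'.add hint1) hint2
    have s4 : (∫ q : ℝ × ℝ × ℝ, (rr' q + h₁ q)) =
        (∫ q : ℝ × ℝ × ℝ, rr' q) + ∫ q : ℝ × ℝ × ℝ, h₁ q :=
      integral_add hintr' hint1
    rw [s1, s2, s3, s4]
  have Imain : ∫ q : ℝ × ℝ × ℝ, rr q = 2 * ∫ q : ℝ × ℝ × ℝ, h₁ q := by
    have := Isplit
    rw [Ir', I2, I3, I4] at this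
    linarith
  -- LHS conversion
  have LHSeq : (∫ ω₁ in Ioi (0:ℝ), Real.sqrt ω₁ * collisionOp f ω₁ * φ ω₁)
      = ∫ q : ℝ × ℝ × ℝ, h₁ q := by
    have step1 : (∫ ω₁ in Ioi (0:ℝ), Real.sqrt ω₁ * collisionOp f ω₁ * φ ω₁)
        = ∫ a in Ioi (0:ℝ), ∫ p : ℝ × ℝ, h₁ (a, p) := by
      refine setIntegral_congr_fun measurableSet_Ioi (fun a ha => ?_)
      have ha' : (0:ℝ) < a := ha
      have hsa : Real.sqrt a ≠ 0 := ne_of_gt (Real.sqrt_pos.mpr ha')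
      have e1 : Real.sqrt a * collisionOp f a * φ a
          = ∫ p in collisionDomain a, Real.sqrt a * collisionIntegrand f a p * φ a := by
        rw [collisionOp, ← integral_const_mul, ← integral_mul_const]
      have e2 : ∀ p : ℝ × ℝ, Real.sqrt a * collisionIntegrand f a p * φ a = h₁ (a, p) := by
        intro p
        rw [collisionIntegrand, W, sqrt_cancel _ _ _ _ hsa]
        simp only [hh₁, hM, hQ, m4]
      have e3 : (∫ p in collisionDomain a, Real.sqrt a * collisionIntegrand f a p * φ a)
          = ∫ p in collisionDomain a, h₁ (a, p) :=
        integral_congr_ae (Filter.Eventually.of_forall fun p => e2 p)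
      show Real.sqrt a * collisionOp f a * φ a = ∫ p : ℝ × ℝ, h₁ (a, p)
      rw [e1, e3]
      apply setIntegral_eq_integral_of_forall_compl_eq_zero
      intro p hp
      have hmz : m4 a (p.1 + p.2 - a) p.1 p.2 = 0 := by
        apply m4zero
        by_contra hcon
        push_neg at hcon
        exact hp ⟨hcon.2.1.le, hcon.2.2.1.le, hcon.2.2.2.le⟩
      simp [hh₁, hM, hmz]
    have step2 : (∫ a in Ioi (0:ℝ), ∫ p : ℝ × ℝ, h₁ (a, p))
        = ∫ a : ℝ, ∫ p : ℝ × ℝ, h₁ (a, p) := by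
      apply setIntegral_eq_integral_of_forall_compl_eq_zero
      intro a ha
      have ha' : a ≤ 0 := le_of_not_gt (fun h => ha h)
      have hz : ∀ p : ℝ × ℝ, h₁ (a, p) = 0 := fun p => by
        simp [hh₁, hM, m4zero a p.1 p.2 (Or.inl ha')]
      simp [hz]
    have step3 : (∫ a : ℝ, ∫ p : ℝ × ℝ, h₁ (a, p)) = ∫ q : ℝ × ℝ × ℝ, h₁ q := by
      have hunc : Function.uncurry (fun (a : ℝ) (p : ℝ × ℝ) => h₁ (a, p)) = h₁ := by
        funext z; rfl
      have hQint : Integrable (Function.uncurry (fun (a : ℝ) (p : ℝ × ℝ) => h₁ (a, p)))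
          ((volume : Measure ℝ).prod (volume : Measure (ℝ × ℝ))) := by
        rw [hunc]; exact hint1
      have := integral_integral hQint
      rw [this]
      exact integral_congr_ae (Filter.Eventually.of_forall fun z => rfl)
    rw [step1, step2, step3]
  -- RHS conversion
  have hSmeas : MeasurableSet {q : ℝ × ℝ × ℝ |
      0 < q.1 ∧ 0 < q.2.1 ∧ 0 < q.2.2 ∧ 0 < q.2.1 + q.2.2 - q.1} := by
    apply MeasurableSet.inter (measurableSet_lt measurable_const measurable_fst)
    apply MeasurableSet.inter (measurableSet_lt measurable_const (measurable_fst.comp measurable_snd))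
    apply MeasurableSet.inter (measurableSet_lt measurable_const (measurable_snd.comp measurable_snd))
    exact measurableSet_lt measurable_const
      (((measurable_fst.comp measurable_snd).add (measurable_snd.comp measurable_snd)).sub measurable_fst)
  have RHSeq : (∫ q in {q : ℝ × ℝ × ℝ |
        0 < q.1 ∧ 0 < q.2.1 ∧ 0 < q.2.2 ∧ 0 < q.2.1 + q.2.2 - q.1},
          Real.sqrt q.1 * W q.1 (q.2.1 + q.2.2 - q.1) q.2.1 q.2.2 *
            f q.1 * f (q.2.1 + q.2.2 - q.1) * (f q.2.1 + f q.2.2) *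
            (φ q.2.1 + φ q.2.2 - φ q.1 - φ (q.2.1 + q.2.2 - q.1)))
      = ∫ q : ℝ × ℝ × ℝ, rr q := by
    have c1 : EqOn (fun q : ℝ × ℝ × ℝ =>
        Real.sqrt q.1 * W q.1 (q.2.1 + q.2.2 - q.1) q.2.1 q.2.2 *
          f q.1 * f (q.2.1 + q.2.2 - q.1) * (f q.2.1 + f q.2.2) *
          (φ q.2.1 + φ q.2.2 - φ q.1 - φ (q.2.1 + q.2.2 - q.1))) rr
        {q : ℝ × ℝ × ℝ | 0 < q.1 ∧ 0 < q.2.1 ∧ 0 < q.2.2 ∧ 0 < q.2.1 + q.2.2 - q.1} := by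
      intro q hq
      obtain ⟨ha, hc, hd, hb⟩ := hq
      have hsa : Real.sqrt q.1 ≠ 0 := ne_of_gt (Real.sqrt_pos.mpr ha)
      have hw : Real.sqrt q.1 * W q.1 (q.2.1 + q.2.2 - q.1) q.2.1 q.2.2
          = m4 q.1 (q.2.1 + q.2.2 - q.1) q.2.1 q.2.2 := by
        rw [W, m4, mul_comm, div_mul_cancel₀ _ hsa]
      show Real.sqrt q.1 * W q.1 (q.2.1 + q.2.2 - q.1) q.2.1 q.2.2 *
          f q.1 * f (q.2.1 + q.2.2 - q.1) * (f q.2.1 + f q.2.2) *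
          (φ q.2.1 + φ q.2.2 - φ q.1 - φ (q.2.1 + q.2.2 - q.1)) = rr q
      rw [hw]
    rw [setIntegral_congr_fun hSmeas c1]
    apply setIntegral_eq_integral_of_forall_compl_eq_zero
    intro q hq
    have hmz : M q = 0 := by
      simp only [hM]
      apply m4zero
      by_contra hcon
      push_neg at hcon
      exact hq ⟨hcon.1, hcon.2.1, hcon.2.2.1, hcon.2.2.2⟩
    simp [hrr, hmz]
  rw [LHSeq, RHSeq, Imain]
  ring
end

section
/- Define the norm ‖f‖_{α,β} = sup_{0<ω<1} ω^α |f(ω)| + sup_{ω>1} ω^β |f(ω)| and let E_{α,β} be the corresponding Banach space. If 0 ≤ α < 1 < β, then the collision operator 𝒞 is a bounded (cubic) map from E_{α,β} to itself, i.e. there exists C with ‖𝒞(f)‖_{α,β} ≤ C ‖f‖_{α,β}³ for all f ∈ E_{α,β}. -/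
/-!
A function with `‖f‖_{α,β} ≤ M` is bounded by `M w` on `(0, ∞) \ {1}`, where
`w t = min (t ^ (-α)) (t ^ (-β))` is decreasing and, since `α < 1 < β`, integrable.
As `W ≤ 1`, the integrand of `𝒞 f (ω)` is bounded by a sum of triple products of values of `M w`.
All of them but `w(ω₂) w(ω₃) w(ω₄)` are `w(ω)` times a product of two of `w(ω₂), w(ω₃), w(ω₄)`;
in the remaining one, `ω₃ + ω₄ ≥ ω` forces `max ω₃ ω₄ ≥ ω / 2`, so `w(max ω₃ ω₄) ≤ w(ω / 2)`.
Each product of two weights integrates over the collision domain to at most `(∫ w)²` (Tonelli,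
after the shear `(ω₃, ω₄) ↦ (ω₃, ω₃ + ω₄)` for the pairs involving `ω₂`), so
`|𝒞 f (ω)| ≤ (3 w(ω) + 2 w(ω / 2)) M³ (∫ w)²`, and `ω ^ γ w(ω / 2) ≤ 2 ^ γ` for `γ = α, β`.
-/

open MeasureTheory Set

open scoped ENNReal

section AddGroup

variable {G : Type*} [MeasurableSpace G] [AddGroup G] [MeasurableAdd₂ G] {μ : Measure G} [SFinite μ]
  [μ.IsAddLeftInvariant] [μ.IsAddRightInvariant]

theorem lintegral_mul_comp_add_sub {g h : G → ℝ≥0∞} (hg : Measurable g) (hh : Measurable h)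
    (a : G) : ∫⁻ p, g p.1 * h (p.1 + p.2 - a) ∂μ.prod μ = (∫⁻ t, g t ∂μ) * ∫⁻ t, h t ∂μ := by
  have hh' : Measurable fun t => h (t - a) := hh.comp (MeasurableEquiv.subRight a).measurable
  rw [(measurePreserving_prod_add μ μ).lintegral_comp (f := fun q => g q.1 * h (q.2 - a))
    ((hg.comp measurable_fst).mul (hh'.comp measurable_snd)),
    lintegral_prod_mul hg.aemeasurable hh'.aemeasurable, lintegral_sub_right_eq_self h a]

theorem ae_add_sub_of_ae {P : G → Prop} (hP : ∀ᵐ t ∂μ, P t) (a : G) :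
    ∀ᵐ p ∂μ.prod μ, P (p.1 + p.2 - a) :=
  ((measurePreserving_sub_right μ a).quasiMeasurePreserving.comp
    (Measure.quasiMeasurePreserving_snd.comp
      (measurePreserving_prod_add μ μ).quasiMeasurePreserving)).ae hP

end AddGroup

theorem W_nonneg (a b c d : ℝ) : 0 ≤ W a b c d := by unfold W; positivity

theorem W_le_one (a b c d : ℝ) : W a b c d ≤ 1 :=
  div_le_one_of_le₀ ((min_le_left _ _).trans (min_le_left _ _)) (Real.sqrt_nonneg a)

theorem abs_cubic_le {x₁ x₂ x₃ x₄ v₁ v₂ v₃ v₄ : ℝ} (h₁ : |x₁| ≤ v₁) (h₂ : |x₂| ≤ v₂)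
    (h₃ : |x₃| ≤ v₃) (h₄ : |x₄| ≤ v₄) :
    |(x₁ + x₂) * x₃ * x₄ - (x₃ + x₄) * x₁ * x₂| ≤
      v₁ * v₃ * v₄ + v₁ * v₂ * v₃ + v₁ * v₂ * v₄ + v₂ * v₃ * v₄ := by
  have := (abs_nonneg x₁).trans h₁
  have := (abs_nonneg x₂).trans h₂
  have := (abs_nonneg x₃).trans h₃
  have := (abs_nonneg x₄).trans h₄
  calc _ ≤ (|x₁| + |x₂|) * |x₃| * |x₄| + (|x₃| + |x₄|) * |x₁| * |x₂| := by
        refine (abs_sub _ _).trans ?_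
        simp only [abs_mul]
        gcongr <;> exact abs_add_le _ _
    _ ≤ (v₁ + v₂) * v₃ * v₄ + (v₃ + v₄) * v₁ * v₂ := by gcongr
    _ = _ := by ring

theorem mul_le_of_mem_collisionDomain {v : ℝ → ℝ} (hv : AntitoneOn v (Ioi 0)) {a : ℝ} (ha : 0 < a)
    {p : ℝ × ℝ} (hp : p ∈ collisionDomain a) (h₁ : 0 ≤ v p.1) (h₂ : 0 ≤ v p.2) :
    v p.1 * v p.2 ≤ v (a / 2) * (v p.1 + v p.2) := by
  obtain ⟨-, -, hsum⟩ := hp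
  rcases le_total p.1 p.2 with h | h
  · have : v p.2 ≤ v (a / 2) := hv (half_pos ha) (by simp only [mem_Ioi]; linarith) (by linarith)
    nlinarith
  · have : v p.1 ≤ v (a / 2) := hv (half_pos ha) (by simp only [mem_Ioi]; linarith) (by linarith)
    nlinarith

theorem abs_collisionIntegrand_le {f v : ℝ → ℝ} (hv : AntitoneOn v (Ioi 0)) {a : ℝ} (ha : 0 < a)
    {p : ℝ × ℝ} (hp : p ∈ collisionDomain a) (h₀ : |f a| ≤ v a) (h₁ : |f p.1| ≤ v p.1)
    (h₂ : |f p.2| ≤ v p.2) (h₃ : |f (p.1 + p.2 - a)| ≤ v (p.1 + p.2 - a)) :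
    |collisionIntegrand f a p| ≤ v a * (v p.1 * v p.2) +
      (v a + v (a / 2)) * (v p.1 * v (p.1 + p.2 - a)) +
      (v a + v (a / 2)) * (v p.2 * v (p.1 + p.2 - a)) := by
  have hsplit := mul_le_of_mem_collisionDomain hv ha hp ((abs_nonneg _).trans h₁)
    ((abs_nonneg _).trans h₂)
  have h₃' := (abs_nonneg _).trans h₃
  calc |collisionIntegrand f a p|
      ≤ |(f a + f (p.1 + p.2 - a)) * f p.1 * f p.2 -
          (f p.1 + f p.2) * f a * f (p.1 + p.2 - a)| := by
        rw [collisionIntegrand, abs_mul, abs_of_nonneg (W_nonneg _ _ _ _)]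
        exact mul_le_of_le_one_left (abs_nonneg _) (W_le_one _ _ _ _)
    _ ≤ v a * v p.1 * v p.2 + v a * v (p.1 + p.2 - a) * v p.1 + v a * v (p.1 + p.2 - a) * v p.2
          + v (p.1 + p.2 - a) * (v p.1 * v p.2) := by
        have := abs_cubic_le h₀ h₃ h₁ h₂
        linarith
    _ ≤ _ := by nlinarith [mul_le_mul_of_nonneg_left hsplit h₃']

theorem ofReal_abs_collisionIntegrand_le {f v : ℝ → ℝ} (hv : AntitoneOn v (Ioi 0)) {a : ℝ}
    (ha : 0 < a) {p : ℝ × ℝ} (hp : p ∈ collisionDomain a) (h₀ : |f a| ≤ v a)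
    (h₁ : |f p.1| ≤ v p.1) (h₂ : |f p.2| ≤ v p.2) (h₃ : |f (p.1 + p.2 - a)| ≤ v (p.1 + p.2 - a)) :
    ENNReal.ofReal |collisionIntegrand f a p| ≤
      ENNReal.ofReal (v a) * (ENNReal.ofReal (v p.1) * ENNReal.ofReal (v p.2)) +
      ENNReal.ofReal (v a + v (a / 2)) *
        (ENNReal.ofReal (v p.1) * ENNReal.ofReal (v (p.1 + p.2 - a))) +
      ENNReal.ofReal (v a + v (a / 2)) *
        (ENNReal.ofReal (v p.2) * ENNReal.ofReal (v (p.1 + p.2 - a))) := by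
  have := (abs_nonneg _).trans h₀
  have := this.trans (hv (half_pos ha) ha (half_le_self ha.le))
  have := (abs_nonneg _).trans h₁
  have := (abs_nonneg _).trans h₂
  have := (abs_nonneg _).trans h₃
  refine (ENNReal.ofReal_le_ofReal (abs_collisionIntegrand_le hv ha hp h₀ h₁ h₂ h₃)).trans_eq ?_
  rw [ENNReal.ofReal_add (by positivity) (by positivity),
    ENNReal.ofReal_add (by positivity) (by positivity), ENNReal.ofReal_mul (by positivity),
    ENNReal.ofReal_mul (by positivity), ENNReal.ofReal_mul (by positivity),
    ENNReal.ofReal_mul (by positivity), ENNReal.ofReal_mul (by positivity),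
    ENNReal.ofReal_mul (by positivity)]

theorem measurableSet_collisionDomain (a : ℝ) : MeasurableSet (collisionDomain a) :=
  (measurableSet_le measurable_const measurable_fst).inter
    ((measurableSet_le measurable_const measurable_snd).inter
      (measurableSet_le measurable_const
        (by fun_prop : Measurable fun p : ℝ × ℝ => p.1 + p.2 - a)))

theorem lintegral_pair_products_eq {g : ℝ → ℝ≥0∞} (hg : Measurable g) (a : ℝ) (c₁ c₂ : ℝ≥0∞) :
    ∫⁻ p : ℝ × ℝ, c₁ * (g p.1 * g p.2) + c₂ * (g p.1 * g (p.1 + p.2 - a)) +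
      c₂ * (g p.2 * g (p.1 + p.2 - a)) = (c₁ + 2 * c₂) * (∫⁻ t, g t) ^ 2 := by
  have hswap : ∫⁻ p : ℝ × ℝ, g p.2 * g (p.1 + p.2 - a) =
      ∫⁻ p : ℝ × ℝ, g p.1 * g (p.1 + p.2 - a) := by
    rw [Measure.volume_eq_prod, ← lintegral_prod_swap]
    simp only [Prod.fst_swap, Prod.snd_swap, add_comm]
  rw [lintegral_add_left (by fun_prop), lintegral_add_left (by fun_prop),
    lintegral_const_mul _ (by fun_prop), lintegral_const_mul _ (by fun_prop),
    lintegral_const_mul _ (by fun_prop), hswap, Measure.volume_eq_prod,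
    lintegral_mul_comp_add_sub hg hg, lintegral_prod_mul hg.aemeasurable hg.aemeasurable]
  ring

theorem abs_collisionOp_le {f v : ℝ → ℝ} (hv : Measurable v) (hv₀ : ∀ t, 0 < t → 0 ≤ v t)
    (hv_anti : AntitoneOn v (Ioi 0)) (hv_int : IntegrableOn v (Ioi 0))
    (hfv : ∀ᵐ t, 0 < t → |f t| ≤ v t) {a : ℝ} (ha : 0 < a) (hfa : |f a| ≤ v a) :
    |collisionOp f a| ≤ (3 * v a + 2 * v (a / 2)) * (∫ t in Ioi 0, v t) ^ 2 := by
  set J := ∫ t in Ioi 0, v t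
  set g : ℝ → ℝ≥0∞ := (Ioi 0).indicator fun t => ENNReal.ofReal (v t)
  have hg : Measurable g := (ENNReal.measurable_ofReal.comp hv).indicator measurableSet_Ioi
  have hgJ : ∫⁻ t, g t = ENNReal.ofReal J := by
    rw [lintegral_indicator measurableSet_Ioi, ofReal_integral_eq_lintegral_ofReal hv_int
      ((ae_restrict_iff' measurableSet_Ioi).2 (ae_of_all _ hv₀))]
  have hJ : 0 ≤ J := setIntegral_nonneg measurableSet_Ioi hv₀
  have hva := hv₀ a ha
  have hva₂ := hv₀ (a / 2) (half_pos ha)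
  -- `{0}` is null, so a.e. point of `[0, ∞)` lies in `(0, ∞)`, where `g = ofReal ∘ v`.
  have hP : ∀ᵐ t, 0 ≤ t → |f t| ≤ v t ∧ g t = ENNReal.ofReal (v t) := by
    filter_upwards [hfv, volume.ae_ne 0] with t hft ht₀ ht
    have ht' : 0 < t := lt_of_le_of_ne ht (Ne.symm ht₀)
    exact ⟨hft ht', indicator_of_mem ht' _⟩
  have hpt : ∀ᵐ p ∂volume.restrict (collisionDomain a),
      ENNReal.ofReal |collisionIntegrand f a p| ≤ ENNReal.ofReal (v a) * (g p.1 * g p.2) +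
        ENNReal.ofReal (v a + v (a / 2)) * (g p.1 * g (p.1 + p.2 - a)) +
        ENNReal.ofReal (v a + v (a / 2)) * (g p.2 * g (p.1 + p.2 - a)) := by
    filter_upwards [ae_restrict_of_ae (Measure.quasiMeasurePreserving_fst.ae hP),
      ae_restrict_of_ae (Measure.quasiMeasurePreserving_snd.ae hP),
      ae_restrict_of_ae (ae_add_sub_of_ae hP a),
      ae_restrict_mem (measurableSet_collisionDomain a)] with p h₁ h₂ h₃ hp
    obtain ⟨hf₁, hg₁⟩ := h₁ hp.1
    obtain ⟨hf₂, hg₂⟩ := h₂ hp.2.1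
    obtain ⟨hf₃, hg₃⟩ := h₃ hp.2.2
    rw [hg₁, hg₂, hg₃]
    exact ofReal_abs_collisionIntegrand_le hv_anti ha hp hfa hf₁ hf₂ hf₃
  have hint : ∫⁻ p in collisionDomain a, ENNReal.ofReal |collisionIntegrand f a p| ≤
      ENNReal.ofReal ((3 * v a + 2 * v (a / 2)) * J ^ 2) := by
    refine (lintegral_mono_ae hpt).trans (setLIntegral_le_lintegral _ _ |>.trans_eq ?_)
    rw [lintegral_pair_products_eq hg, hgJ, ← ENNReal.ofReal_pow hJ, ← ENNReal.ofReal_ofNat 2,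
      ← ENNReal.ofReal_mul zero_le_two, ← ENNReal.ofReal_add hva (by positivity),
      ← ENNReal.ofReal_mul (by positivity)]
    ring_nf
  calc |collisionOp f a|
      ≤ (∫⁻ p in collisionDomain a, ENNReal.ofReal |collisionIntegrand f a p|).toReal := by
        simpa only [collisionOp, Real.norm_eq_abs] using
          norm_integral_le_lintegral_norm (μ := volume.restrict (collisionDomain a))
            (collisionIntegrand f a)
    _ ≤ _ := ENNReal.toReal_le_of_le_ofReal (by positivity) hint

noncomputable def weight (α β t : ℝ) : ℝ := min (t ^ (-α)) (t ^ (-β))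

section weight

variable {α β : ℝ}

theorem weight_nonneg (α β : ℝ) {t : ℝ} (ht : 0 ≤ t) : 0 ≤ weight α β t :=
  le_min (Real.rpow_nonneg ht _) (Real.rpow_nonneg ht _)

theorem measurable_weight (α β : ℝ) : Measurable (weight α β) := by
  unfold weight; fun_prop

theorem antitoneOn_weight (hα : 0 ≤ α) (hβ : 0 ≤ β) : AntitoneOn (weight α β) (Ioi 0) :=
  (Real.antitoneOn_rpow_Ioi_of_exponent_nonpos (neg_nonpos.2 hα)).min
    (Real.antitoneOn_rpow_Ioi_of_exponent_nonpos (neg_nonpos.2 hβ))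

theorem integrableOn_rpow_neg_Ioc {γ : ℝ} (hγ : γ < 1) :
    IntegrableOn (fun t : ℝ => t ^ (-γ)) (Ioc 0 1) :=
  (intervalIntegrable_iff_integrableOn_Ioc_of_le zero_le_one).1
    (intervalIntegral.intervalIntegrable_rpow' (by linarith))

theorem integral_rpow_neg_Ioc {γ : ℝ} (hγ : γ < 1) :
    ∫ t in Ioc 0 1, t ^ (-γ) = 1 / (1 - γ) := by
  rw [← intervalIntegral.integral_of_le zero_le_one, integral_rpow (Or.inl (by linarith)),
    Real.one_rpow, Real.zero_rpow (by linarith)]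
  ring

theorem integrableOn_weight (hα : α < 1) (hβ : 1 < β) : IntegrableOn (weight α β) (Ioi 0) := by
  have hw := measurable_weight α β
  rw [← Ioc_union_Ioi_eq_Ioi zero_le_one]
  refine IntegrableOn.union ?_ ?_
  · refine (integrableOn_rpow_neg_Ioc hα).mono' hw.aestronglyMeasurable
      ((ae_restrict_iff' measurableSet_Ioc).2 (ae_of_all _ fun t ht => ?_))
    rw [Real.norm_of_nonneg (weight_nonneg α β ht.1.le)]
    exact min_le_left _ _
  · refine (integrableOn_Ioi_rpow_of_lt (by linarith : -β < -1) zero_lt_one).mono'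
      hw.aestronglyMeasurable ((ae_restrict_iff' measurableSet_Ioi).2 (ae_of_all _ fun t ht => ?_))
    rw [Real.norm_of_nonneg (weight_nonneg α β (zero_le_one.trans ht.le))]
    exact min_le_right _ _

theorem integral_weight_le (hα : α < 1) (hβ : 1 < β) :
    ∫ t in Ioi 0, weight α β t ≤ 1 / (1 - α) + 1 / (β - 1) := by
  have hw := integrableOn_weight hα hβ
  rw [← Ioc_union_Ioi_eq_Ioi zero_le_one, setIntegral_union (Ioc_disjoint_Ioi le_rfl)
    measurableSet_Ioi (hw.mono_set Ioc_subset_Ioi_self) (hw.mono_set (Ioi_subset_Ioi zero_le_one))]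
  gcongr
  · calc ∫ t in Ioc 0 1, weight α β t ≤ ∫ t in Ioc 0 1, t ^ (-α) :=
          setIntegral_mono (hw.mono_set Ioc_subset_Ioi_self) (integrableOn_rpow_neg_Ioc hα)
            fun _ => min_le_left _ _
      _ = 1 / (1 - α) := integral_rpow_neg_Ioc hα
  · calc ∫ t in Ioi 1, weight α β t ≤ ∫ t in Ioi 1, t ^ (-β) :=
          setIntegral_mono (hw.mono_set (Ioi_subset_Ioi zero_le_one))
            (integrableOn_Ioi_rpow_of_lt (by linarith) zero_lt_one) fun _ => min_le_right _ _
      _ = 1 / (β - 1) := by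
          rw [integral_Ioi_rpow_of_lt (by linarith) zero_lt_one, Real.one_rpow,
            show -β + 1 = -(β - 1) by ring, neg_div_neg_eq]

theorem abs_le_mul_weight (hαβ : α ≤ β) {f : ℝ → ℝ} {M : ℝ}
    (h₁ : ∀ ω ∈ Ioo (0:ℝ) 1, ω ^ α * |f ω| ≤ M) (h₂ : ∀ ω ∈ Ioi (1:ℝ), ω ^ β * |f ω| ≤ M)
    {t : ℝ} (ht : 0 < t) (ht₁ : t ≠ 1) : |f t| ≤ M * weight α β t := by
  have key : ∀ γ : ℝ, t ^ γ * |f t| ≤ M → |f t| ≤ M * t ^ (-γ) := fun γ h => by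
    rw [Real.rpow_neg ht.le, ← div_eq_mul_inv, le_div_iff₀ (by positivity)]
    linarith
  rcases ht₁.lt_or_gt with h | h
  · rw [weight, min_eq_left (Real.rpow_le_rpow_of_exponent_ge ht h.le (by linarith))]
    exact key α (h₁ t ⟨ht, h⟩)
  · rw [weight, min_eq_right (Real.rpow_le_rpow_of_exponent_le h.le (by linarith))]
    exact key β (h₂ t h)

theorem rpow_mul_add_half_le {g : ℝ → ℝ} {γ ω : ℝ} (hω : 0 < ω)
    (hg : ∀ t, 0 < t → g t ≤ t ^ (-γ)) : ω ^ γ * (3 * g ω + 2 * g (ω / 2)) ≤ 3 + 2 * 2 ^ γ := by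
  have h₁ : ω ^ γ * ω ^ (-γ) = 1 := by rw [← Real.rpow_add hω]; simp
  have h₂ : (ω / 2) ^ (-γ) = ω ^ (-γ) * 2 ^ γ := by
    rw [Real.div_rpow hω.le zero_le_two, Real.rpow_neg zero_le_two, div_inv_eq_mul]
  calc ω ^ γ * (3 * g ω + 2 * g (ω / 2))
      ≤ ω ^ γ * (3 * ω ^ (-γ) + 2 * (ω / 2) ^ (-γ)) := by
        gcongr
        exacts [hg ω hω, hg (ω / 2) (half_pos hω)]
    _ = 3 + 2 * 2 ^ γ := by
        rw [h₂]
        linear_combination (3 + 2 * 2 ^ γ) * h₁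

end weight

section weightedBound

variable {α β : ℝ} {f : ℝ → ℝ} {M : ℝ}

theorem abs_collisionOp_le_weight (hα₀ : 0 ≤ α) (hα : α < 1) (hβ : 1 < β) (hM : 0 ≤ M)
    (h₁ : ∀ ω ∈ Ioo (0:ℝ) 1, ω ^ α * |f ω| ≤ M) (h₂ : ∀ ω ∈ Ioi (1:ℝ), ω ^ β * |f ω| ≤ M)
    {ω : ℝ} (hω : 0 < ω) (hω₁ : ω ≠ 1) :
    |collisionOp f ω| ≤ M ^ 3 * (1 / (1 - α) + 1 / (β - 1)) ^ 2 *
      (3 * weight α β ω + 2 * weight α β (ω / 2)) := by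
  have hfw : ∀ t, 0 < t → t ≠ 1 → |f t| ≤ M * weight α β t :=
    fun t ht ht₁ => abs_le_mul_weight (by linarith) h₁ h₂ ht ht₁
  have hJ : ∫ t in Ioi 0, M * weight α β t ≤ M * (1 / (1 - α) + 1 / (β - 1)) := by
    rw [integral_const_mul]
    exact mul_le_mul_of_nonneg_left (integral_weight_le hα hβ) hM
  have hJ₀ : 0 ≤ ∫ t in Ioi 0, M * weight α β t :=
    setIntegral_nonneg measurableSet_Ioi fun t ht => mul_nonneg hM (weight_nonneg α β ht.le)
  have := weight_nonneg α β hω.le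
  have := weight_nonneg α β (half_pos hω).le
  calc |collisionOp f ω|
      ≤ (3 * (M * weight α β ω) + 2 * (M * weight α β (ω / 2))) *
          (∫ t in Ioi 0, M * weight α β t) ^ 2 :=
        abs_collisionOp_le ((measurable_weight α β).const_mul M)
          (fun t ht => mul_nonneg hM (weight_nonneg α β ht.le))
          (fun x hx y hy hxy => mul_le_mul_of_nonneg_left
            (antitoneOn_weight hα₀ (by linarith) hx hy hxy) hM)
          ((integrableOn_weight hα hβ).const_mul M)
          (by filter_upwards [volume.ae_ne 1] with t ht₁ ht using hfw t ht ht₁) hω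
          (hfw ω hω hω₁)
    _ ≤ (3 * (M * weight α β ω) + 2 * (M * weight α β (ω / 2))) *
          (M * (1 / (1 - α) + 1 / (β - 1))) ^ 2 := by gcongr
    _ = _ := by ring

theorem rpow_mul_abs_collisionOp_le (hα₀ : 0 ≤ α) (hα : α < 1) (hβ : 1 < β) (hM : 0 ≤ M)
    (h₁ : ∀ ω ∈ Ioo (0:ℝ) 1, ω ^ α * |f ω| ≤ M) (h₂ : ∀ ω ∈ Ioi (1:ℝ), ω ^ β * |f ω| ≤ M)
    {γ : ℝ} (hγ : ∀ t, 0 < t → weight α β t ≤ t ^ (-γ)) {ω : ℝ} (hω : 0 < ω) (hω₁ : ω ≠ 1) :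
    ω ^ γ * |collisionOp f ω| ≤ (3 + 2 * 2 ^ γ) * (1 / (1 - α) + 1 / (β - 1)) ^ 2 * M ^ 3 := by
  calc ω ^ γ * |collisionOp f ω|
      ≤ ω ^ γ * (M ^ 3 * (1 / (1 - α) + 1 / (β - 1)) ^ 2 *
          (3 * weight α β ω + 2 * weight α β (ω / 2))) := by
        gcongr
        exact abs_collisionOp_le_weight hα₀ hα hβ hM h₁ h₂ hω hω₁
    _ = M ^ 3 * (1 / (1 - α) + 1 / (β - 1)) ^ 2 *
          (ω ^ γ * (3 * weight α β ω + 2 * weight α β (ω / 2))) := by ring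
    _ ≤ M ^ 3 * (1 / (1 - α) + 1 / (β - 1)) ^ 2 * (3 + 2 * 2 ^ γ) := by
        gcongr
        exact rpow_mul_add_half_le hω hγ
    _ = _ := by ring

end weightedBound

/-- For 0 ≤ α < 1 < β, the collision operator is a bounded cubic map from E_{α,β} to
itself: if ω^α|f| ≤ M on (0,1) and ω^β|f| ≤ M on (1,∞), then the same weighted bounds
hold for 𝒞(f) with constant C·M³. -/
theorem stmt_7 (α β : ℝ) (hα0 : 0 ≤ α) (hα : α < 1) (hβ : 1 < β) :
    ∃ C > (0:ℝ), ∀ (f : ℝ → ℝ) (M : ℝ), Measurable f → 0 ≤ M →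
      (∀ ω ∈ Ioo (0:ℝ) 1, ω ^ α * |f ω| ≤ M) →
      (∀ ω ∈ Ioi (1:ℝ), ω ^ β * |f ω| ≤ M) →
      (∀ ω ∈ Ioo (0:ℝ) 1, ω ^ α * |collisionOp f ω| ≤ C * M ^ 3) ∧
      (∀ ω ∈ Ioi (1:ℝ), ω ^ β * |collisionOp f ω| ≤ C * M ^ 3) := by
  have := sub_pos.2 hα
  have := sub_pos.2 hβ
  refine ⟨(3 + 2 * 2 ^ β) * (1 / (1 - α) + 1 / (β - 1)) ^ 2, by positivity,
    fun f M _ hM h₁ h₂ => ⟨fun ω hω => ?_, fun ω hω => ?_⟩⟩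
  · refine (rpow_mul_abs_collisionOp_le hα0 hα hβ hM h₁ h₂ (fun _ _ => min_le_left _ _) hω.1
      hω.2.ne).trans ?_
    gcongr
    exacts [one_le_two, by linarith]
  · exact rpow_mul_abs_collisionOp_le hα0 hα hβ hM h₁ h₂ (fun _ _ => min_le_right _ _)
      (zero_lt_one.trans hω) (ne_of_gt hω)
end

section
/- Assume f ∈ E_{α,β} with α < 3/2 and β > 1, and φ ∈ C_0^∞((0,∞)). Then the integral ∭_{ω₁<ω₂, ω₃<ω₄, ω₁+ω₂=ω₃+ω₄} min(√ω₁,√ω₃) f₁ f₂ (f₃+f₄)(φ₃+φ₄−φ₁−φ₂) dω₁ dω₃ dω₄ converges absolutely. -/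
open MeasureTheory Set

namespace Stmt8Aux

open Real intervalIntegral

/-- powers on `(0,2]` -/
noncomputable def pe (e : ℝ) : ℝ → ℝ := (Ioc (0:ℝ) 2).indicator fun t => t ^ e

/-- powers on `(c,∞)` -/
noncomputable def qi (c e : ℝ) : ℝ → ℝ := (Ioi c).indicator fun t => t ^ e

/-- indicator of `(1,b]` -/
noncomputable def jc (b : ℝ) : ℝ → ℝ := (Ioc (1:ℝ) b).indicator fun _ => (1:ℝ)

lemma pe_apply {e t : ℝ} (h1 : 0 < t) (h2 : t ≤ 2) : pe e t = t ^ e :=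
  indicator_of_mem (mem_Ioc.mpr ⟨h1, h2⟩) _

lemma qi_apply {c e t : ℝ} (h : c < t) : qi c e t = t ^ e :=
  indicator_of_mem (mem_Ioi.mpr h) _

lemma jc_apply {b t : ℝ} (h1 : 1 < t) (h2 : t ≤ b) : jc b t = 1 :=
  indicator_of_mem (mem_Ioc.mpr ⟨h1, h2⟩) _

lemma pe_nonneg (e t : ℝ) : 0 ≤ pe e t :=
  indicator_nonneg (fun s hs => Real.rpow_nonneg hs.1.le e) t

lemma qi_nonneg {c : ℝ} (hc : 0 ≤ c) (e t : ℝ) : 0 ≤ qi c e t :=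
  indicator_nonneg (fun s hs => Real.rpow_nonneg (le_trans hc (le_of_lt hs)) e) t

lemma jc_nonneg (b t : ℝ) : 0 ≤ jc b t :=
  indicator_nonneg (fun _ _ => zero_le_one) t

lemma pe_int {e : ℝ} (he : -1 < e) : Integrable (pe e) := by
  rw [pe, integrable_indicator_iff measurableSet_Ioc]
  have h := (integrableOn_Ioo_rpow_iff (by norm_num : (0:ℝ) < 2)).2 he
  exact h.congr_set_ae (Ioo_ae_eq_Ioc (a := (0:ℝ)) (b := 2)).symm

lemma qi_int {c e : ℝ} (hc : 0 < c) (he : e < -1) : Integrable (qi c e) := by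
  rw [qi, integrable_indicator_iff measurableSet_Ioi]
  exact (integrableOn_Ioi_rpow_iff hc).2 he

lemma jc_int (b : ℝ) : Integrable (jc b) := by
  rw [jc, integrable_indicator_iff measurableSet_Ioc]
  exact integrableOn_const measure_Ioc_lt_top.ne

lemma int_triple {g₁ g₂ g₃ : ℝ → ℝ} (h₁ : Integrable g₁) (h₂ : Integrable g₂)
    (h₃ : Integrable g₃) :
    Integrable (fun q : ℝ × ℝ × ℝ => g₁ q.1 * (g₂ q.2.1 * g₃ q.2.2)) := by
  have h23 : Integrable (fun p : ℝ × ℝ => g₂ p.1 * g₃ p.2)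
      ((volume : Measure ℝ).prod (volume : Measure ℝ)) := h₂.mul_prod h₃
  have h := h₁.mul_prod h23
  exact h

lemma mul5_le {a1 a2 a3 a4 a5 b1 b2 b3 b4 b5 : ℝ}
    (ha1 : 0 ≤ a1) (ha2 : 0 ≤ a2) (ha3 : 0 ≤ a3) (ha4 : 0 ≤ a4) (ha5 : 0 ≤ a5)
    (h1 : a1 ≤ b1) (h2 : a2 ≤ b2) (h3 : a3 ≤ b3) (h4 : a4 ≤ b4) (h5 : a5 ≤ b5) :
    a1 * (a2 * (a3 * (a4 * a5))) ≤ b1 * (b2 * (b3 * (b4 * b5))) := by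
  have hb2 : 0 ≤ b2 := ha2.trans h2
  have hb3 : 0 ≤ b3 := ha3.trans h3
  have hb4 : 0 ≤ b4 := ha4.trans h4
  have s45 : a4 * a5 ≤ b4 * b5 := mul_le_mul h4 h5 ha5 hb4
  have s345 : a3 * (a4 * a5) ≤ b3 * (b4 * b5) :=
    mul_le_mul h3 s45 (mul_nonneg ha4 ha5) hb3
  have s2345 : a2 * (a3 * (a4 * a5)) ≤ b2 * (b3 * (b4 * b5)) :=
    mul_le_mul h2 s345 (mul_nonneg ha3 (mul_nonneg ha4 ha5)) hb2
  exact mul_le_mul h1 s2345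
    (mul_nonneg ha2 (mul_nonneg ha3 (mul_nonneg ha4 ha5))) (ha1.trans h1)

lemma interp34 {u v p : ℝ} (hu : 0 ≤ u) (h1 : |p| ≤ u) (h2 : |p| ≤ v) :
    |p| ≤ u ^ (3/4 : ℝ) * v ^ (1/4 : ℝ) := by
  have h : |p| = |p| ^ (3/4 : ℝ) * |p| ^ (1/4 : ℝ) := by
    rw [← Real.rpow_add' (abs_nonneg p) (by norm_num)]
    norm_num
  rw [h]
  exact mul_le_mul (Real.rpow_le_rpow (abs_nonneg p) h1 (by norm_num))
    (Real.rpow_le_rpow (abs_nonneg p) h2 (by norm_num))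
    (Real.rpow_nonneg (abs_nonneg p) _) (Real.rpow_nonneg hu _)

end Stmt8Aux

open Stmt8Aux Real

set_option maxHeartbeats 1000000 in
/-- Weak formulation lemma: for f ∈ E_{α,β} with α < 3/2 and β > 1, and
φ ∈ C₀^∞((0,∞)), the symmetrized collision integral with the test-function
cancellation converges absolutely. Here q = (ω₁,ω₃,ω₄), ω₂ = ω₃+ω₄−ω₁, and the
domain is {ω₁ < ω₂, ω₃ < ω₄, all positive}. -/
theorem stmt_8 (α β M : ℝ) (hα : α < 3/2) (hβ : 1 < β) (f φ : ℝ → ℝ)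
    (hfm : Measurable f)
    (hf1 : ∀ ω ∈ Ioo (0:ℝ) 1, |f ω| ≤ M * ω ^ (-α))
    (hf2 : ∀ ω ∈ Ici (1:ℝ), |f ω| ≤ M * ω ^ (-β))
    (hφ : ContDiff ℝ (⊤ : ℕ∞) φ) (hφc : HasCompactSupport φ)
    (hφs : Function.support φ ⊆ Ioi 0) :
    IntegrableOn
      (fun q : ℝ × ℝ × ℝ =>
        min (Real.sqrt q.1) (Real.sqrt q.2.1) *
          f q.1 * f (q.2.1 + q.2.2 - q.1) * (f q.2.1 + f q.2.2) *
          (φ q.2.1 + φ q.2.2 - φ q.1 - φ (q.2.1 + q.2.2 - q.1)))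
      {q : ℝ × ℝ × ℝ |
        0 < q.1 ∧ 0 < q.2.1 ∧ q.2.1 < q.2.2 ∧ q.1 < q.2.1 + q.2.2 - q.1} := by
  classical
  -- normalized exponents
  set A : ℝ := max α (5/4) with hA_def
  have hA1 : (5/4 : ℝ) ≤ A := le_max_right _ _
  have hA2 : A < 3/2 := max_lt (by linarith) (by norm_num)
  have hαA : α ≤ A := le_max_left _ _
  have hA0 : (0:ℝ) < A := by linarith
  set B : ℝ := min β (5/4) with hB_def
  have hB1 : (1:ℝ) < B := lt_min hβ (by norm_num)
  have hβB : B ≤ β := min_le_left _ _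
  have hBA : B ≤ A := le_trans (min_le_right _ _) hA1
  have hB0 : (0:ℝ) < B := by linarith
  -- M is nonnegative
  have hM0 : 0 ≤ M := by
    have h := hf1 (1/2) (by norm_num)
    have hp : (0:ℝ) < ((1:ℝ)/2) ^ (-α) := Real.rpow_pos_of_pos (by norm_num) _
    nlinarith [abs_nonneg (f (1/2))]
  -- the weight bound for f
  have hfw : ∀ t : ℝ, 0 < t → |f t| ≤ M * (t ^ (-A) + t ^ (-B)) := by
    intro t ht
    rcases lt_or_ge t 1 with h1 | h1
    · have h := hf1 t ⟨ht, h1⟩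
      have h2 : t ^ (-α) ≤ t ^ (-A) := Real.rpow_le_rpow_of_exponent_ge ht h1.le (by linarith)
      have h3 : (0:ℝ) < t ^ (-B) := Real.rpow_pos_of_pos ht _
      have h4 : M * t ^ (-α) ≤ M * t ^ (-A) := mul_le_mul_of_nonneg_left h2 hM0
      have h5 : (0:ℝ) ≤ M * t ^ (-B) := mul_nonneg hM0 h3.le
      calc |f t| ≤ M * t ^ (-α) := h
        _ ≤ M * (t ^ (-A) + t ^ (-B)) := by rw [mul_add]; linarith
    · have h := hf2 t h1
      have h2 : t ^ (-β) ≤ t ^ (-B) := Real.rpow_le_rpow_of_exponent_le h1 (by linarith)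
      have h3 : (0:ℝ) < t ^ (-A) := Real.rpow_pos_of_pos ht _
      have h4 : M * t ^ (-β) ≤ M * t ^ (-B) := mul_le_mul_of_nonneg_left h2 hM0
      have h5 : (0:ℝ) ≤ M * t ^ (-A) := mul_nonneg hM0 h3.le
      calc |f t| ≤ M * t ^ (-β) := h
        _ ≤ M * (t ^ (-A) + t ^ (-B)) := by rw [mul_add]; linarith
  -- monotonicity of the weight
  have hw_anti : ∀ s t : ℝ, 0 < s → s ≤ t →
      t ^ (-A) + t ^ (-B) ≤ s ^ (-A) + s ^ (-B) := by
    intro s t hs hst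
    exact add_le_add (Real.rpow_le_rpow_of_nonpos hs hst (by linarith))
      (Real.rpow_le_rpow_of_nonpos hs hst (by linarith))
  have h2A0 : (0:ℝ) < 2 ^ A := Real.rpow_pos_of_pos (by norm_num) _
  -- scaling of the weight
  have hw_half : ∀ t : ℝ, 0 < t →
      (t/2) ^ (-A) + (t/2) ^ (-B) ≤ 2 ^ A * (t ^ (-A) + t ^ (-B)) := by
    intro t ht
    have e1 : (t/2) ^ (-A) = t ^ (-A) * 2 ^ A := by
      rw [div_eq_mul_inv, Real.mul_rpow ht.le (by norm_num : (0:ℝ) ≤ 2⁻¹),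
        Real.inv_rpow (by norm_num : (0:ℝ) ≤ 2), Real.rpow_neg (by norm_num : (0:ℝ) ≤ 2),
        inv_inv]
    have e2 : (t/2) ^ (-B) = t ^ (-B) * 2 ^ B := by
      rw [div_eq_mul_inv, Real.mul_rpow ht.le (by norm_num : (0:ℝ) ≤ 2⁻¹),
        Real.inv_rpow (by norm_num : (0:ℝ) ≤ 2), Real.rpow_neg (by norm_num : (0:ℝ) ≤ 2),
        inv_inv]
    have h2B : (2:ℝ) ^ B ≤ 2 ^ A := Real.rpow_le_rpow_of_exponent_le one_le_two hBA
    have hB' : (0:ℝ) < t ^ (-B) := Real.rpow_pos_of_pos ht _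
    have h6 : t ^ (-B) * 2 ^ B ≤ t ^ (-B) * 2 ^ A := mul_le_mul_of_nonneg_left h2B hB'.le
    rw [e1, e2, mul_add]
    linarith [mul_comm (t ^ (-A)) ((2:ℝ) ^ A), mul_comm (t ^ (-B)) ((2:ℝ) ^ A)]
  -- weight comparison on (0,2]
  have h2negA : (1:ℝ)/4 ≤ (2:ℝ) ^ (-A) := by
    have e4 : (2:ℝ) ^ ((2:ℕ):ℝ) = 4 := by rw [Real.rpow_natCast]; norm_num
    have hle : (2:ℝ) ^ A ≤ 4 := by
      have h := Real.rpow_le_rpow_of_exponent_le one_le_two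
        (show A ≤ ((2:ℕ):ℝ) by push_cast; linarith)
      rwa [e4] at h
    have hinv : (2:ℝ) ^ (-A) * (2:ℝ) ^ A = 1 := by
      rw [← Real.rpow_add (by norm_num : (0:ℝ) < 2)]
      simp
    have hpos : (0:ℝ) < (2:ℝ) ^ (-A) := Real.rpow_pos_of_pos (by norm_num) _
    have hprod : (0:ℝ) ≤ (2:ℝ) ^ (-A) * (4 - (2:ℝ) ^ A) :=
      mul_nonneg hpos.le (by linarith)
    nlinarith [hprod, hinv]
  have hw5 : ∀ t : ℝ, 0 < t → t ≤ 2 → t ^ (-A) + t ^ (-B) ≤ 5 * t ^ (-A) := by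
    intro t ht ht2
    have hApos : (0:ℝ) < t ^ (-A) := Real.rpow_pos_of_pos ht _
    have hBle : t ^ (-B) ≤ 4 * t ^ (-A) := by
      rcases le_or_gt t 1 with h1 | h1
      · have h : t ^ (-B) ≤ t ^ (-A) := Real.rpow_le_rpow_of_exponent_ge ht h1 (by linarith)
        linarith
      · have hb1 : t ^ (-B) ≤ 1 := Real.rpow_le_one_of_one_le_of_nonpos h1.le (by linarith)
        have ha1 : (2:ℝ) ^ (-A) ≤ t ^ (-A) := Real.rpow_le_rpow_of_nonpos ht ht2 (by linarith)
        linarith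
    linarith
  have hw2B : ∀ t : ℝ, 1 ≤ t → t ^ (-A) + t ^ (-B) ≤ 2 * t ^ (-B) := by
    intro t ht
    have h : t ^ (-A) ≤ t ^ (-B) := Real.rpow_le_rpow_of_exponent_le ht (by linarith)
    linarith
  have hw2 : ∀ t : ℝ, 1 ≤ t → t ^ (-A) + t ^ (-B) ≤ 2 := by
    intro t ht
    have h1 : t ^ (-A) ≤ 1 := Real.rpow_le_one_of_one_le_of_nonpos ht (by linarith)
    have h2 : t ^ (-B) ≤ 1 := Real.rpow_le_one_of_one_le_of_nonpos ht (by linarith)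
    linarith
  -- properties of the test function
  obtain ⟨Lip, hLip'⟩ := ContDiff.lipschitzWith_of_hasCompactSupport hφc hφ (by simp)
  set L : ℝ := (Lip : ℝ) with hL_def
  have hL0 : 0 ≤ L := Lip.coe_nonneg
  have hLip : ∀ s t : ℝ, |φ s - φ t| ≤ L * |s - t| := by
    intro s t
    have h := hLip'.dist_le_mul s t
    rwa [Real.dist_eq, Real.dist_eq] at h
  have hφ0 : ∀ t : ℝ, t ≤ 0 → φ t = 0 := by
    intro t ht
    by_contra h
    have h2 := hφs (Function.mem_support.2 h)
    rw [mem_Ioi] at h2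
    linarith
  have hφzero : φ 0 = 0 := hφ0 0 le_rfl
  have hφlin : ∀ t : ℝ, 0 ≤ t → |φ t| ≤ L * t := by
    intro t ht
    have h := hLip t 0
    rw [hφzero, sub_zero, sub_zero, abs_of_nonneg ht] at h
    exact h
  -- second order bound near 0
  have hφdiff : Differentiable ℝ φ := hφ.differentiable (by simp)
  have hφd : ContDiff ℝ ((⊤:ℕ∞) : WithTop ℕ∞) (deriv φ) :=
    (contDiff_infty_iff_deriv.mp (hφ.of_le (by simp))).2
  obtain ⟨Lip2, hLip2'⟩ :=
    ContDiff.lipschitzWith_of_hasCompactSupport hφc.deriv hφd (by simp)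
  set L₂ : ℝ := (Lip2 : ℝ) with hL2_def
  have hL₂0 : 0 ≤ L₂ := Lip2.coe_nonneg
  have hLip2 : ∀ s t : ℝ, |deriv φ s - deriv φ t| ≤ L₂ * |s - t| := by
    intro s t
    have h := hLip2'.dist_le_mul s t
    rwa [Real.dist_eq, Real.dist_eq] at h
  have hd0 : deriv φ 0 = 0 := by
    have hIio : ∀ t : ℝ, t < 0 → deriv φ t = 0 := by
      intro t ht
      have hev : φ =ᶠ[nhds t] (fun _ => (0:ℝ)) := by
        filter_upwards [Iio_mem_nhds ht] with s hs
        exact hφ0 s (le_of_lt hs)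
      rw [Filter.EventuallyEq.deriv_eq hev]
      exact deriv_const t 0
    have heq : EqOn (deriv φ) (fun _ => (0:ℝ)) (closure (Iio (0:ℝ))) :=
      EqOn.closure (fun t ht => hIio t ht) hφd.continuous continuous_const
    have h0 : (0:ℝ) ∈ closure (Iio (0:ℝ)) := by
      rw [closure_Iio]
      exact mem_Iic.2 le_rfl
    exact heq h0
  have hdlin : ∀ t : ℝ, 0 ≤ t → |deriv φ t| ≤ L₂ * t := by
    intro t ht
    have h := hLip2 t 0
    rw [hd0, sub_zero, sub_zero, abs_of_nonneg ht] at h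
    exact h
  have hφquad : ∀ t : ℝ, 0 ≤ t → |φ t| ≤ L₂ * (t * t) := by
    intro t ht
    have hb : ∀ x ∈ Icc (0:ℝ) t, ‖deriv φ x‖ ≤ L₂ * t := by
      intro x hx
      rw [Real.norm_eq_abs]
      calc |deriv φ x| ≤ L₂ * x := hdlin x hx.1
        _ ≤ L₂ * t := mul_le_mul_of_nonneg_left hx.2 hL₂0
    have h := (convex_Icc (0:ℝ) t).norm_image_sub_le_of_norm_deriv_le
      (fun x _ => hφdiff.differentiableAt) hb (left_mem_Icc.2 ht) (right_mem_Icc.2 ht)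
    rw [hφzero, sub_zero, sub_zero, Real.norm_eq_abs, Real.norm_eq_abs,
      abs_of_nonneg ht] at h
    calc |φ t| ≤ L₂ * t * t := h
      _ = L₂ * (t * t) := by ring
  -- upper bound of the support
  obtain ⟨b₀, hb₀⟩ := hφc.isCompact.bddAbove
  set b : ℝ := max b₀ 1 with hb_def
  have hb1 : (1:ℝ) ≤ b := le_max_right _ _
  have hb0 : (0:ℝ) < b := by linarith
  have hφb : ∀ t : ℝ, b < t → φ t = 0 := by
    intro t ht
    apply image_eq_zero_of_notMem_tsupport
    intro hmem
    have h1 : t ≤ b₀ := hb₀ hmem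
    have h2 : b₀ ≤ b := le_max_left _ _
    linarith
  have hφC : ∀ t : ℝ, |φ t| ≤ L * b := by
    intro t
    rcases le_or_gt t 0 with h | h
    · rw [hφ0 t h, abs_zero]
      exact mul_nonneg hL0 hb0.le
    · rcases le_or_gt t b with h2 | h2
      · calc |φ t| ≤ L * t := hφlin t h.le
          _ ≤ L * b := mul_le_mul_of_nonneg_left h2 hL0
      · rw [hφb t h2, abs_zero]
        exact mul_nonneg hL0 hb0.le
  -- global constants
  set Λ : ℝ := 2*L + 10*L₂ + 4*(L*b) + 1 with hΛ_def
  have hΛ1 : (1:ℝ) ≤ Λ := by linarith [mul_nonneg hL0 hb0.le]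
  have hΛ0 : (0:ℝ) < Λ := by linarith
  set K₀ : ℝ := 2 * 2 ^ A * M ^ 3 with hK₀_def
  have hK₀0 : 0 ≤ K₀ := by positivity
  set K : ℝ := 1000 * (1 + b) * Λ * K₀ with hK_def
  have hK0 : 0 ≤ K :=
    mul_nonneg (mul_nonneg (mul_nonneg (by norm_num) (by linarith)) hΛ0.le) hK₀0
  -- the key pointwise estimate
  have key : ∀ x y z : ℝ, 0 < x → 0 < y → y < z → x < y + z - x →
      |min (Real.sqrt x) (Real.sqrt y) * f x * f (y + z - x) * (f y + f z) *
        (φ y + φ z - φ x - φ (y + z - x))| ≤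
      K * (pe (1/2 - A) x * (pe (3/4 - A) y * pe (1/2 - A) z)
        + pe (3/4 - A) x * (pe (1/2 - A) y * pe (1/2 - A) z)
        + pe (1/2 - A) x * (pe (1 - A) y * qi 1 (-B) z)
        + pe (1 - A) x * (pe (1/2 - A) y * qi 1 (-B) z)
        + pe (1/2 - A) x * (qi 1 (-B) y * qi 1 (-B) z)
        + jc b x * (pe (1/2 - A) y * qi 1 (-B) z)
        + qi b (-B) x * (pe (3/2 - A) y * qi 1 (-B) z)
        + jc b x * (qi 1 (-B) y * qi 1 (-B) z)
        + qi b (-B) x * (jc b y * qi 1 (-B) z)) := by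
    intro x y z hx hy hyz hxu
    set u : ℝ := y + z - x with hu_def
    have hz0 : 0 < z := lt_trans hy hyz
    have hu0 : 0 < u := lt_trans hx hxu
    have hu2z : u ≤ 2*z := by linarith only [hu_def, hyz, hx]
    have hx2z : x ≤ 2*z := by linarith only [hxu, hu_def, hyz, hx, hy]
    have huz2 : z/2 ≤ u := by linarith only [hxu, hu_def, hy]
    have hminnn : 0 ≤ min (Real.sqrt x) (Real.sqrt y) :=
      le_min (Real.sqrt_nonneg x) (Real.sqrt_nonneg y)
    set Φ : ℝ := φ y + φ z - φ x - φ u with hΦ_def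
    -- nonnegativity of the nine summands
    have n1 : 0 ≤ pe (1/2 - A) x * (pe (3/4 - A) y * pe (1/2 - A) z) :=
      mul_nonneg (pe_nonneg _ _) (mul_nonneg (pe_nonneg _ _) (pe_nonneg _ _))
    have n2 : 0 ≤ pe (3/4 - A) x * (pe (1/2 - A) y * pe (1/2 - A) z) :=
      mul_nonneg (pe_nonneg _ _) (mul_nonneg (pe_nonneg _ _) (pe_nonneg _ _))
    have n3 : 0 ≤ pe (1/2 - A) x * (pe (1 - A) y * qi 1 (-B) z) :=
      mul_nonneg (pe_nonneg _ _) (mul_nonneg (pe_nonneg _ _) (qi_nonneg zero_le_one _ _))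
    have n4 : 0 ≤ pe (1 - A) x * (pe (1/2 - A) y * qi 1 (-B) z) :=
      mul_nonneg (pe_nonneg _ _) (mul_nonneg (pe_nonneg _ _) (qi_nonneg zero_le_one _ _))
    have n5 : 0 ≤ pe (1/2 - A) x * (qi 1 (-B) y * qi 1 (-B) z) :=
      mul_nonneg (pe_nonneg _ _)
        (mul_nonneg (qi_nonneg zero_le_one _ _) (qi_nonneg zero_le_one _ _))
    have n6 : 0 ≤ jc b x * (pe (1/2 - A) y * qi 1 (-B) z) :=
      mul_nonneg (jc_nonneg _ _) (mul_nonneg (pe_nonneg _ _) (qi_nonneg zero_le_one _ _))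
    have n7 : 0 ≤ qi b (-B) x * (pe (3/2 - A) y * qi 1 (-B) z) :=
      mul_nonneg (qi_nonneg hb0.le _ _)
        (mul_nonneg (pe_nonneg _ _) (qi_nonneg zero_le_one _ _))
    have n8 : 0 ≤ jc b x * (qi 1 (-B) y * qi 1 (-B) z) :=
      mul_nonneg (jc_nonneg _ _)
        (mul_nonneg (qi_nonneg zero_le_one _ _) (qi_nonneg zero_le_one _ _))
    have n9 : 0 ≤ qi b (-B) x * (jc b y * qi 1 (-B) z) :=
      mul_nonneg (qi_nonneg hb0.le _ _)
        (mul_nonneg (jc_nonneg _ _) (qi_nonneg zero_le_one _ _))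
    -- master bound
    have hmaster : |min (Real.sqrt x) (Real.sqrt y) * f x * f u * (f y + f z) * Φ| ≤
        K₀ * (min (Real.sqrt x) (Real.sqrt y) *
          ((x ^ (-A) + x ^ (-B)) * ((y ^ (-A) + y ^ (-B)) * ((z ^ (-A) + z ^ (-B)) * |Φ|)))) := by
      have e1 : |min (Real.sqrt x) (Real.sqrt y) * f x * f u * (f y + f z) * Φ|
          = min (Real.sqrt x) (Real.sqrt y) * (|f x| * (|f u| * (|f y + f z| * |Φ|))) := by
        rw [abs_mul, abs_mul, abs_mul, abs_mul, abs_of_nonneg hminnn]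
        ring
      rw [e1]
      have hfu : |f u| ≤ M * (2 ^ A * (z ^ (-A) + z ^ (-B))) := by
        refine (hfw u hu0).trans ?_
        have h2 := hw_anti (z/2) u (by linarith only [hz0]) huz2
        have h3 := hw_half z hz0
        exact mul_le_mul_of_nonneg_left (h2.trans h3) hM0
      have hfyz : |f y + f z| ≤ 2 * M * (y ^ (-A) + y ^ (-B)) := by
        have h1 := hfw y hy
        have h2 := hfw z hz0
        have h3 := hw_anti y z hy hyz.le
        have h4 : M * (z ^ (-A) + z ^ (-B)) ≤ M * (y ^ (-A) + y ^ (-B)) :=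
          mul_le_mul_of_nonneg_left h3 hM0
        calc |f y + f z| ≤ |f y| + |f z| := abs_add_le _ _
          _ ≤ M * (y ^ (-A) + y ^ (-B)) + M * (y ^ (-A) + y ^ (-B)) :=
            add_le_add h1 (h2.trans h4)
          _ = 2 * M * (y ^ (-A) + y ^ (-B)) := by ring
      calc min (Real.sqrt x) (Real.sqrt y) * (|f x| * (|f u| * (|f y + f z| * |Φ|)))
          ≤ min (Real.sqrt x) (Real.sqrt y) * ((M * (x ^ (-A) + x ^ (-B))) *
            ((M * (2 ^ A * (z ^ (-A) + z ^ (-B)))) * ((2 * M * (y ^ (-A) + y ^ (-B))) * |Φ|))) :=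
            mul5_le hminnn (abs_nonneg _) (abs_nonneg _) (abs_nonneg _) (abs_nonneg _)
              le_rfl (hfw x hx) hfu hfyz le_rfl
        _ = K₀ * (min (Real.sqrt x) (Real.sqrt y) *
            ((x ^ (-A) + x ^ (-B)) * ((y ^ (-A) + y ^ (-B)) * ((z ^ (-A) + z ^ (-B)) * |Φ|)))) := by
            rw [hK₀_def]; ring
    -- step helper
    have hwx_nonneg : (0:ℝ) ≤ x ^ (-A) + x ^ (-B) :=
      add_nonneg (Real.rpow_nonneg hx.le _) (Real.rpow_nonneg hx.le _)
    have hwy_nonneg : (0:ℝ) ≤ y ^ (-A) + y ^ (-B) :=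
      add_nonneg (Real.rpow_nonneg hy.le _) (Real.rpow_nonneg hy.le _)
    have hwz_nonneg : (0:ℝ) ≤ z ^ (-A) + z ^ (-B) :=
      add_nonneg (Real.rpow_nonneg hz0.le _) (Real.rpow_nonneg hz0.le _)
    have step : ∀ m' wx' wy' wz' p' : ℝ,
        min (Real.sqrt x) (Real.sqrt y) ≤ m' →
        x ^ (-A) + x ^ (-B) ≤ wx' → y ^ (-A) + y ^ (-B) ≤ wy' →
        z ^ (-A) + z ^ (-B) ≤ wz' → |Φ| ≤ p' →
        |min (Real.sqrt x) (Real.sqrt y) * f x * f u * (f y + f z) * Φ| ≤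
          K₀ * (m' * (wx' * (wy' * (wz' * p')))) := by
      intro m' wx' wy' wz' p' h1 h2 h3 h4 h5
      refine hmaster.trans ?_
      exact mul_le_mul_of_nonneg_left
        (mul5_le hminnn hwx_nonneg hwy_nonneg hwz_nonneg (abs_nonneg _) h1 h2 h3 h4 h5) hK₀0
    -- bounds on Φ
    have hΦ1 : |Φ| ≤ Λ := by
      have h1 := abs_le.1 (hφC x)
      have h2 := abs_le.1 (hφC y)
      have h3 := abs_le.1 (hφC z)
      have h4 := abs_le.1 (hφC u)
      have hLb : 0 ≤ L * b := mul_nonneg hL0 hb0.le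
      rw [hΦ_def, abs_le]
      constructor <;>
        linarith only [h1.1, h1.2, h2.1, h2.2, h3.1, h3.2, h4.1, h4.2, hLb, hΛ_def,
          hL0, hL₂0]
    have hΦ3 : |Φ| ≤ Λ * (z*z) := by
      have h1 := abs_le.1 (hφquad x hx.le)
      have h2 := abs_le.1 (hφquad y hy.le)
      have h3 := abs_le.1 (hφquad z hz0.le)
      have h4 := abs_le.1 (hφquad u hu0.le)
      have hx2 : x*x ≤ 4*(z*z) := by
        calc x*x ≤ (2*z)*(2*z) := mul_le_mul hx2z hx2z hx.le (by linarith only [hz0])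
          _ = 4*(z*z) := by ring
      have hu2 : u*u ≤ 4*(z*z) := by
        calc u*u ≤ (2*z)*(2*z) := mul_le_mul hu2z hu2z hu0.le (by linarith only [hz0])
          _ = 4*(z*z) := by ring
      have hy2 : y*y ≤ z*z := mul_le_mul hyz.le hyz.le hy.le hz0.le
      have c1 : L₂*(x*x) ≤ L₂*(4*(z*z)) := mul_le_mul_of_nonneg_left hx2 hL₂0
      have c2 : L₂*(u*u) ≤ L₂*(4*(z*z)) := mul_le_mul_of_nonneg_left hu2 hL₂0
      have c3 : L₂*(y*y) ≤ L₂*(z*z) := mul_le_mul_of_nonneg_left hy2 hL₂0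
      have hzz : (0:ℝ) ≤ z*z := mul_nonneg hz0.le hz0.le
      have hΛz : Λ*(z*z) = 2*(L*(z*z)) + 10*(L₂*(z*z)) + 4*((L*b)*(z*z)) + (z*z) := by
        rw [hΛ_def]; ring
      have d1 : 0 ≤ L*(z*z) := mul_nonneg hL0 hzz
      have d2 : 0 ≤ (L*b)*(z*z) := mul_nonneg (mul_nonneg hL0 hb0.le) hzz
      rw [hΦ_def, abs_le]
      constructor <;>
        linarith only [h1.1, h1.2, h2.1, h2.2, h3.1, h3.2, h4.1, h4.2, c1, c2, c3,
          hΛz, d1, d2, hzz]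
    have hΦ2 : |Φ| ≤ 2 * L * |y - x| := by
      have h1 := abs_le.1 (hLip y x)
      have h2' := hLip z u
      have hzu : |z - u| = |y - x| := by
        rw [hu_def, show z - (y + z - x) = -(y - x) by ring, abs_neg]
      rw [hzu] at h2'
      have h2 := abs_le.1 h2'
      rw [hΦ_def, abs_le]
      constructor <;> linarith only [h1.1, h1.2, h2.1, h2.2]
    -- splitting powers
    have hsx : ∀ e₁ e₂ : ℝ, x ^ (e₁ + e₂) = x ^ e₁ * x ^ e₂ := fun e₁ e₂ => Real.rpow_add hx _ _
    have hsy : ∀ e₁ e₂ : ℝ, y ^ (e₁ + e₂) = y ^ e₁ * y ^ e₂ := fun e₁ e₂ => Real.rpow_add hy _ _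
    have hsz : ∀ e₁ e₂ : ℝ, z ^ (e₁ + e₂) = z ^ e₁ * z ^ e₂ := fun e₁ e₂ => Real.rpow_add hz0 _ _
    have hmsx : min (Real.sqrt x) (Real.sqrt y) ≤ x ^ ((1:ℝ)/2) := by
      rw [← Real.sqrt_eq_rpow]; exact min_le_left _ _
    have hmsy : min (Real.sqrt x) (Real.sqrt y) ≤ y ^ ((1:ℝ)/2) := by
      rw [← Real.sqrt_eq_rpow]; exact min_le_right _ _
    -- interpolation for Φ
    have hinterp : ∀ s : ℝ, 0 ≤ s → |Φ| ≤ Λ * s →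
        |Φ| ≤ Λ * (s ^ ((3:ℝ)/4) * z ^ ((1:ℝ)/2)) := by
      intro s hs h1
      have h := interp34 (mul_nonneg hΛ0.le hs) h1 hΦ3
      refine h.trans (le_of_eq ?_)
      rw [Real.mul_rpow hΛ0.le hs, Real.mul_rpow hΛ0.le (mul_nonneg hz0.le hz0.le),
        show z*z = z ^ (2:ℝ) by rw [Real.rpow_two]; ring,
        ← Real.rpow_mul hz0.le]
      have hΛsplit : Λ ^ ((3:ℝ)/4) * Λ ^ ((1:ℝ)/4) = Λ := by
        rw [← Real.rpow_add hΛ0]; norm_num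
      calc Λ ^ ((3:ℝ)/4) * s ^ ((3:ℝ)/4) * (Λ ^ ((1:ℝ)/4) * z ^ (2 * ((1:ℝ)/4)))
          = (Λ ^ ((3:ℝ)/4) * Λ ^ ((1:ℝ)/4)) * (s ^ ((3:ℝ)/4) * z ^ (2 * ((1:ℝ)/4))) := by ring
        _ = Λ * (s ^ ((3:ℝ)/4) * z ^ ((1:ℝ)/2)) := by rw [hΛsplit]; norm_num
    -- constants
    have hΛK : (0:ℝ) ≤ Λ * K₀ := mul_nonneg hΛ0.le hK₀0
    have hbΛK : (0:ℝ) ≤ b * (Λ * K₀) := mul_nonneg hb0.le hΛK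
    have hK125 : 125 * Λ * K₀ ≤ K := by rw [hK_def]; linarith only [hΛK, hbΛK]
    have hK50 : 50 * Λ * K₀ ≤ K := by rw [hK_def]; linarith only [hΛK, hbΛK]
    have hK20 : 20 * Λ * K₀ ≤ K := by rw [hK_def]; linarith only [hΛK, hbΛK]
    have hK8b : 8 * b * Λ * K₀ ≤ K := by rw [hK_def]; linarith only [hΛK, hbΛK]
    -- Lipschitz-type bounds on Φ used in several regions
    have hΛy : Λ * y = 2*(L*y) + 10*(L₂*y) + 4*((L*b)*y) + y := by rw [hΛ_def]; ring
    have hΛx : Λ * x = 2*(L*x) + 10*(L₂*x) + 4*((L*b)*x) + x := by rw [hΛ_def]; ring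
    have dLy : 0 ≤ L*y := mul_nonneg hL0 hy.le
    have dLx : 0 ≤ L*x := mul_nonneg hL0 hx.le
    have dL2y : 0 ≤ L₂*y := mul_nonneg hL₂0 hy.le
    have dL2x : 0 ≤ L₂*x := mul_nonneg hL₂0 hx.le
    have dLby : 0 ≤ (L*b)*y := mul_nonneg (mul_nonneg hL0 hb0.le) hy.le
    have dLbx : 0 ≤ (L*b)*x := mul_nonneg (mul_nonneg hL0 hb0.le) hx.le
    -- the case analysis
    rcases le_or_gt z 1 with hz2 | hz2
    · -- z ≤ 1 : all variables small
      have hy2 : y ≤ 2 := by linarith only [hyz, hz2]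
      have hx2 : x ≤ 2 := by linarith only [hxu, hu_def, hyz, hz2, hy]
      have hz2' : z ≤ 2 := by linarith only [hz2]
      have hvz1 : pe (1/2 - A) z = z ^ (1/2 - A) := pe_apply hz0 hz2'
      rcases le_total x y with hxy | hyx
      · -- region T1
        have hΦy : |Φ| ≤ Λ * y := by
          have h2 := hΦ2
          rw [abs_of_nonneg (by linarith only [hxy] : (0:ℝ) ≤ y - x)] at h2
          linarith only [h2, dLx, dL2y, dLby, hy, hΛy]
        have hΦi := hinterp y hy.le hΦy
        have hstep := step (x ^ ((1:ℝ)/2)) (5 * x^(-A)) (5 * y^(-A)) (5 * z^(-A))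
          (Λ * (y ^ ((3:ℝ)/4) * z ^ ((1:ℝ)/2))) hmsx (hw5 x hx hx2) (hw5 y hy hy2)
          (hw5 z hz0 hz2') hΦi
        have heq : K₀ * (x ^ ((1:ℝ)/2) * (5 * x^(-A) * (5 * y^(-A) * (5 * z^(-A) *
            (Λ * (y ^ ((3:ℝ)/4) * z ^ ((1:ℝ)/2))))))) =
            (125 * Λ * K₀) * (x ^ (1/2 - A) * (y ^ (3/4 - A) * z ^ (1/2 - A))) := by
          rw [show (1/2 - A : ℝ) = (1:ℝ)/2 + (-A) by ring,
            show (3/4 - A : ℝ) = (3:ℝ)/4 + (-A) by ring, hsx, hsy, hsz]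
          ring
        have hpow : (0:ℝ) ≤ x ^ (1/2 - A) * (y ^ (3/4 - A) * z ^ (1/2 - A)) :=
          mul_nonneg (Real.rpow_nonneg hx.le _)
            (mul_nonneg (Real.rpow_nonneg hy.le _) (Real.rpow_nonneg hz0.le _))
        have hmain := (hstep.trans_eq heq).trans (mul_le_mul_of_nonneg_right hK125 hpow)
        calc |min (Real.sqrt x) (Real.sqrt y) * f x * f u * (f y + f z) * Φ|
            ≤ K * (x ^ (1/2 - A) * (y ^ (3/4 - A) * z ^ (1/2 - A))) := hmain
          _ = K * (pe (1/2 - A) x * (pe (3/4 - A) y * pe (1/2 - A) z)) := by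
              rw [pe_apply hx hx2, pe_apply hy hy2, hvz1]
          _ ≤ _ := mul_le_mul_of_nonneg_left
              (by linarith only [n2, n3, n4, n5, n6, n7, n8, n9]) hK0
      · -- region T2
        have hΦx : |Φ| ≤ Λ * x := by
          have h2 := hΦ2
          rw [abs_of_nonpos (by linarith only [hyx] : y - x ≤ 0)] at h2
          linarith only [h2, dLy, dL2x, dLbx, hx, hΛx]
        have hΦi := hinterp x hx.le hΦx
        have hstep := step (y ^ ((1:ℝ)/2)) (5 * x^(-A)) (5 * y^(-A)) (5 * z^(-A))
          (Λ * (x ^ ((3:ℝ)/4) * z ^ ((1:ℝ)/2))) hmsy (hw5 x hx hx2) (hw5 y hy hy2)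
          (hw5 z hz0 hz2') hΦi
        have heq : K₀ * (y ^ ((1:ℝ)/2) * (5 * x^(-A) * (5 * y^(-A) * (5 * z^(-A) *
            (Λ * (x ^ ((3:ℝ)/4) * z ^ ((1:ℝ)/2))))))) =
            (125 * Λ * K₀) * (x ^ (3/4 - A) * (y ^ (1/2 - A) * z ^ (1/2 - A))) := by
          rw [show (1/2 - A : ℝ) = (1:ℝ)/2 + (-A) by ring,
            show (3/4 - A : ℝ) = (3:ℝ)/4 + (-A) by ring, hsx, hsy, hsz]
          ring
        have hpow : (0:ℝ) ≤ x ^ (3/4 - A) * (y ^ (1/2 - A) * z ^ (1/2 - A)) :=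
          mul_nonneg (Real.rpow_nonneg hx.le _)
            (mul_nonneg (Real.rpow_nonneg hy.le _) (Real.rpow_nonneg hz0.le _))
        have hmain := (hstep.trans_eq heq).trans (mul_le_mul_of_nonneg_right hK125 hpow)
        calc |min (Real.sqrt x) (Real.sqrt y) * f x * f u * (f y + f z) * Φ|
            ≤ K * (x ^ (3/4 - A) * (y ^ (1/2 - A) * z ^ (1/2 - A))) := hmain
          _ = K * (pe (3/4 - A) x * (pe (1/2 - A) y * pe (1/2 - A) z)) := by
              rw [pe_apply hx hx2, pe_apply hy hy2, hvz1]
          _ ≤ _ := mul_le_mul_of_nonneg_left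
              (by linarith only [n1, n3, n4, n5, n6, n7, n8, n9]) hK0
    · -- z > 1
      have hqz : qi 1 (-B) z = z ^ (-B) := qi_apply hz2
      have hwz := hw2B z hz2.le
      rcases le_or_gt x 1 with hx1 | hx1
      · rcases le_or_gt y 1 with hy1 | hy1
        · -- x ≤ 1, y ≤ 1 < z
          rcases le_total x y with hxy | hyx
          · -- region T3
            have hΦy : |Φ| ≤ Λ * y := by
              have h2 := hΦ2
              rw [abs_of_nonneg (by linarith only [hxy] : (0:ℝ) ≤ y - x)] at h2
              linarith only [h2, dLx, dL2y, dLby, hy, hΛy]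
            have hstep := step (x ^ ((1:ℝ)/2)) (5 * x^(-A)) (5 * y^(-A)) (2 * z^(-B))
              (Λ * y) hmsx (hw5 x hx (by linarith only [hx1])) (hw5 y hy (by linarith only [hy1])) hwz hΦy
            have heq : K₀ * (x ^ ((1:ℝ)/2) * (5 * x^(-A) * (5 * y^(-A) * (2 * z^(-B) *
                (Λ * y))))) =
                (50 * Λ * K₀) * (x ^ (1/2 - A) * (y ^ (1 - A) * z ^ (-B))) := by
              rw [show (1/2 - A : ℝ) = (1:ℝ)/2 + (-A) by ring,
                show (1 - A : ℝ) = (1:ℝ) + (-A) by ring, hsx, hsy, Real.rpow_one]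
              ring
            have hpow : (0:ℝ) ≤ x ^ (1/2 - A) * (y ^ (1 - A) * z ^ (-B)) :=
              mul_nonneg (Real.rpow_nonneg hx.le _)
                (mul_nonneg (Real.rpow_nonneg hy.le _) (Real.rpow_nonneg hz0.le _))
            have hmain := (hstep.trans_eq heq).trans (mul_le_mul_of_nonneg_right hK50 hpow)
            calc |min (Real.sqrt x) (Real.sqrt y) * f x * f u * (f y + f z) * Φ|
                ≤ K * (x ^ (1/2 - A) * (y ^ (1 - A) * z ^ (-B))) := hmain
              _ = K * (pe (1/2 - A) x * (pe (1 - A) y * qi 1 (-B) z)) := by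
                  rw [pe_apply hx (by linarith only [hx1]), pe_apply hy (by linarith only [hy1]), hqz]
              _ ≤ _ := mul_le_mul_of_nonneg_left
                  (by linarith only [n1, n2, n4, n5, n6, n7, n8, n9]) hK0
          · -- region T4
            have hΦx : |Φ| ≤ Λ * x := by
              have h2 := hΦ2
              rw [abs_of_nonpos (by linarith only [hyx] : y - x ≤ 0)] at h2
              linarith only [h2, dLy, dL2x, dLbx, hx, hΛx]
            have hstep := step (y ^ ((1:ℝ)/2)) (5 * x^(-A)) (5 * y^(-A)) (2 * z^(-B))
              (Λ * x) hmsy (hw5 x hx (by linarith only [hx1])) (hw5 y hy (by linarith only [hy1])) hwz hΦx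
            have heq : K₀ * (y ^ ((1:ℝ)/2) * (5 * x^(-A) * (5 * y^(-A) * (2 * z^(-B) *
                (Λ * x))))) =
                (50 * Λ * K₀) * (x ^ (1 - A) * (y ^ (1/2 - A) * z ^ (-B))) := by
              rw [show (1/2 - A : ℝ) = (1:ℝ)/2 + (-A) by ring,
                show (1 - A : ℝ) = (1:ℝ) + (-A) by ring, hsx, hsy, Real.rpow_one]
              ring
            have hpow : (0:ℝ) ≤ x ^ (1 - A) * (y ^ (1/2 - A) * z ^ (-B)) :=
              mul_nonneg (Real.rpow_nonneg hx.le _)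
                (mul_nonneg (Real.rpow_nonneg hy.le _) (Real.rpow_nonneg hz0.le _))
            have hmain := (hstep.trans_eq heq).trans (mul_le_mul_of_nonneg_right hK50 hpow)
            calc |min (Real.sqrt x) (Real.sqrt y) * f x * f u * (f y + f z) * Φ|
                ≤ K * (x ^ (1 - A) * (y ^ (1/2 - A) * z ^ (-B))) := hmain
              _ = K * (pe (1 - A) x * (pe (1/2 - A) y * qi 1 (-B) z)) := by
                  rw [pe_apply hx (by linarith only [hx1]), pe_apply hy (by linarith only [hy1]), hqz]
              _ ≤ _ := mul_le_mul_of_nonneg_left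
                  (by linarith only [n1, n2, n3, n5, n6, n7, n8, n9]) hK0
        · -- region T5 : x ≤ 1 < y
          have hqy : qi 1 (-B) y = y ^ (-B) := qi_apply hy1
          have hstep := step (x ^ ((1:ℝ)/2)) (5 * x^(-A)) (2 * y^(-B)) (2 * z^(-B))
            Λ hmsx (hw5 x hx (by linarith only [hx1])) (hw2B y hy1.le) hwz hΦ1
          have heq : K₀ * (x ^ ((1:ℝ)/2) * (5 * x^(-A) * (2 * y^(-B) * (2 * z^(-B) * Λ)))) =
              (20 * Λ * K₀) * (x ^ (1/2 - A) * (y ^ (-B) * z ^ (-B))) := by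
            rw [show (1/2 - A : ℝ) = (1:ℝ)/2 + (-A) by ring, hsx]
            ring
          have hpow : (0:ℝ) ≤ x ^ (1/2 - A) * (y ^ (-B) * z ^ (-B)) :=
            mul_nonneg (Real.rpow_nonneg hx.le _)
              (mul_nonneg (Real.rpow_nonneg hy.le _) (Real.rpow_nonneg hz0.le _))
          have hmain := (hstep.trans_eq heq).trans (mul_le_mul_of_nonneg_right hK20 hpow)
          calc |min (Real.sqrt x) (Real.sqrt y) * f x * f u * (f y + f z) * Φ|
              ≤ K * (x ^ (1/2 - A) * (y ^ (-B) * z ^ (-B))) := hmain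
            _ = K * (pe (1/2 - A) x * (qi 1 (-B) y * qi 1 (-B) z)) := by
                rw [pe_apply hx (by linarith only [hx1]), hqy, hqz]
            _ ≤ _ := mul_le_mul_of_nonneg_left
                (by linarith only [n1, n2, n3, n4, n6, n7, n8, n9]) hK0
      · -- x > 1
        rcases le_or_gt y 1 with hy1 | hy1
        · -- y ≤ 1 < x
          rcases le_or_gt x b with hxb | hxb
          · -- region T6
            have hjx : jc b x = 1 := jc_apply hx1 hxb
            have hstep := step (y ^ ((1:ℝ)/2)) 2 (5 * y^(-A)) (2 * z^(-B))
              Λ hmsy (hw2 x hx1.le) (hw5 y hy (by linarith only [hy1])) hwz hΦ1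
            have heq : K₀ * (y ^ ((1:ℝ)/2) * (2 * (5 * y^(-A) * (2 * z^(-B) * Λ)))) =
                (20 * Λ * K₀) * (1 * (y ^ (1/2 - A) * z ^ (-B))) := by
              rw [show (1/2 - A : ℝ) = (1:ℝ)/2 + (-A) by ring, hsy]
              ring
            have hpow : (0:ℝ) ≤ 1 * (y ^ (1/2 - A) * z ^ (-B)) := by
              rw [one_mul]
              exact mul_nonneg (Real.rpow_nonneg hy.le _) (Real.rpow_nonneg hz0.le _)
            have hmain := (hstep.trans_eq heq).trans (mul_le_mul_of_nonneg_right hK20 hpow)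
            calc |min (Real.sqrt x) (Real.sqrt y) * f x * f u * (f y + f z) * Φ|
                ≤ K * (1 * (y ^ (1/2 - A) * z ^ (-B))) := hmain
              _ = K * (jc b x * (pe (1/2 - A) y * qi 1 (-B) z)) := by
                  rw [hjx, pe_apply hy (by linarith only [hy1]), hqz]
              _ ≤ _ := mul_le_mul_of_nonneg_left
                  (by linarith only [n1, n2, n3, n4, n5, n7, n8, n9]) hK0
          · -- region T7 : b < x
            have hφx0 : φ x = 0 := hφb x hxb
            have hφu0 : φ u = 0 := hφb u (by linarith only [hxb, hxu])
            have hφz0 : φ z = 0 := by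
              by_contra h
              have hzb : z ≤ b := by
                by_contra h2
                exact h (hφb z (not_le.mp h2))
              linarith only [hzb, hy1, hb1, hxb, hxu, hu_def]
            have hΦly : |Φ| ≤ Λ * y := by
              rw [hΦ_def, hφx0, hφu0, hφz0]
              simp only [add_zero, sub_zero]
              have h := hφlin y hy.le
              linarith only [h, dL2y, dLby, hy, dLy, hΛy]
            have hqx : qi b (-B) x = x ^ (-B) := qi_apply hxb
            have hstep := step (y ^ ((1:ℝ)/2)) (2 * x^(-B)) (5 * y^(-A)) (2 * z^(-B))
              (Λ * y) hmsy (hw2B x (by linarith only [hxb, hb1])) (hw5 y hy (by linarith only [hy1])) hwz hΦly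
            have heq : K₀ * (y ^ ((1:ℝ)/2) * (2 * x^(-B) * (5 * y^(-A) * (2 * z^(-B) *
                (Λ * y))))) =
                (20 * Λ * K₀) * (x ^ (-B) * (y ^ (3/2 - A) * z ^ (-B))) := by
              rw [show (3/2 - A : ℝ) = (1:ℝ)/2 + (-A + 1) by ring, hsy, hsy, Real.rpow_one]
              ring
            have hpow : (0:ℝ) ≤ x ^ (-B) * (y ^ (3/2 - A) * z ^ (-B)) :=
              mul_nonneg (Real.rpow_nonneg hx.le _)
                (mul_nonneg (Real.rpow_nonneg hy.le _) (Real.rpow_nonneg hz0.le _))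
            have hmain := (hstep.trans_eq heq).trans (mul_le_mul_of_nonneg_right hK20 hpow)
            calc |min (Real.sqrt x) (Real.sqrt y) * f x * f u * (f y + f z) * Φ|
                ≤ K * (x ^ (-B) * (y ^ (3/2 - A) * z ^ (-B))) := hmain
              _ = K * (qi b (-B) x * (pe (3/2 - A) y * qi 1 (-B) z)) := by
                  rw [hqx, pe_apply hy (by linarith only [hy1]), hqz]
              _ ≤ _ := mul_le_mul_of_nonneg_left
                  (by linarith only [n1, n2, n3, n4, n5, n6, n8, n9]) hK0
        · -- 1 < x, 1 < y
          have hqy : qi 1 (-B) y = y ^ (-B) := qi_apply hy1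
          rcases le_or_gt x b with hxb | hxb
          · -- region T8
            have hjx : jc b x = 1 := jc_apply hx1 hxb
            have hbb : b ≤ b*b := by
              have h := mul_nonneg (show (0:ℝ) ≤ b - 1 by linarith only [hb1]) hb0.le
              linarith only [h]
            have hminb : min (Real.sqrt x) (Real.sqrt y) ≤ b := by
              refine (min_le_left _ _).trans ?_
              rw [show b = Real.sqrt (b^2) by rw [Real.sqrt_sq hb0.le]]
              apply Real.sqrt_le_sqrt
              linarith only [hxb, hbb]
            have hstep := step b 2 (2 * y^(-B)) (2 * z^(-B))
              Λ hminb (hw2 x hx1.le) (hw2B y hy1.le) hwz hΦ1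
            have heq : K₀ * (b * (2 * (2 * y^(-B) * (2 * z^(-B) * Λ)))) =
                (8 * b * Λ * K₀) * (1 * (y ^ (-B) * z ^ (-B))) := by ring
            have hpow : (0:ℝ) ≤ 1 * (y ^ (-B) * z ^ (-B)) := by
              rw [one_mul]
              exact mul_nonneg (Real.rpow_nonneg hy.le _) (Real.rpow_nonneg hz0.le _)
            have hmain := (hstep.trans_eq heq).trans (mul_le_mul_of_nonneg_right hK8b hpow)
            calc |min (Real.sqrt x) (Real.sqrt y) * f x * f u * (f y + f z) * Φ|
                ≤ K * (1 * (y ^ (-B) * z ^ (-B))) := hmain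
              _ = K * (jc b x * (qi 1 (-B) y * qi 1 (-B) z)) := by
                  rw [hjx, hqy, hqz]
              _ ≤ _ := mul_le_mul_of_nonneg_left
                  (by linarith only [n1, n2, n3, n4, n5, n6, n7, n9]) hK0
          · -- b < x
            rcases le_or_gt y b with hyb | hyb
            · -- region T9
              have hφx0 : φ x = 0 := hφb x hxb
              have hφu0 : φ u = 0 := hφb u (by linarith only [hxb, hxu])
              have hφz0 : φ z = 0 := by
                by_contra h
                have hzb : z ≤ b := by
                  by_contra h2
                  exact h (hφb z (not_le.mp h2))
                linarith only [hzb, hyb, hxb, hxu, hu_def]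
              have hΦv : |Φ| ≤ Λ := by
                rw [hΦ_def, hφx0, hφu0, hφz0]
                simp only [add_zero, sub_zero]
                have h := hφC y
                linarith only [h, hL0, hL₂0, mul_nonneg hL0 hb0.le, hΛ_def]
              have hqx : qi b (-B) x = x ^ (-B) := qi_apply hxb
              have hjy : jc b y = 1 := jc_apply hy1 hyb
              have hbb : b ≤ b*b := by
                have h := mul_nonneg (show (0:ℝ) ≤ b - 1 by linarith only [hb1]) hb0.le
                linarith only [h]
              have hminb : min (Real.sqrt x) (Real.sqrt y) ≤ b := by
                refine (min_le_right _ _).trans ?_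
                rw [show b = Real.sqrt (b^2) by rw [Real.sqrt_sq hb0.le]]
                apply Real.sqrt_le_sqrt
                linarith only [hyb, hbb]
              have hstep := step b (2 * x^(-B)) 2 (2 * z^(-B))
                Λ hminb (hw2B x (by linarith only [hxb, hb1])) (hw2 y hy1.le) hwz hΦv
              have heq : K₀ * (b * (2 * x^(-B) * (2 * (2 * z^(-B) * Λ)))) =
                  (8 * b * Λ * K₀) * (x ^ (-B) * (1 * z ^ (-B))) := by ring
              have hpow : (0:ℝ) ≤ x ^ (-B) * (1 * z ^ (-B)) := by
                rw [one_mul]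
                exact mul_nonneg (Real.rpow_nonneg hx.le _) (Real.rpow_nonneg hz0.le _)
              have hmain := (hstep.trans_eq heq).trans (mul_le_mul_of_nonneg_right hK8b hpow)
              calc |min (Real.sqrt x) (Real.sqrt y) * f x * f u * (f y + f z) * Φ|
                  ≤ K * (x ^ (-B) * (1 * z ^ (-B))) := hmain
                _ = K * (qi b (-B) x * (jc b y * qi 1 (-B) z)) := by
                    rw [hqx, hjy, hqz]
                _ ≤ _ := mul_le_mul_of_nonneg_left
                    (by linarith only [n1, n2, n3, n4, n5, n6, n7, n8]) hK0
            · -- all variables above b : the test function factor vanishes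
              have hΦ0 : Φ = 0 := by
                rw [hΦ_def, hφb x hxb, hφb u (by linarith only [hxb, hxu]), hφb y hyb,
                  hφb z (by linarith only [hyb, hyz])]
                ring
              rw [hΦ0, mul_zero, abs_zero]
              exact mul_nonneg hK0
                (by linarith only [n1, n2, n3, n4, n5, n6, n7, n8, n9])
  -- measurability of the domain
  have hD : MeasurableSet {q : ℝ × ℝ × ℝ |
      0 < q.1 ∧ 0 < q.2.1 ∧ q.2.1 < q.2.2 ∧ q.1 < q.2.1 + q.2.2 - q.1} := by
    have hmx : Measurable fun q : ℝ × ℝ × ℝ => q.1 := measurable_fst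
    have hmy : Measurable fun q : ℝ × ℝ × ℝ => q.2.1 := measurable_fst.comp measurable_snd
    have hmz : Measurable fun q : ℝ × ℝ × ℝ => q.2.2 := measurable_snd.comp measurable_snd
    exact (measurableSet_lt measurable_const hmx).inter
      ((measurableSet_lt measurable_const hmy).inter
        ((measurableSet_lt hmy hmz).inter
          (measurableSet_lt hmx ((hmy.add hmz).sub hmx))))
  -- measurability of the integrand
  have hFm : Measurable (fun q : ℝ × ℝ × ℝ =>
      min (Real.sqrt q.1) (Real.sqrt q.2.1) * f q.1 * f (q.2.1 + q.2.2 - q.1) *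
        (f q.2.1 + f q.2.2) * (φ q.2.1 + φ q.2.2 - φ q.1 - φ (q.2.1 + q.2.2 - q.1))) := by
    have hmx : Measurable fun q : ℝ × ℝ × ℝ => q.1 := measurable_fst
    have hmy : Measurable fun q : ℝ × ℝ × ℝ => q.2.1 := measurable_fst.comp measurable_snd
    have hmz : Measurable fun q : ℝ × ℝ × ℝ => q.2.2 := measurable_snd.comp measurable_snd
    have hmu : Measurable fun q : ℝ × ℝ × ℝ => q.2.1 + q.2.2 - q.1 := (hmy.add hmz).sub hmx
    have hφm : Measurable φ := hφ.continuous.measurable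
    exact (((((Real.continuous_sqrt.measurable.comp hmx).min
      (Real.continuous_sqrt.measurable.comp hmy)).mul (hfm.comp hmx)).mul
      (hfm.comp hmu)).mul ((hfm.comp hmy).add (hfm.comp hmz))).mul
      ((((hφm.comp hmy).add (hφm.comp hmz)).sub (hφm.comp hmx)).sub (hφm.comp hmu))
  -- the dominating function is integrable
  have hGint : Integrable (fun q : ℝ × ℝ × ℝ =>
      K * (pe (1/2 - A) q.1 * (pe (3/4 - A) q.2.1 * pe (1/2 - A) q.2.2)
        + pe (3/4 - A) q.1 * (pe (1/2 - A) q.2.1 * pe (1/2 - A) q.2.2)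
        + pe (1/2 - A) q.1 * (pe (1 - A) q.2.1 * qi 1 (-B) q.2.2)
        + pe (1 - A) q.1 * (pe (1/2 - A) q.2.1 * qi 1 (-B) q.2.2)
        + pe (1/2 - A) q.1 * (qi 1 (-B) q.2.1 * qi 1 (-B) q.2.2)
        + jc b q.1 * (pe (1/2 - A) q.2.1 * qi 1 (-B) q.2.2)
        + qi b (-B) q.1 * (pe (3/2 - A) q.2.1 * qi 1 (-B) q.2.2)
        + jc b q.1 * (qi 1 (-B) q.2.1 * qi 1 (-B) q.2.2)
        + qi b (-B) q.1 * (jc b q.2.1 * qi 1 (-B) q.2.2))) := by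
    have he1 : (-1:ℝ) < 1/2 - A := by linarith only [hA2]
    have he2 : (-1:ℝ) < 3/4 - A := by linarith only [hA2]
    have he3 : (-1:ℝ) < 1 - A := by linarith only [hA2]
    have he4 : (-1:ℝ) < 3/2 - A := by linarith only [hA2]
    have hqB : (-B:ℝ) < -1 := by linarith only [hB1]
    apply Integrable.const_mul
    exact ((((((((int_triple (pe_int he1) (pe_int he2) (pe_int he1)).add
      (int_triple (pe_int he2) (pe_int he1) (pe_int he1))).add
      (int_triple (pe_int he1) (pe_int he3) (qi_int one_pos hqB))).add
      (int_triple (pe_int he3) (pe_int he1) (qi_int one_pos hqB))).add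
      (int_triple (pe_int he1) (qi_int one_pos hqB) (qi_int one_pos hqB))).add
      (int_triple (jc_int b) (pe_int he1) (qi_int one_pos hqB))).add
      (int_triple (qi_int hb0 hqB) (pe_int he4) (qi_int one_pos hqB))).add
      (int_triple (jc_int b) (qi_int one_pos hqB) (qi_int one_pos hqB))).add
      (int_triple (qi_int hb0 hqB) (jc_int b) (qi_int one_pos hqB))
  -- conclude
  refine Integrable.mono' hGint.integrableOn hFm.aestronglyMeasurable ?_
  rw [ae_restrict_iff' hD]
  refine Filter.Eventually.of_forall ?_
  rintro ⟨x, y, z⟩ hq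
  obtain ⟨hx, hy, hyz, hxu⟩ := hq
  rw [Real.norm_eq_abs]
  exact key x y z hx hy hyz hxu
end

section
/- Suppose f ∈ E_{7/6,7/6}, i.e. sup_{ω>0} ω^{7/6}|f(ω)| < ∞. Then the mass flux satisfies ‖J_M(f)‖_{L^∞(0,∞)} ≤ C ‖f‖_{7/6,7/6}³ and the energy flux satisfies ‖ω^{-1} J_E(f)‖_{L^∞(0,∞)} ≤ C ‖f‖_{7/6,7/6}³ for a universal constant C. -/
open MeasureTheory Set

/-- Generic flux integral: integrand √ω₁ W f₁ f₂ f₃ over a region S of (ω₁,ω₂,ω₃),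
with ω₄ = ω₁+ω₂−ω₃. -/
noncomputable def Jint (f : ℝ → ℝ) (S : Set (ℝ × ℝ × ℝ)) : ℝ :=
  ∫ q in S, Real.sqrt q.1 * W q.1 q.2.1 q.2.2 (q.1 + q.2.1 - q.2.2) *
    f q.1 * f q.2.1 * f q.2.2

/-- Region of J₁(f)(ω). -/
def S1 (ω : ℝ) : Set (ℝ × ℝ × ℝ) :=
  {q | 0 < q.1 ∧ 0 < q.2.1 ∧ q.2.1 < ω ∧ ω < q.2.2 ∧ q.2.2 < q.1 + q.2.1}

/-- Region of J₂(f)(ω). -/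
def S2 (ω : ℝ) : Set (ℝ × ℝ × ℝ) :=
  {q | 0 < q.1 ∧ q.1 < ω ∧ ω - q.1 < q.2.1 ∧ 0 < q.2.2 ∧ q.2.2 < q.1 + q.2.1 - ω}

/-- Region of J₃(f)(ω). -/
def S3 (ω : ℝ) : Set (ℝ × ℝ × ℝ) :=
  {q | 0 < q.1 ∧ ω < q.2.1 ∧ 0 < q.2.2 ∧ q.2.2 < ω}

/-- Region of J₄(f)(ω). -/
def S4 (ω : ℝ) : Set (ℝ × ℝ × ℝ) :=
  {q | ω < q.1 ∧ 0 < q.2.1 ∧ q.1 + q.2.1 - ω < q.2.2 ∧ q.2.2 < q.1 + q.2.1}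

/-- The mass flux J_M = J₁ + J₂ − J₃ − J₄. -/
noncomputable def JM (f : ℝ → ℝ) (ω : ℝ) : ℝ :=
  Jint f (S1 ω) + Jint f (S2 ω) - Jint f (S3 ω) - Jint f (S4 ω)

/-- The energy flux J_E(f)(ω) = ω J_M(f)(ω) − ∫₀^ω J_M(f)(σ) dσ. -/
noncomputable def JE (f : ℝ → ℝ) (ω : ℝ) : ℝ :=
  ω * JM f ω - ∫ σ in Set.Ioo (0:ℝ) ω, JM f σ

/-!
By `|f ω| ≤ M ω^(-7/6)`, the integrand of each of the four flux integrals is bounded by `M³`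
times `fluxMajorant q = min(√ω₁, √ω₂, √ω₃, √ω₄) (ω₁ω₂ω₃)^(-7/6)`, which is homogeneous of
degree `-3`. Each region scales linearly with `ω`, so the integral of the majorant over it does
not depend on `ω`, and it only remains to see that it is finite. This is the locality of the
fluxes: cut the region into boxes in which every frequency is either bounded above or bounded
away from `0`, and distribute the degree `1/2` of the minimum among the frequencies, more than
`1/6` to each bounded one and nothing to the others; the majorant is then dominated by a product
of integrable one-dimensional powers. The energy flux bound follows by integrating the mass flux
bound over `(0, ω)`.
-/

open scoped Pointwise

noncomputable def minSqrt (q : ℝ × ℝ × ℝ) : ℝ :=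
  min (min (Real.sqrt q.1) (Real.sqrt q.2.1))
    (min (Real.sqrt q.2.2) (Real.sqrt (q.1 + q.2.1 - q.2.2)))

noncomputable def fluxMajorant (q : ℝ × ℝ × ℝ) : ℝ :=
  minSqrt q * (q.1 ^ (-(7/6 : ℝ)) * q.2.1 ^ (-(7/6 : ℝ)) * q.2.2 ^ (-(7/6 : ℝ)))

def posOctant : Set (ℝ × ℝ × ℝ) := Ioi 0 ×ˢ Ioi 0 ×ˢ Ioi 0

lemma sqrt_mul_W {a : ℝ} (ha : 0 < a) (b c : ℝ) :
    Real.sqrt a * W a b c (a + b - c) = minSqrt (a, b, c) := by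
  rw [W, mul_div_cancel₀ _ (Real.sqrt_pos.2 ha).ne', minSqrt]

lemma minSqrt_nonneg (q : ℝ × ℝ × ℝ) : 0 ≤ minSqrt q :=
  le_min (le_min (Real.sqrt_nonneg _) (Real.sqrt_nonneg _))
    (le_min (Real.sqrt_nonneg _) (Real.sqrt_nonneg _))

lemma minSqrt_smul {c : ℝ} (hc : 0 ≤ c) (q : ℝ × ℝ × ℝ) :
    minSqrt (c • q) = Real.sqrt c * minSqrt q := by
  simp only [minSqrt, Prod.smul_fst, Prod.smul_snd, smul_eq_mul, ← mul_add, ← mul_sub,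
    Real.sqrt_mul hc, mul_min_of_nonneg _ _ (Real.sqrt_nonneg c)]

lemma minSqrt_le_rpow {q : ℝ × ℝ × ℝ} (hq : q ∈ posOctant) {s₁ s₂ s₃ : ℝ}
    (hs₁ : 0 ≤ s₁) (hs₂ : 0 ≤ s₂) (hs₃ : 0 ≤ s₃) (hs : s₁ + s₂ + s₃ = 1 / 2) :
    minSqrt q ≤ q.1 ^ s₁ * q.2.1 ^ s₂ * q.2.2 ^ s₃ := by
  obtain ⟨ha, hb, hc⟩ : 0 < q.1 ∧ 0 < q.2.1 ∧ 0 < q.2.2 := hq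
  rcases (minSqrt_nonneg q).eq_or_lt with h0 | hpos
  · rw [← h0]; positivity
  have hsqrt : ∀ {x : ℝ}, 0 < x → ∀ s : ℝ, x ^ s = Real.sqrt x ^ (2 * s) := fun hx s => by
    rw [Real.sqrt_eq_rpow, ← Real.rpow_mul hx.le]; ring_nf
  have hm : minSqrt q = minSqrt q ^ (2 * s₁) * minSqrt q ^ (2 * s₂) * minSqrt q ^ (2 * s₃) := by
    rw [← Real.rpow_add hpos, ← Real.rpow_add hpos, ← mul_add, ← mul_add, hs]; norm_num
  rw [hm, hsqrt ha, hsqrt hb, hsqrt hc]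
  have hle : minSqrt q ≤ Real.sqrt q.1 ∧ minSqrt q ≤ Real.sqrt q.2.1 ∧
      minSqrt q ≤ Real.sqrt q.2.2 := by
    unfold minSqrt; exact ⟨by simp, by simp, by simp⟩
  gcongr
  exacts [hle.1, hle.2.1, hle.2.2]

lemma fluxMajorant_nonneg {q : ℝ × ℝ × ℝ} (hq : q ∈ posOctant) : 0 ≤ fluxMajorant q := by
  obtain ⟨ha, hb, hc⟩ : 0 < q.1 ∧ 0 < q.2.1 ∧ 0 < q.2.2 := hq
  have := minSqrt_nonneg q
  unfold fluxMajorant; positivity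

lemma fluxMajorant_smul {c : ℝ} (hc : 0 < c) {q : ℝ × ℝ × ℝ} (hq : q ∈ posOctant) :
    fluxMajorant (c • q) = (c ^ 3)⁻¹ * fluxMajorant q := by
  obtain ⟨ha, hb, hd⟩ : 0 < q.1 ∧ 0 < q.2.1 ∧ 0 < q.2.2 := hq
  have hpow :
      Real.sqrt c * (c ^ (-(7/6 : ℝ)) * c ^ (-(7/6 : ℝ)) * c ^ (-(7/6 : ℝ))) = (c ^ 3)⁻¹ := by
    rw [Real.sqrt_eq_rpow, ← Real.rpow_add hc, ← Real.rpow_add hc, ← Real.rpow_add hc,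
      ← Real.rpow_natCast, ← Real.rpow_neg hc.le]
    norm_num
  simp only [fluxMajorant, minSqrt_smul hc.le, Prod.smul_fst, Prod.smul_snd, smul_eq_mul,
    Real.mul_rpow hc.le ha.le, Real.mul_rpow hc.le hb.le, Real.mul_rpow hc.le hd.le, ← hpow]
  ring

lemma setIntegral_fluxMajorant_smul {S : Set (ℝ × ℝ × ℝ)} (hS : MeasurableSet S)
    (hSpos : S ⊆ posOctant) {c : ℝ} (hc : 0 < c) :
    ∫ q in c • S, fluxMajorant q = ∫ q in S, fluxMajorant q := by
  have : (volume : Measure (ℝ × ℝ × ℝ)).IsAddHaarMeasure :=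
    Measure.prod.instIsAddHaarMeasure _ _
  have h := Measure.setIntegral_comp_smul_of_pos volume fluxMajorant S hc
  rw [setIntegral_congr_fun hS fun q hq => fluxMajorant_smul hc (hSpos hq),
    integral_const_mul] at h
  simp only [Module.finrank_prod, Module.finrank_self, smul_eq_mul] at h
  exact (mul_left_cancel₀ (by positivity) h).symm

lemma abs_le_mul_rpow_neg {f : ℝ → ℝ} {M : ℝ} (hf : ∀ ω > (0:ℝ), ω ^ (7/6 : ℝ) * |f ω| ≤ M)
    {x : ℝ} (hx : 0 < x) : |f x| ≤ M * x ^ (-(7/6 : ℝ)) := by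
  calc |f x| = x ^ (-(7/6 : ℝ)) * (x ^ (7/6 : ℝ) * |f x|) := by
        rw [← mul_assoc, ← Real.rpow_add hx]; simp
    _ ≤ x ^ (-(7/6 : ℝ)) * M := by gcongr; exact hf x hx
    _ = M * x ^ (-(7/6 : ℝ)) := mul_comm _ _

lemma abs_flux_integrand_le {f : ℝ → ℝ} {M : ℝ} (hM : 0 ≤ M)
    (hf : ∀ ω > (0:ℝ), ω ^ (7/6 : ℝ) * |f ω| ≤ M) {q : ℝ × ℝ × ℝ} (hq : q ∈ posOctant) :
    |Real.sqrt q.1 * W q.1 q.2.1 q.2.2 (q.1 + q.2.1 - q.2.2) * f q.1 * f q.2.1 * f q.2.2|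
      ≤ M ^ 3 * fluxMajorant q := by
  obtain ⟨a, b, c⟩ := q
  obtain ⟨ha, hb, hc⟩ : 0 < a ∧ 0 < b ∧ 0 < c := hq
  have hm := minSqrt_nonneg (a, b, c)
  rw [sqrt_mul_W ha, abs_mul, abs_mul, abs_mul, abs_of_nonneg hm]
  calc minSqrt (a, b, c) * |f a| * |f b| * |f c|
      ≤ minSqrt (a, b, c) * (M * a ^ (-(7/6 : ℝ))) * (M * b ^ (-(7/6 : ℝ)))
          * (M * c ^ (-(7/6 : ℝ))) := by
        have h₁ := abs_le_mul_rpow_neg hf ha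
        have h₂ := abs_le_mul_rpow_neg hf hb
        have h₃ := abs_le_mul_rpow_neg hf hc
        gcongr
    _ = M ^ 3 * fluxMajorant (a, b, c) := by unfold fluxMajorant; ring

lemma abs_Jint_le {f : ℝ → ℝ} {M : ℝ} (hM : 0 ≤ M)
    (hf : ∀ ω > (0:ℝ), ω ^ (7/6 : ℝ) * |f ω| ≤ M) {S : Set (ℝ × ℝ × ℝ)}
    (hS : MeasurableSet S) (hSpos : S ⊆ posOctant) (hint : IntegrableOn fluxMajorant S) :
    |Jint f S| ≤ M ^ 3 * ∫ q in S, fluxMajorant q := by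
  rw [Jint, ← Real.norm_eq_abs, ← integral_const_mul]
  exact norm_integral_le_of_norm_le (hint.const_mul _)
    (ae_restrict_of_forall_mem hS fun q hq => abs_flux_integrand_le hM hf (hSpos hq))

lemma integrableOn_of_norm_le_prod {F : ℝ × ℝ × ℝ → ℝ} (hF : Measurable F)
    {T : Set (ℝ × ℝ × ℝ)} (hT : MeasurableSet T) {A B C : Set ℝ} (hTABC : T ⊆ A ×ˢ B ×ˢ C)
    {g₁ g₂ g₃ : ℝ → ℝ} (h₁ : IntegrableOn g₁ A) (h₂ : IntegrableOn g₂ B)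
    (h₃ : IntegrableOn g₃ C) (hle : ∀ q ∈ T, ‖F q‖ ≤ g₁ q.1 * g₂ q.2.1 * g₃ q.2.2) :
    IntegrableOn F T := by
  have hprod : IntegrableOn (fun q : ℝ × ℝ × ℝ => g₁ q.1 * g₂ q.2.1 * g₃ q.2.2)
      (A ×ˢ B ×ˢ C) := by
    rw [IntegrableOn, Measure.volume_eq_prod, ← Measure.prod_restrict, Measure.volume_eq_prod,
      ← Measure.prod_restrict]
    simpa only [mul_assoc] using h₁.mul_prod (h₂.mul_prod h₃)
  exact (hprod.mono_set hTABC).mono' hF.aestronglyMeasurable (ae_restrict_of_forall_mem hT hle)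

lemma measurable_fluxMajorant : Measurable fluxMajorant := by
  unfold fluxMajorant minSqrt; fun_prop

/-- `s` is the part of the degree `1/2` of `minSqrt` given to a coordinate ranging over `A`
(see `minSqrt_le_rpow`). -/
structure IsFactor (s : ℝ) (A : Set ℝ) : Prop where
  nonneg : 0 ≤ s
  measurableSet : MeasurableSet A
  subset_Ioi : A ⊆ Ioi 0
  integrableOn : IntegrableOn (fun x => x ^ (s - 7/6)) A

lemma isFactor_Ioo (s : ℝ) {R : ℝ} (hR : 0 < R) (hs : 1/6 < s) : IsFactor s (Ioo 0 R) :=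
  ⟨by linarith, measurableSet_Ioo, Ioo_subset_Ioi_self,
    (intervalIntegral.integrableOn_Ioo_rpow_iff hR).2 (by linarith)⟩

lemma isFactor_Ioi {r : ℝ} (hr : 0 < r) : IsFactor 0 (Ioi r) :=
  ⟨le_rfl, measurableSet_Ioi, Ioi_subset_Ioi hr.le, integrableOn_Ioi_rpow_of_lt (by norm_num) hr⟩

lemma integrableOn_fluxMajorant_of_le {T : Set (ℝ × ℝ × ℝ)} (hT : MeasurableSet T)
    {A B C : Set ℝ} (hTABC : T ⊆ A ×ˢ B ×ˢ C) {s₁ s₂ s₃ : ℝ} (h₁ : IsFactor s₁ A)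
    (h₂ : IsFactor s₂ B) (h₃ : IsFactor s₃ C) {R : ℝ}
    (hle : ∀ q ∈ T, minSqrt q ≤ R * (q.1 ^ s₁ * q.2.1 ^ s₂ * q.2.2 ^ s₃)) :
    IntegrableOn fluxMajorant T := by
  have hTpos : T ⊆ posOctant :=
    hTABC.trans (prod_mono h₁.subset_Ioi (prod_mono h₂.subset_Ioi h₃.subset_Ioi))
  refine integrableOn_of_norm_le_prod measurable_fluxMajorant hT hTABC
    (h₁.integrableOn.const_mul R) h₂.integrableOn h₃.integrableOn fun q hq => ?_
  obtain ⟨ha, hb, hc⟩ : 0 < q.1 ∧ 0 < q.2.1 ∧ 0 < q.2.2 := hTpos hq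
  rw [Real.norm_of_nonneg (fluxMajorant_nonneg (hTpos hq)), fluxMajorant,
    Real.rpow_sub ha, Real.rpow_sub hb, Real.rpow_sub hc]
  calc minSqrt q * (q.1 ^ (-(7/6 : ℝ)) * q.2.1 ^ (-(7/6 : ℝ)) * q.2.2 ^ (-(7/6 : ℝ)))
      ≤ R * (q.1 ^ s₁ * q.2.1 ^ s₂ * q.2.2 ^ s₃) *
          (q.1 ^ (-(7/6 : ℝ)) * q.2.1 ^ (-(7/6 : ℝ)) * q.2.2 ^ (-(7/6 : ℝ))) := by
        gcongr; exact hle q hq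
    _ = _ := by simp only [Real.rpow_neg ha.le, Real.rpow_neg hb.le, Real.rpow_neg hc.le]; ring

lemma integrableOn_fluxMajorant_prod {s₁ s₂ s₃ : ℝ} {A B C : Set ℝ} (h₁ : IsFactor s₁ A)
    (h₂ : IsFactor s₂ B) (h₃ : IsFactor s₃ C) (hs : s₁ + s₂ + s₃ = 1 / 2) :
    IntegrableOn fluxMajorant (A ×ˢ B ×ˢ C) := by
  refine integrableOn_fluxMajorant_of_le
    (h₁.measurableSet.prod (h₂.measurableSet.prod h₃.measurableSet)) subset_rfl h₁ h₂ h₃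
    (R := 1) fun q hq => ?_
  rw [one_mul]
  exact minSqrt_le_rpow (prod_mono h₁.subset_Ioi (prod_mono h₂.subset_Ioi h₃.subset_Ioi) hq)
    h₁.nonneg h₂.nonneg h₃.nonneg hs

structure IsFluxRegion (S : ℝ → Set (ℝ × ℝ × ℝ)) : Prop where
  measurableSet : ∀ ω, MeasurableSet (S ω)
  subset_posOctant : ∀ ω > 0, S ω ⊆ posOctant
  smul_mem_iff : ∀ c > 0, ∀ ω q, c • q ∈ S (c * ω) ↔ q ∈ S ω
  integrableOn : ∀ ω > 0, IntegrableOn fluxMajorant (S ω)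

namespace IsFluxRegion

variable {S : ℝ → Set (ℝ × ℝ × ℝ)}

lemma eq_smul (hS : IsFluxRegion S) {ω : ℝ} (hω : 0 < ω) : S ω = ω • S 1 := by
  ext q
  rw [mem_smul_set_iff_inv_smul_mem₀ hω.ne', ← inv_mul_cancel₀ hω.ne',
    hS.smul_mem_iff _ (inv_pos.2 hω)]

lemma abs_Jint_le (hS : IsFluxRegion S) {f : ℝ → ℝ} {M : ℝ} (hM : 0 ≤ M)
    (hf : ∀ ω > (0:ℝ), ω ^ (7/6 : ℝ) * |f ω| ≤ M) {ω : ℝ} (hω : 0 < ω) :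
    |Jint f (S ω)| ≤ M ^ 3 * ∫ q in S 1, fluxMajorant q := by
  calc |Jint f (S ω)| ≤ M ^ 3 * ∫ q in S ω, fluxMajorant q :=
        _root_.abs_Jint_le hM hf (hS.measurableSet ω) (hS.subset_posOctant ω hω)
          (hS.integrableOn ω hω)
    _ = M ^ 3 * ∫ q in S 1, fluxMajorant q := by
        rw [hS.eq_smul hω, setIntegral_fluxMajorant_smul (hS.measurableSet 1)
          (hS.subset_posOctant 1 one_pos) hω]

lemma integral_nonneg (hS : IsFluxRegion S) : 0 ≤ ∫ q in S 1, fluxMajorant q :=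
  setIntegral_nonneg (hS.measurableSet 1) fun _ hq =>
    fluxMajorant_nonneg (hS.subset_posOctant 1 one_pos hq)

end IsFluxRegion

theorem isFluxRegion_S1 : IsFluxRegion S1 where
  measurableSet ω := by unfold S1; measurability
  subset_posOctant ω hω := fun q ⟨ha, hb, _, hωc, _⟩ => ⟨ha, hb, hω.trans hωc⟩
  smul_mem_iff c hc ω q := by simp [S1, ← mul_add, mul_lt_mul_iff_right₀ hc, hc]
  integrableOn ω hω := by
    have h₁ : IntegrableOn fluxMajorant (Ioo 0 ω ×ˢ Ioo 0 ω ×ˢ Ioi ω) :=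
      integrableOn_fluxMajorant_prod (isFactor_Ioo (1/4) hω (by norm_num))
        (isFactor_Ioo (1/4) hω (by norm_num)) (isFactor_Ioi hω) (by norm_num)
    have h₂ : IntegrableOn fluxMajorant (Ioi (ω/2) ×ˢ Ioo 0 ω ×ˢ Ioi ω) :=
      integrableOn_fluxMajorant_prod (isFactor_Ioi (half_pos hω))
        (isFactor_Ioo (1/2) hω (by norm_num)) (isFactor_Ioi hω) (by norm_num)
    refine (h₁.union h₂).mono_set fun q ⟨ha, hb, hbω, hωc, _⟩ => ?_
    rcases lt_or_ge q.1 ω with haω | hωa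
    · exact Or.inl ⟨⟨ha, haω⟩, ⟨hb, hbω⟩, hωc⟩
    · exact Or.inr ⟨(half_lt_self hω).trans_le hωa, ⟨hb, hbω⟩, hωc⟩

theorem isFluxRegion_S2 : IsFluxRegion S2 where
  measurableSet ω := by unfold S2; measurability
  subset_posOctant ω hω := fun q ⟨ha, haω, hb, hc, _⟩ => ⟨ha, (by linarith : 0 < q.2.1), hc⟩
  smul_mem_iff c hc ω q := by simp [S2, ← mul_add, ← mul_sub, mul_lt_mul_iff_right₀ hc, hc]
  integrableOn ω hω := by
    have h₁ : IntegrableOn fluxMajorant (Ioo 0 ω ×ˢ Ioi ω ×ˢ Ioi (ω/2)) :=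
      integrableOn_fluxMajorant_prod (isFactor_Ioo (1/2) hω (by norm_num)) (isFactor_Ioi hω)
        (isFactor_Ioi (half_pos hω)) (by norm_num)
    have h₂ : IntegrableOn fluxMajorant (Ioo 0 ω ×ˢ Ioi (ω/2) ×ˢ Ioo 0 ω) :=
      integrableOn_fluxMajorant_prod (isFactor_Ioo (1/4) hω (by norm_num))
        (isFactor_Ioi (half_pos hω)) (isFactor_Ioo (1/4) hω (by norm_num)) (by norm_num)
    have h₃ : IntegrableOn fluxMajorant (Ioi (ω/2) ×ˢ Ioo 0 ω ×ˢ Ioo 0 ω) :=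
      integrableOn_fluxMajorant_prod (isFactor_Ioi (half_pos hω))
        (isFactor_Ioo (1/4) hω (by norm_num)) (isFactor_Ioo (1/4) hω (by norm_num)) (by norm_num)
    refine ((h₁.union h₂).union h₃).mono_set fun q ⟨ha, haω, hb, hc, hcd⟩ => ?_
    rcases le_or_gt ω q.2.2 with hωc | hcω
    · exact Or.inl (Or.inl ⟨⟨ha, haω⟩, (by linarith : ω < q.2.1), (by linarith : ω/2 < q.2.2)⟩)
    rcases lt_or_ge (ω/2) q.2.1 with hωb | hbω
    · exact Or.inl (Or.inr ⟨⟨ha, haω⟩, hωb, ⟨hc, hcω⟩⟩)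
    · exact Or.inr ⟨(by linarith : ω/2 < q.1), ⟨by linarith, by linarith⟩, ⟨hc, hcω⟩⟩

theorem isFluxRegion_S3 : IsFluxRegion S3 where
  measurableSet ω := by unfold S3; measurability
  subset_posOctant ω hω := fun q ⟨ha, hωb, hc, _⟩ => ⟨ha, hω.trans hωb, hc⟩
  smul_mem_iff c hc ω q := by simp [S3, mul_lt_mul_iff_right₀ hc, hc]
  integrableOn ω hω := by
    have h₁ : IntegrableOn fluxMajorant (Ioo 0 ω ×ˢ Ioi ω ×ˢ Ioo 0 ω) :=
      integrableOn_fluxMajorant_prod (isFactor_Ioo (1/4) hω (by norm_num)) (isFactor_Ioi hω)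
        (isFactor_Ioo (1/4) hω (by norm_num)) (by norm_num)
    have h₂ : IntegrableOn fluxMajorant (Ioi (ω/2) ×ˢ Ioi ω ×ˢ Ioo 0 ω) :=
      integrableOn_fluxMajorant_prod (isFactor_Ioi (half_pos hω)) (isFactor_Ioi hω)
        (isFactor_Ioo (1/2) hω (by norm_num)) (by norm_num)
    refine (h₁.union h₂).mono_set fun q ⟨ha, hωb, hc, hcω⟩ => ?_
    rcases lt_or_ge q.1 ω with haω | hωa
    · exact Or.inl ⟨⟨ha, haω⟩, hωb, ⟨hc, hcω⟩⟩
    · exact Or.inr ⟨(half_lt_self hω).trans_le hωa, hωb, ⟨hc, hcω⟩⟩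

theorem isFluxRegion_S4 : IsFluxRegion S4 where
  measurableSet ω := by unfold S4; measurability
  subset_posOctant ω hω := fun q ⟨hωa, hb, hlo, _⟩ =>
    ⟨hω.trans hωa, hb, (by linarith : 0 < q.2.2)⟩
  smul_mem_iff c hc ω q := by simp [S4, ← mul_add, ← mul_sub, mul_lt_mul_iff_right₀ hc, hc]
  integrableOn ω hω := by
    -- with all three frequencies large, the decay comes from `√ω₄ ≤ √ω` instead
    have h₁ : IntegrableOn fluxMajorant (S4 ω ∩ Ioi ω ×ˢ Ioi (ω/2) ×ˢ Ioi ω) := by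
      have hS4 : MeasurableSet (S4 ω) := by unfold S4; measurability
      refine integrableOn_fluxMajorant_of_le
        (hS4.inter (measurableSet_Ioi.prod (measurableSet_Ioi.prod measurableSet_Ioi)))
        inter_subset_right
        (isFactor_Ioi hω) (isFactor_Ioi (half_pos hω)) (isFactor_Ioi hω) (R := Real.sqrt ω)
        fun q ⟨⟨_, _, hlo, _⟩, _⟩ => ?_
      simp only [Real.rpow_zero, mul_one, minSqrt]
      exact ((min_le_right _ _).trans (min_le_right _ _)).trans
        (Real.sqrt_le_sqrt (by linarith))
    have h₂ : IntegrableOn fluxMajorant (Ioi ω ×ˢ Ioo 0 ω ×ˢ Ioi ω) :=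
      integrableOn_fluxMajorant_prod (isFactor_Ioi hω) (isFactor_Ioo (1/2) hω (by norm_num))
        (isFactor_Ioi hω) (by norm_num)
    have h₃ : IntegrableOn fluxMajorant (Ioi ω ×ˢ Ioo 0 ω ×ˢ Ioo 0 (3 * ω)) :=
      integrableOn_fluxMajorant_prod (isFactor_Ioi hω) (isFactor_Ioo (1/4) hω (by norm_num))
        (isFactor_Ioo (1/4) (by positivity) (by norm_num)) (by norm_num)
    refine ((h₁.union h₂).union h₃).mono_set fun q hq => ?_
    have ⟨hωa, hb, hlo, hhi⟩ := hq
    rcases le_or_gt ω q.2.1 with hωb | hbω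
    · exact Or.inl (Or.inl ⟨hq, hωa, (by linarith : ω/2 < q.2.1), (by linarith : ω < q.2.2)⟩)
    rcases le_or_gt (2 * ω) q.1 with hωa' | haω
    · exact Or.inl (Or.inr ⟨hωa, ⟨hb, hbω⟩, (by linarith : ω < q.2.2)⟩)
    · exact Or.inr ⟨hωa, ⟨hb, hbω⟩, ⟨by linarith, by linarith⟩⟩

noncomputable def fluxConst : ℝ :=
  (∫ q in S1 1, fluxMajorant q) + (∫ q in S2 1, fluxMajorant q) +
    (∫ q in S3 1, fluxMajorant q) + ∫ q in S4 1, fluxMajorant q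

lemma fluxConst_nonneg : 0 ≤ fluxConst := by
  have := isFluxRegion_S1.integral_nonneg
  have := isFluxRegion_S2.integral_nonneg
  have := isFluxRegion_S3.integral_nonneg
  have := isFluxRegion_S4.integral_nonneg
  unfold fluxConst; positivity

lemma abs_JM_le {f : ℝ → ℝ} {M : ℝ} (hM : 0 ≤ M)
    (hf : ∀ ω > (0:ℝ), ω ^ (7/6 : ℝ) * |f ω| ≤ M) {ω : ℝ} (hω : 0 < ω) :
    |JM f ω| ≤ fluxConst * M ^ 3 := by
  have h₁ := isFluxRegion_S1.abs_Jint_le hM hf hω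
  have h₂ := isFluxRegion_S2.abs_Jint_le hM hf hω
  have h₃ := isFluxRegion_S3.abs_Jint_le hM hf hω
  have h₄ := isFluxRegion_S4.abs_Jint_le hM hf hω
  rw [abs_le] at h₁ h₂ h₃ h₄ ⊢
  unfold JM fluxConst
  constructor <;> linarith

lemma abs_JE_le_of_abs_JM_le {f : ℝ → ℝ} {B : ℝ} (hB : ∀ σ > (0:ℝ), |JM f σ| ≤ B) {ω : ℝ}
    (hω : 0 < ω) : |JE f ω| ≤ 2 * B * ω := by
  have hint : |∫ σ in Ioo (0:ℝ) ω, JM f σ| ≤ B * ω := by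
    have := norm_setIntegral_le_of_norm_le_const (f := JM f)
      (measure_Ioo_lt_top (μ := volume) (a := 0) (b := ω))
      fun σ hσ => hB σ hσ.1
    rwa [Real.volume_real_Ioo_of_le hω.le, sub_zero] at this
  calc |JE f ω| ≤ |ω * JM f ω| + |∫ σ in Ioo (0:ℝ) ω, JM f σ| := abs_sub _ _
    _ ≤ ω * B + B * ω := by
        rw [abs_mul, abs_of_pos hω]; gcongr; exact hB ω hω
    _ = 2 * B * ω := by ring

/-- For f ∈ E_{7/6,7/6}, the mass flux is uniformly bounded and the energy flux grows
at most linearly, both by C‖f‖³. -/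
theorem stmt_10 :
    ∃ C > (0:ℝ), ∀ (f : ℝ → ℝ) (M : ℝ), Measurable f → 0 ≤ M →
      (∀ ω > (0:ℝ), ω ^ (7/6 : ℝ) * |f ω| ≤ M) →
      ∀ ω > (0:ℝ), |JM f ω| ≤ C * M ^ 3 ∧ |JE f ω| ≤ C * M ^ 3 * ω := by
  have hC := fluxConst_nonneg
  refine ⟨2 * fluxConst + 1, by linarith, fun f M _ hM hf ω hω => ?_⟩
  have hJM : ∀ σ > (0:ℝ), |JM f σ| ≤ fluxConst * M ^ 3 := fun σ hσ => abs_JM_le hM hf hσ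
  have hM3 : 0 ≤ M ^ 3 * ω := by positivity
  constructor
  · calc |JM f ω| ≤ fluxConst * M ^ 3 := hJM ω hω
      _ ≤ (2 * fluxConst + 1) * M ^ 3 := by gcongr; linarith
  · calc |JE f ω| ≤ 2 * (fluxConst * M ^ 3) * ω := abs_JE_le_of_abs_JM_le hJM hω
      _ ≤ (2 * fluxConst + 1) * M ^ 3 * ω := by linarith
end

section
/- Let f(ω) = ω^{-7/6} and let J_M(f)(ω) be the mass flux of the kinetic wave equation. Then J_M(f)(ω) is independent of ω: J_M(f)(ω) = J_M(f)(1) for all ω > 0. Consequently, the energy flux J_E(f)(ω) = ω J_M(f)(ω) − ∫₀^ω J_M(f)(σ)dσ vanishes identically. -/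
open MeasureTheory Set

/-! Under `ω ↦ c ω` each region `Sᵢ ω` is dilated by `c`, the weight `W` is scale invariant,
and for `f` homogeneous of degree `p` the integrand `√ω₁ W f₁ f₂ f₃` is homogeneous of degree
`1/2 + 3p`; with the Jacobian `c³` this gives `J_M(f)(c ω) = c ^ (7/2 + 3p) J_M(f)(ω)`. For the
KZ exponent `p = -7/6` the degree vanishes, so `J_M` is constant and
`J_E(ω) = ω J_M(1) - ω J_M(1) = 0`. -/
lemma mul_rpow_of_pos_left {c : ℝ} (hc : 0 < c) (x p : ℝ) : (c * x) ^ p = c ^ p * x ^ p := by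
  rcases lt_trichotomy x 0 with hx | rfl | hx
  · rw [Real.rpow_def_of_neg (mul_neg_of_pos_of_neg hc hx), Real.rpow_def_of_neg hx,
      Real.rpow_def_of_pos hc, Real.log_mul hc.ne' hx.ne, add_mul, Real.exp_add, mul_assoc]
  · rcases eq_or_ne p 0 with rfl | hp
    · simp
    · simp [Real.zero_rpow hp]
  · exact Real.mul_rpow hc.le hx.le

lemma W_mul_left {c : ℝ} (hc : 0 < c) (a b d e : ℝ) :
    W (c * a) (c * b) (c * d) (c * e) = W a b d e := by
  simp only [W, Real.sqrt_mul hc.le, ← mul_min_of_nonneg _ _ (Real.sqrt_nonneg c)]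
  exact mul_div_mul_left _ _ (by positivity)

open scoped Pointwise

instance : (volume : Measure (ℝ × ℝ)).IsAddHaarMeasure := Measure.prod.instIsAddHaarMeasure _ _

instance : (volume : Measure (ℝ × ℝ × ℝ)).IsAddHaarMeasure := Measure.prod.instIsAddHaarMeasure _ _

lemma Jint_smul {f : ℝ → ℝ} {c p : ℝ} (hc : 0 < c) (hf : ∀ σ, f (c * σ) = c ^ p * f σ)
    (S : Set (ℝ × ℝ × ℝ)) : Jint f (c • S) = c ^ (7 / 2 + 3 * p) * Jint f S := by
  have hscale : ∀ a b d : ℝ,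
      Real.sqrt (c * a) * W (c * a) (c * b) (c * d) (c * a + c * b - c * d) *
        f (c * a) * f (c * b) * f (c * d) =
      c ^ (1 / 2 + 3 * p) * (Real.sqrt a * W a b d (a + b - d) * f a * f b * f d) := by
    intro a b d
    rw [show c * a + c * b - c * d = c * (a + b - d) by ring, W_mul_left hc, Real.sqrt_mul hc.le,
      hf, hf, hf, Real.sqrt_eq_rpow, Real.rpow_add hc, show 3 * p = p + p + p by ring,
      Real.rpow_add hc, Real.rpow_add hc]
    ring
  have h := Measure.setIntegral_comp_smul_of_pos volume
    (fun q : ℝ × ℝ × ℝ => Real.sqrt q.1 * W q.1 q.2.1 q.2.2 (q.1 + q.2.1 - q.2.2) *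
      f q.1 * f q.2.1 * f q.2.2) S hc
  simp only [Prod.smul_fst, Prod.smul_snd, smul_eq_mul, hscale, integral_const_mul] at h
  change c ^ (1 / 2 + 3 * p) * Jint f S =
    (c ^ Module.finrank ℝ (ℝ × ℝ × ℝ))⁻¹ * Jint f (c • S) at h
  have hpow : c ^ (7 / 2 + 3 * p) = c ^ Module.finrank ℝ (ℝ × ℝ × ℝ) * c ^ (1 / 2 + 3 * p) := by
    rw [show (7 / 2 + 3 * p) = (3 : ℕ) + (1 / 2 + 3 * p) by push_cast; ring, Real.rpow_add hc,
      Real.rpow_natCast]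
    simp
  rw [hpow, mul_assoc, h, mul_inv_cancel_left₀ (by positivity)]

lemma smul_set_eq_of_forall_smul_mem_iff {G α : Type*} [GroupWithZero G] [MulAction G α]
    {c : G} (hc : c ≠ 0) {S T : Set α} (h : ∀ x, c • x ∈ T ↔ x ∈ S) : c • S = T := by
  ext y
  rw [mem_smul_set_iff_inv_smul_mem₀ hc, ← h, smul_inv_smul₀ hc]

section Scaling

variable {c : ℝ} (hc : 0 < c) (ω : ℝ)
include hc

lemma smul_S1 : c • S1 ω = S1 (c * ω) :=
  smul_set_eq_of_forall_smul_mem_iff hc.ne' fun x => by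
    simp only [S1, mem_ofPred_eq, Prod.smul_fst, Prod.smul_snd, smul_eq_mul, ← mul_add,
      mul_pos_iff_of_pos_left hc, mul_lt_mul_iff_right₀ hc]

lemma smul_S2 : c • S2 ω = S2 (c * ω) :=
  smul_set_eq_of_forall_smul_mem_iff hc.ne' fun x => by
    simp only [S2, mem_ofPred_eq, Prod.smul_fst, Prod.smul_snd, smul_eq_mul, ← mul_add, ← mul_sub,
      mul_pos_iff_of_pos_left hc, mul_lt_mul_iff_right₀ hc]

lemma smul_S3 : c • S3 ω = S3 (c * ω) :=
  smul_set_eq_of_forall_smul_mem_iff hc.ne' fun x => by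
    simp only [S3, mem_ofPred_eq, Prod.smul_fst, Prod.smul_snd, smul_eq_mul,
      mul_pos_iff_of_pos_left hc, mul_lt_mul_iff_right₀ hc]

lemma smul_S4 : c • S4 ω = S4 (c * ω) :=
  smul_set_eq_of_forall_smul_mem_iff hc.ne' fun x => by
    simp only [S4, mem_ofPred_eq, Prod.smul_fst, Prod.smul_snd, smul_eq_mul, ← mul_add, ← mul_sub,
      mul_pos_iff_of_pos_left hc, mul_lt_mul_iff_right₀ hc]

lemma JM_mul {f : ℝ → ℝ} {p : ℝ} (hf : ∀ σ, f (c * σ) = c ^ p * f σ) :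
    JM f (c * ω) = c ^ (7 / 2 + 3 * p) * JM f ω := by
  simp only [JM, ← smul_S1 hc, ← smul_S2 hc, ← smul_S3 hc, ← smul_S4 hc, Jint_smul hc hf]
  ring

end Scaling

lemma JE_eq_zero_of_JM_const {f : ℝ → ℝ} (h : ∀ σ > 0, JM f σ = JM f 1) {ω : ℝ} (hω : 0 < ω) :
    JE f ω = 0 := by
  rw [JE, setIntegral_congr_fun measurableSet_Ioo fun σ hσ => h σ hσ.1, setIntegral_const,
    Real.volume_real_Ioo_of_le hω.le, sub_zero, smul_eq_mul, h ω hω, sub_self]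

/-- For the KZ spectrum f(ω) = ω^{-7/6}, the mass flux is constant in ω and the energy
flux vanishes identically. -/
theorem stmt_11 :
    (∀ ω > (0:ℝ), JM (fun σ => σ ^ (-(7:ℝ)/6)) ω = JM (fun σ => σ ^ (-(7:ℝ)/6)) 1) ∧
    (∀ ω > (0:ℝ), JE (fun σ => σ ^ (-(7:ℝ)/6)) ω = 0) := by
  have hJM : ∀ ω > (0:ℝ), JM (fun σ => σ ^ (-(7:ℝ)/6)) ω = JM (fun σ => σ ^ (-(7:ℝ)/6)) 1 := by
    intro ω hω
    have h := JM_mul hω 1 (f := fun σ => σ ^ (-(7:ℝ)/6)) (mul_rpow_of_pos_left hω · _)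
    rwa [mul_one, show (7 / 2 + 3 * (-(7:ℝ)/6)) = 0 by ring, Real.rpow_zero, one_mul] at h
  exact ⟨hJM, fun ω hω => JE_eq_zero_of_JM_const hJM hω⟩
end

section
/- Suppose the flux J : (0,∞) → ℝ of a function f satisfies J(λ) = J(f_{λ^{-1}})(1) where f_λ(ω) = λ^{-7/6} f(ω/λ), f is bounded in E_{7/6,7/6} uniformly, f(ω) = c₀ ω^{-7/6} + o(ω^{-7/6}) as ω → 0, and J is continuous with respect to a.e. convergence of uniformly bounded sequences in E_{7/6,7/6} and is homogeneous cubic. Then lim_{ω→0} J(f)(ω) = c₀³ J(ω^{-7/6})(1). -/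
open Filter Set Topology

/-!
Rescaling by `λ` preserves the weighted bound `ω ^ (7/6) |f ω| ≤ M`, and the rescalings
`ω ↦ λ ^ (7/6) f (λ ω)` converge pointwise to `c₀ ω ^ (-7/6)` as `λ → 0⁺`, by the asymptotics of
`f` at `0`. The scaling identity turns `J f λ` into the flux at `1` of these rescalings, so continuity
of the flux along bounded pointwise convergent sequences gives the limit `J (c₀ ω ^ (-7/6)) 1`, which
equals `c₀³ J (ω ^ (-7/6)) 1` by cubic homogeneity.
-/

theorem Filter.tendsto_of_seq_tendsto_of_forall_mem {α β : Type*} {f : α → β} {k : Filter α}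
    {l : Filter β} [k.IsCountablyGenerated] {s : Set α} (hs : s ∈ k)
    (h : ∀ x : ℕ → α, (∀ n, x n ∈ s) → Tendsto x atTop k → Tendsto (f ∘ x) atTop l) :
    Tendsto f k l :=
  tendsto_of_seq_tendsto fun x hx => by
    obtain ⟨N, hN⟩ := eventually_atTop.1 (hx hs)
    exact (tendsto_add_atTop_iff_nat N).1 <|
      h (fun n => x (n + N)) (fun n => hN _ (Nat.le_add_left N n))
        ((tendsto_add_atTop_iff_nat N).2 hx)

/-- `g_{1/λ}` in the paper's notation `g_λ(ω) = λ^{-a} g(ω/λ)`. -/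
noncomputable def rescale (a lam : ℝ) (g : ℝ → ℝ) (ω : ℝ) : ℝ :=
  lam ^ a * g (lam * ω)

variable {a c M lam ω : ℝ} {f : ℝ → ℝ}

theorem abs_le_of_tendsto_rpow_mul (hbound : ∀ ω > 0, ω ^ a * |f ω| ≤ M)
    (hlim : Tendsto (fun ω => ω ^ a * f ω) (𝓝[>] 0) (𝓝 c)) : |c| ≤ M := by
  refine le_of_tendsto hlim.abs ?_
  filter_upwards [self_mem_nhdsWithin] with ω hω
  rw [abs_mul, abs_of_nonneg (Real.rpow_nonneg hω.le _)]
  exact hbound ω hω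

theorem rpow_mul_abs_rescale_le (hbound : ∀ ω > 0, ω ^ a * |f ω| ≤ M) (hlam : 0 < lam)
    (hω : 0 < ω) : ω ^ a * |rescale a lam f ω| ≤ M := by
  calc ω ^ a * |rescale a lam f ω| = (lam * ω) ^ a * |f (lam * ω)| := by
        rw [rescale, abs_mul, abs_of_nonneg (Real.rpow_nonneg hlam.le _),
          Real.mul_rpow hlam.le hω.le]
        ring
    _ ≤ M := hbound _ (mul_pos hlam hω)

theorem rpow_mul_abs_const_mul_rpow_neg (a c : ℝ) (hω : 0 < ω) :
    ω ^ a * |c * ω ^ (-a)| = |c| := by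
  rw [abs_mul, abs_of_nonneg (Real.rpow_nonneg hω.le _), Real.rpow_neg hω.le]
  field_simp

theorem tendsto_rescale_nhdsGT_zero (hlim : Tendsto (fun ω => ω ^ a * f ω) (𝓝[>] 0) (𝓝 c))
    (hω : 0 < ω) :
    Tendsto (fun lam => rescale a lam f ω) (𝓝[>] 0) (𝓝 (c * ω ^ (-a))) := by
  have hmul : Tendsto (fun lam => lam * ω) (𝓝[>] 0) (𝓝[>] 0) := by
    simp_rw [mul_comm _ ω]
    exact tendsto_iff_comap.2 (comap_mulLeft_nhdsGT_zero hω).ge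
  refine ((hlim.comp hmul).mul_const (ω ^ (-a))).congr' ?_
  filter_upwards [self_mem_nhdsWithin] with lam hlam
  simp only [Function.comp_apply, rescale, Real.mul_rpow hlam.le hω.le,
    Real.rpow_neg hω.le]
  field_simp

/-- Scaling-limit argument: if the flux functional J satisfies the rescaling identity
J(f)(λ) = J(f_{λ⁻¹})(1) with f_λ(ω) = λ^{-7/6} f(ω/λ), f is bounded in E_{7/6,7/6},
f(ω) = c₀ ω^{-7/6} + o(ω^{-7/6}) as ω → 0, J(·)(1) is continuous with respect to
convergence of uniformly bounded sequences in E_{7/6,7/6}, and J is cubic homogeneous,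
then J(f)(ω) → c₀³ J(ω^{-7/6})(1) as ω → 0. -/
theorem stmt_12 (J : (ℝ → ℝ) → ℝ → ℝ) (f : ℝ → ℝ) (c₀ M : ℝ)
    (hscale : ∀ g : ℝ → ℝ, ∀ lam > (0:ℝ),
      J g lam = J (fun ω => lam ^ (7/6 : ℝ) * g (lam * ω)) 1)
    (hbound : ∀ ω > (0:ℝ), ω ^ (7/6 : ℝ) * |f ω| ≤ M)
    (hasymp : Tendsto (fun ω => ω ^ (7/6 : ℝ) * f ω) (nhdsWithin 0 (Ioi 0)) (nhds c₀))
    (hcont : ∀ (g : ℕ → ℝ → ℝ) (g' : ℝ → ℝ) (M' : ℝ),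
      (∀ n, ∀ ω > (0:ℝ), ω ^ (7/6 : ℝ) * |g n ω| ≤ M') →
      (∀ ω > (0:ℝ), ω ^ (7/6 : ℝ) * |g' ω| ≤ M') →
      (∀ ω > (0:ℝ), Tendsto (fun n => g n ω) atTop (nhds (g' ω))) →
      Tendsto (fun n => J (g n) 1) atTop (nhds (J g' 1)))
    (hcubic : ∀ (c : ℝ) (g : ℝ → ℝ), J (fun ω => c * g ω) 1 = c ^ 3 * J g 1) :
    Tendsto (fun ω => J f ω) (nhdsWithin 0 (Ioi 0))
      (nhds (c₀ ^ 3 * J (fun ω => ω ^ (-(7:ℝ)/6)) 1)) := by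
  have hc₀ : |c₀| ≤ M := abs_le_of_tendsto_rpow_mul hbound hasymp
  rw [← hcubic, neg_div]
  refine tendsto_of_seq_tendsto_of_forall_mem self_mem_nhdsWithin fun x hxpos hx => ?_
  refine (hcont (fun n => rescale (7/6) (x n) f) _ M ?_ ?_
    fun ω hω => (tendsto_rescale_nhdsGT_zero hasymp hω).comp hx).congr
    fun n => (hscale f (x n) (hxpos n)).symm
  · exact fun n ω hω => rpow_mul_abs_rescale_le hbound (hxpos n) hω
  · exact fun ω hω => (rpow_mul_abs_const_mul_rpow_neg _ c₀ hω).trans_le hc₀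
end

section
/- In the restricted case where ω₂ is the minimal frequency: for ω₁ ≥ 1 and weights ρ_{α,β} as above with β_f, β_g, β_h > 1 and β_f + β_g ≠ 5/2, the integral ∫₀^{ω₁} ∫_{ω₂}^{(ω₁+ω₂)/2} √(ω₂/ω₁) · ρ_{g}(ω₃) ρ_{f}(ω₂) dω₃ dω₂ · ρ_h(ω₁) is bounded by a constant times ω₁^{-min(β_f+β_g+β_h−2, β_h+1/2)}. -/
/-!
Dropping the constraint `ω₃ < (ω₁ + ω₂) / 2` only enlarges the region, so the `ω₃`-integral is at
most the tail `∫_{ω₂}^∞ ρ_g`. Raising `α_g` to `5/4`, which only increases `ρ_g` on `(0, 1)`, this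
tail is `≲ ρ_{1/4, β_g - 1}(ω₂)`. The weights multiply like powers, so what remains is
`ω₁^{-1/2} ∫₀^{ω₁} ρ_{α_f - 1/4, β_f + β_g - 3/2}`, which is
`O(ω₁^{-1/2 + max(5/2 - β_f - β_g, 0)})` since `α_f < 5/4` and `β_f + β_g ≠ 5/2`;
finally `ρ_h(ω₁) = ω₁^{-β_h}`.
-/

open MeasureTheory Set

noncomputable def rho (α β : ℝ) (ω : ℝ) : ℝ :=
  if ω < 1 then ω ^ (-α) else ω ^ (-β)

section Rho

variable {α β : ℝ}

lemma rho_of_le_one {x : ℝ} (hx : x ≤ 1) : rho α β x = x ^ (-α) := by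
  rcases hx.lt_or_eq with hx | rfl
  · exact if_pos hx
  · simp [rho]

lemma rho_of_one_le {x : ℝ} (hx : 1 ≤ x) : rho α β x = x ^ (-β) :=
  if_neg hx.not_gt

lemma rho_nonneg {x : ℝ} (hx : 0 ≤ x) : 0 ≤ rho α β x := by
  unfold rho; split_ifs <;> exact Real.rpow_nonneg hx _

lemma rpow_mul_rho {x : ℝ} (hx : 0 < x) (s : ℝ) :
    x ^ s * rho α β x = rho (α - s) (β - s) x := by
  unfold rho; split_ifs <;> rw [← Real.rpow_add hx] <;> ring_nf

lemma rho_mul_rho {x : ℝ} (hx : 0 < x) (α' β' : ℝ) :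
    rho α β x * rho α' β' x = rho (α + α') (β + β') x := by
  unfold rho; split_ifs <;> rw [← Real.rpow_add hx] <;> ring_nf

lemma rho_le_rho_of_le {α' x : ℝ} (hx : 0 < x) (hα : α ≤ α') : rho α β x ≤ rho α' β x := by
  unfold rho; split_ifs with h
  · exact Real.rpow_le_rpow_of_exponent_ge hx h.le (neg_le_neg hα)
  · rfl

lemma intervalIntegrable_rho (hα : α < 1) {ω : ℝ} (hω : 1 ≤ ω) :
    IntervalIntegrable (rho α β) volume 0 ω := by
  have h₀ : IntervalIntegrable (rho α β) volume 0 1 :=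
    (intervalIntegral.intervalIntegrable_rpow' (r := -α) (by linarith)).congr
      fun x hx => (rho_of_le_one (by simpa using hx.2)).symm
  have h₁ : IntervalIntegrable (rho α β) volume 1 ω := by
    have hc : ContinuousOn (fun x : ℝ => x ^ (-β)) (uIcc 1 ω) :=
      ContinuousOn.rpow_const continuousOn_id fun x hx =>
        Or.inl (by rw [uIcc_of_le hω] at hx; linarith [hx.1])
    refine hc.intervalIntegrable.congr fun x hx => ?_
    rw [uIoc_of_le hω] at hx
    exact (rho_of_one_le hx.1.le).symm
  exact h₀.trans h₁

lemma integral_rho (hα : α < 1) (hβ : β ≠ 1) {ω : ℝ} (hω : 1 ≤ ω) :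
    ∫ x in 0..ω, rho α β x = 1 / (1 - α) + (ω ^ (1 - β) - 1) / (1 - β) := by
  have h₀ : ∫ x in 0..1, rho α β x = 1 / (1 - α) := by
    rw [intervalIntegral.integral_congr fun x hx => rho_of_le_one (by simpa using hx.2),
      integral_rpow (Or.inl (by linarith))]
    simp [neg_add_eq_sub, Real.zero_rpow (by linarith : 1 - α ≠ 0)]
  have h₁ : ∫ x in 1..ω, rho α β x = (ω ^ (1 - β) - 1) / (1 - β) := by
    rw [intervalIntegral.integral_congr fun x hx =>
        rho_of_one_le (by rw [uIcc_of_le hω] at hx; exact hx.1),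
      integral_rpow (Or.inr ⟨by contrapose! hβ; linarith, by
        rw [uIcc_of_le hω]; exact fun h => absurd h.1 (by norm_num)⟩)]
    simp [neg_add_eq_sub]
  have hsplit := intervalIntegral.integral_interval_sub_left (intervalIntegrable_rho (β := β) hα hω)
    (intervalIntegrable_rho hα le_rfl)
  linarith

lemma integral_rho_le (hα : α < 1) (hβ : β ≠ 1) {ω : ℝ} (hω : 1 ≤ ω) :
    ∫ x in 0..ω, rho α β x ≤ (1 / (1 - α) + 1 / |1 - β|) * ω ^ max (1 - β) 0 := by
  have hω₀ : 0 < ω := by linarith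
  have hone : 1 ≤ ω ^ max (1 - β) 0 := Real.one_le_rpow hω (le_max_right _ _)
  have htail : (ω ^ (1 - β) - 1) / (1 - β) ≤ ω ^ max (1 - β) 0 / |1 - β| := by
    rcases lt_or_gt_of_ne (sub_ne_zero.2 hβ.symm) with hneg | hpos
    · rw [max_eq_right hneg.le, Real.rpow_zero, abs_of_neg hneg, ← neg_div_neg_eq, neg_sub]
      exact div_le_div_of_nonneg_right (by linarith [Real.rpow_nonneg hω₀.le (1 - β)]) (by linarith)
    · rw [max_eq_left hpos.le, abs_of_pos hpos]
      exact div_le_div_of_nonneg_right (by linarith) hpos.le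
  rw [integral_rho hα hβ hω, add_mul, one_div_mul_eq_div, one_div_mul_eq_div]
  exact add_le_add (div_le_div_of_nonneg_right hone (by linarith)) htail

lemma integrableOn_Ioi_rho (hβ : 1 < β) {x : ℝ} (hx : 0 < x) :
    IntegrableOn (rho α β) (Ioi x) := by
  have hc : ContinuousOn (fun y : ℝ => y ^ (-α)) (Icc x 1) :=
    ContinuousOn.rpow_const continuousOn_id fun y hy => Or.inl (by linarith [hy.1])
  have h₀ : IntegrableOn (rho α β) (Icc x 1) :=
    hc.integrableOn_Icc.congr_fun (fun y hy => (rho_of_le_one hy.2).symm) measurableSet_Icc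
  have h₁ : IntegrableOn (rho α β) (Ioi 1) :=
    (integrableOn_Ioi_rpow_of_lt (by linarith) one_pos).congr_fun
      (fun y hy => (rho_of_one_le (le_of_lt hy)).symm) measurableSet_Ioi
  exact (h₀.union h₁).mono_set fun y hy => (le_or_gt y 1).imp (fun h => ⟨le_of_lt hy, h⟩) id

lemma integral_Ioi_rho_of_one_le (hβ : 1 < β) {x : ℝ} (hx : 1 ≤ x) :
    ∫ y in Ioi x, rho α β y = x ^ (1 - β) / (β - 1) := by
  rw [setIntegral_congr_fun measurableSet_Ioi fun y hy => rho_of_one_le (hx.trans (le_of_lt hy)),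
    integral_Ioi_rpow_of_lt (by linarith) (by linarith), neg_add_eq_sub, neg_div, ← div_neg,
    neg_sub]

lemma integral_Ioi_rho_le (hα : 1 < α) (hβ : 1 < β) {x : ℝ} (hx : 0 < x) :
    ∫ y in Ioi x, rho α β y ≤ (1 / (α - 1) + 1 / (β - 1)) * rho (α - 1) (β - 1) x := by
  have hα₀ : 0 < α - 1 := by linarith
  have hβ₀ : 0 < β - 1 := by linarith
  rcases le_or_gt 1 x with h | h
  · rw [integral_Ioi_rho_of_one_le hβ h, rho_of_one_le h, neg_sub, ← one_div_mul_eq_div]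
    exact mul_le_mul_of_nonneg_right (le_add_of_nonneg_left (by positivity))
      (Real.rpow_nonneg hx.le _)
  have hhead : ∫ y in x..1, rho α β y ≤ x ^ (1 - α) / (α - 1) := by
    have h0 : (0 : ℝ) ∉ uIcc x 1 := by rw [uIcc_of_le h.le]; exact fun h0 => absurd h0.1 hx.not_ge
    rw [intervalIntegral.integral_congr fun y hy =>
        rho_of_le_one (by rw [uIcc_of_le h.le] at hy; exact hy.2),
      integral_rpow (Or.inr ⟨by contrapose! hα; linarith, h0⟩), Real.one_rpow, neg_add_eq_sub,
      ← neg_div_neg_eq, neg_sub, neg_sub]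
    exact div_le_div_of_nonneg_right (by linarith) hα₀.le
  have hone : 1 ≤ x ^ (1 - α) :=
    Real.one_le_rpow_of_pos_of_le_one_of_nonpos hx h.le (by linarith)
  rw [← intervalIntegral.integral_interval_add_Ioi (integrableOn_Ioi_rho hβ hx)
      (integrableOn_Ioi_rho hβ one_pos),
    integral_Ioi_rho_of_one_le hβ le_rfl, Real.one_rpow, rho_of_le_one h.le, neg_sub]
  calc (∫ y in x..1, rho α β y) + 1 / (β - 1)
      ≤ 1 / (α - 1) * x ^ (1 - α) + 1 / (β - 1) * x ^ (1 - α) := by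
        rw [one_div_mul_eq_div]
        exact add_le_add hhead (le_mul_of_one_le_right (by positivity) hone)
    _ = (1 / (α - 1) + 1 / (β - 1)) * x ^ (1 - α) := by ring

end Rho

lemma setIntegral_le_integral_of_slice_le {S : Set (ℝ × ℝ)} (hS : MeasurableSet S) {a b : ℝ}
    {F : ℝ × ℝ → ℝ} {w : ℝ → ℝ}
    (hSsub : ∀ p ∈ S, p.1 ∈ Ioo a b ∧ p.1 < p.2)
    (hF : ∀ x ∈ Ioo a b, ∀ y, x < y → 0 ≤ F (x, y))
    (hFi : ∀ x ∈ Ioo a b, IntegrableOn (fun y => F (x, y)) (Ioi x))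
    (hslice : ∀ x ∈ Ioo a b, ∫ y in Ioi x, F (x, y) ≤ w x)
    (hw : IntegrableOn w (Ioo a b)) :
    ∫ p in S, F p ≤ ∫ x in Ioo a b, w x := by
  by_cases hFS : IntegrableOn F S
  swap
  · rw [integral_undef hFS]
    exact setIntegral_nonneg measurableSet_Ioo fun x hx =>
      (setIntegral_nonneg measurableSet_Ioi fun y hy => hF x hx y hy).trans (hslice x hx)
  have hFS' : Integrable (S.indicator F) (volume.prod volume) := by
    rw [← Measure.volume_eq_prod]; exact hFS.integrable_indicator hS
  rw [← integral_indicator hS, ← integral_indicator measurableSet_Ioo, Measure.volume_eq_prod,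
    integral_prod _ hFS']
  refine integral_mono_of_nonneg (ae_of_all _ fun x => integral_nonneg fun y => ?_)
    (hw.integrable_indicator measurableSet_Ioo) (ae_of_all _ fun x => ?_)
  · exact indicator_nonneg (fun p hp => hF p.1 (hSsub p hp).1 p.2 (hSsub p hp).2) _
  by_cases hx : x ∈ Ioo a b
  · rw [indicator_of_mem hx]
    refine le_trans (integral_mono_of_nonneg (ae_of_all _ fun y => ?_)
      ((hFi x hx).integrable_indicator measurableSet_Ioi) (ae_of_all _ fun y => ?_)) ?_
    · exact indicator_nonneg (fun p hp => hF p.1 (hSsub p hp).1 p.2 (hSsub p hp).2) _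
    · show S.indicator F (x, y) ≤ _
      by_cases hp : (x, y) ∈ S
      · rw [indicator_of_mem hp, indicator_of_mem (show y ∈ Ioi x from (hSsub _ hp).2)]
      · rw [indicator_of_notMem hp]
        exact indicator_nonneg (fun y hy => hF x hx y hy) y
    · rw [integral_indicator measurableSet_Ioi]; exact hslice x hx
  · have hzero : ∀ y, S.indicator F (x, y) = 0 := fun y =>
      indicator_of_notMem (fun hp => hx (hSsub _ hp).1) _
    simp [hx, hzero]

lemma setIntegral_sqrt_mul_rho_mul_rho_le {S : Set (ℝ × ℝ)} (hS : MeasurableSet S) {ω₁ : ℝ}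
    (hSsub : ∀ p ∈ S, p.1 ∈ Ioo 0 ω₁ ∧ p.1 < p.2) {αf αg βf βg : ℝ}
    (hαf : αf < 5 / 4) (hαg : αg ≤ 5 / 4) (hβg : 1 < βg) (hω₁ : 1 ≤ ω₁) :
    ∫ p in S, Real.sqrt (p.1 / ω₁) * rho αg βg p.2 * rho αf βf p.1 ≤
      (4 + 1 / (βg - 1)) * ω₁ ^ (-(1 / 2) : ℝ) *
        ∫ x in 0..ω₁, rho (αf - 1 / 4) (βf + βg - 3 / 2) x := by
  set K : ℝ := 4 + 1 / (βg - 1)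
  have hω₀ : 0 < ω₁ := by linarith
  have hinner (x : ℝ) (hx : 0 < x) : ∫ y in Ioi x, rho αg βg y ≤ K * rho (1 / 4) (βg - 1) x := by
    refine (setIntegral_mono_on (integrableOn_Ioi_rho hβg hx) (integrableOn_Ioi_rho hβg hx)
      measurableSet_Ioi fun y hy => rho_le_rho_of_le (hx.trans hy) hαg).trans
      ((integral_Ioi_rho_le (by norm_num) hβg hx).trans_eq ?_)
    norm_num [K]
  have hweight (x : ℝ) (hx : 0 < x) :
      Real.sqrt (x / ω₁) * (K * rho (1 / 4) (βg - 1) x) * rho αf βf x =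
        K * ω₁ ^ (-(1 / 2) : ℝ) * rho (αf - 1 / 4) (βf + βg - 3 / 2) x := by
    rw [Real.sqrt_eq_rpow, Real.div_rpow hx.le hω₀.le, Real.rpow_neg hω₀.le]
    calc x ^ (1 / 2 : ℝ) / ω₁ ^ (1 / 2 : ℝ) * (K * rho (1 / 4) (βg - 1) x) * rho αf βf x
        = K * (ω₁ ^ (1 / 2 : ℝ))⁻¹ *
            (x ^ (1 / 2 : ℝ) * (rho (1 / 4) (βg - 1) x * rho αf βf x)) := by ring
      _ = _ := by rw [rho_mul_rho hx, rpow_mul_rho hx]; congr 2 <;> ring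
  have hI := setIntegral_le_integral_of_slice_le hS
    (F := fun p => Real.sqrt (p.1 / ω₁) * rho αg βg p.2 * rho αf βf p.1)
    (w := fun x => K * ω₁ ^ (-(1 / 2) : ℝ) * rho (αf - 1 / 4) (βf + βg - 3 / 2) x) hSsub
    (fun x hx y hy => mul_nonneg (mul_nonneg (Real.sqrt_nonneg _)
      (rho_nonneg (hx.1.trans hy).le)) (rho_nonneg hx.1.le))
    (fun x hx => ((integrableOn_Ioi_rho (α := αg) hβg hx.1).const_mul
      (Real.sqrt (x / ω₁))).mul_const (rho αf βf x))
    (fun x hx => by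
      dsimp only
      rw [integral_mul_const, integral_const_mul, ← hweight x hx.1]
      gcongr
      · exact rho_nonneg hx.1.le
      · exact hinner x hx.1)
    (((intervalIntegrable_iff_integrableOn_Ioc_of_le hω₀.le).1
      (intervalIntegrable_rho (by linarith) hω₁)).mono_set Ioo_subset_Ioc_self |>.const_mul _)
  rwa [integral_const_mul, ← integral_Ioc_eq_integral_Ioo,
    ← intervalIntegral.integral_of_le hω₀.le] at hI

lemma rpow_neg_half_mul_rpow_max_mul_rpow {ω : ℝ} (hω : 0 < ω) (s β : ℝ) :
    ω ^ (-(1 / 2) : ℝ) * ω ^ max (5 / 2 - s) 0 * ω ^ (-β) =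
      ω ^ (-(min (s + β - 2) (β + 1 / 2))) := by
  rw [← Real.rpow_add hω, ← Real.rpow_add hω]
  congr 1
  rcases le_total s (5 / 2) with h | h
  · rw [max_eq_left (by linarith), min_eq_left (by linarith)]; ring
  · rw [max_eq_right (by linarith), min_eq_right (by linarith)]; ring

theorem stmt_14_general (αf αg αh βf βg βh : ℝ)
    (hαf : 0 ≤ αf ∧ αf < 5/4 ∧ αf ≠ 1)
    (hαg : 0 ≤ αg ∧ αg < 5/4 ∧ αg ≠ 1)
    (hβg : 1 < βg)
    (hβfg : βf + βg ≠ 5/2) :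
    ∃ C > (0:ℝ), ∀ ω₁ : ℝ, 1 ≤ ω₁ →
      (∫ p in {p : ℝ × ℝ | 0 < p.1 ∧ p.1 < ω₁ ∧ p.1 < p.2 ∧ p.2 < (ω₁ + p.1) / 2},
          Real.sqrt (p.1 / ω₁) * rho αg βg p.2 * rho αf βf p.1) * rho αh βh ω₁
        ≤ C * ω₁ ^ (-(min (βf + βg + βh - 2) (βh + 1/2))) := by
  obtain ⟨-, hαf, -⟩ := hαf
  obtain ⟨-, hαg, -⟩ := hαg
  have hαf' : αf - 1 / 4 < 1 := by linarith
  have hβ' : βf + βg - 3 / 2 ≠ 1 := fun h => hβfg (by linarith)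
  set K : ℝ := 4 + 1 / (βg - 1)
  set M : ℝ := 1 / (1 - (αf - 1 / 4)) + 1 / |1 - (βf + βg - 3 / 2)|
  have hK : 0 < K := by have := sub_pos.2 hβg; positivity
  have hM : 0 < M := by
    have := sub_pos.2 hαf'; have := abs_pos.2 (sub_ne_zero.2 hβ'.symm); positivity
  refine ⟨K * M, mul_pos hK hM, fun ω₁ hω₁ => ?_⟩
  have hS : MeasurableSet
      {p : ℝ × ℝ | 0 < p.1 ∧ p.1 < ω₁ ∧ p.1 < p.2 ∧ p.2 < (ω₁ + p.1) / 2} := by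
    measurability
  have hI := setIntegral_sqrt_mul_rho_mul_rho_le (βf := βf) hS
    (fun p hp => ⟨⟨hp.1, hp.2.1⟩, hp.2.2.1⟩) hαf hαg.le hβg hω₁
  have hρ := integral_rho_le hαf' hβ' hω₁
  rw [rho_of_one_le hω₁]
  calc _ ≤ K * ω₁ ^ (-(1 / 2) : ℝ) * (M * ω₁ ^ max (1 - (βf + βg - 3 / 2)) 0) * ω₁ ^ (-βh) := by
        gcongr
        exact hI.trans (by gcongr)
    _ = K * M * ω₁ ^ (-(min (βf + βg + βh - 2) (βh + 1 / 2))) := by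
        rw [← rpow_neg_half_mul_rpow_max_mul_rpow (by linarith) (βf + βg) βh]
        ring_nf

/-- The ω₂-minimal subcase of the trilinear collision estimate: for ω₁ ≥ 1,
∫₀^{ω₁} ∫_{ω₂}^{(ω₁+ω₂)/2} √(ω₂/ω₁) ρ_g(ω₃) ρ_f(ω₂) dω₃ dω₂ · ρ_h(ω₁)
≲ ω₁^{-min(β_f+β_g+β_h−2, β_h+1/2)}; here p = (ω₂,ω₃). -/
theorem stmt_14 (αf αg αh βf βg βh : ℝ)
    (hαf : 0 ≤ αf ∧ αf < 5/4 ∧ αf ≠ 1)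
    (hαg : 0 ≤ αg ∧ αg < 5/4 ∧ αg ≠ 1)
    (hαh : 0 ≤ αh ∧ αh < 5/4 ∧ αh ≠ 1)
    (hβf : 1 < βf) (hβg : 1 < βg) (hβh : 1 < βh)
    (hβfg : βf + βg ≠ 5/2) :
    ∃ C > (0:ℝ), ∀ ω₁ : ℝ, 1 ≤ ω₁ →
      (∫ p in {p : ℝ × ℝ | 0 < p.1 ∧ p.1 < ω₁ ∧ p.1 < p.2 ∧ p.2 < (ω₁ + p.1) / 2},
          Real.sqrt (p.1 / ω₁) * rho αg βg p.2 * rho αf βf p.1) * rho αh βh ω₁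
        ≤ C * ω₁ ^ (-(min (βf + βg + βh - 2) (βh + 1/2))) :=
  stmt_14_general αf αg αh βf βg βh hαf hαg hβg hβfg
end
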